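/- arXiv:1504.02618 — 13 statements merged into one kernel-verified Lean document; each statement's English description precedes it below -/
import Mathlib

section
/- The reciprocal Jacobi sequence ((t_k/s_k))_{k≥0} is purely periodic with period length L: for every k ≥ 0, s_{k+L} ≡ s_k (mod 2), and whenever s_k is odd the Jacobi symbols satisfy (t_{k+L}/s_{k+L}) = (t_k/s_k). -/
namespace RJP
lemma jacZ_mod {x y n : ℤ} (hn : 0 ≤ n) (h : x ≡ y [ZMOD n]) :
    jacobiSym x n.toNat = jacobiSym y n.toNat := by
  apply jacobiSym.mod_left'; rwa [Int.toNat_of_nonneg hn]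
lemma isCoprime_of_rel {a b x y e : ℤ} (he : e = 1 ∨ e = -1) (h : a * x + b * y = e) :
    IsCoprime x y := by
  refine ⟨e * a, e * b, ?_⟩
  rcases he with rfl | rfl <;> linarith
lemma jacZ_inv {x u n e : ℤ} (hn : 0 ≤ n) (hco : IsCoprime u n)
    (h : u * x ≡ e [ZMOD n]) :
    jacobiSym x n.toNat = jacobiSym e n.toNat * jacobiSym u n.toNat := by
  have hgcd : Int.gcd u n.toNat = 1 := by
    rw [Int.toNat_of_nonneg hn]
    exact Int.isCoprime_iff_gcd_eq_one.mp hco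
  have hsq : jacobiSym u n.toNat * jacobiSym u n.toNat = 1 := by
    have := jacobiSym.sq_one (a := u) (b := n.toNat) (by exact_mod_cast hgcd)
    nlinarith [this]
  calc jacobiSym x n.toNat
      = (jacobiSym u n.toNat * jacobiSym u n.toNat) * jacobiSym x n.toNat := by
        rw [hsq, one_mul]
    _ = jacobiSym u n.toNat * jacobiSym (u * x) n.toNat := by
        rw [jacobiSym.mul_left]; ring
    _ = jacobiSym u n.toNat * jacobiSym e n.toNat := by rw [jacZ_mod hn h]
    _ = jacobiSym e n.toNat * jacobiSym u n.toNat := by ring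
lemma jacZ_recip {x y : ℤ} (hx : Odd x) (hy : Odd y) (h0x : 0 < x) (h0y : 0 < y) :
    jacobiSym y x.toNat =
      (if x % 4 = 3 ∧ y % 4 = 3 then -1 else 1) * jacobiSym x y.toNat := by
  have hx2 : x.toNat % 2 = 1 := by
    have := Int.odd_iff.mp hx; omega
  have hy2 : y.toNat % 2 = 1 := by
    have := Int.odd_iff.mp hy; omega
  have key := jacobiSym.quadratic_reciprocity_if hx2 hy2
  have hxc : ((x.toNat : ℤ)) = x := Int.toNat_of_nonneg h0x.le
  have hyc : ((y.toNat : ℤ)) = y := Int.toNat_of_nonneg h0y.le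
  have h4x : (x.toNat % 4 = 3) ↔ (x % 4 = 3) := by omega
  have h4y : (y.toNat % 4 = 3) ↔ (y % 4 = 3) := by omega
  have goal' : jacobiSym ((y.toNat : ℤ)) x.toNat =
      (if x % 4 = 3 ∧ y % 4 = 3 then -1 else 1) * jacobiSym ((x.toNat : ℤ)) y.toNat := by
    by_cases h : x % 4 = 3 ∧ y % 4 = 3
    · rw [if_pos h]
      rw [if_pos ⟨h4x.mpr h.1, h4y.mpr h.2⟩] at key
      linarith
    · rw [if_neg h]
      have h' : ¬ (x.toNat % 4 = 3 ∧ y.toNat % 4 = 3) := by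
        intro hc; exact h ⟨h4x.mp hc.1, h4y.mp hc.2⟩
      rw [if_neg h'] at key
      linarith
  rwa [hxc, hyc] at goal'
lemma jacZ_neg_one_congr {m n : ℤ} (h0m : 0 < m) (h0n : 0 < n) (hodd : Odd n)
    (h : m ≡ n [ZMOD 4]) :
    jacobiSym (-1) m.toNat = jacobiSym (-1) n.toNat := by
  have hm4 : m % 4 = n % 4 := h
  have hn2 := Int.odd_iff.mp hodd
  have h1 : m.toNat % 4 = n.toNat % 4 := by omega
  rw [jacobiSym.at_neg_one (by rw [Nat.odd_iff]; omega),
      jacobiSym.at_neg_one (by rw [Nat.odd_iff]; omega),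
      ZMod.χ₄_nat_mod_four, ZMod.χ₄_nat_mod_four n.toNat, h1]
lemma jacZ_sign_congr {e m n : ℤ} (he : e = 1 ∨ e = -1) (h0m : 0 < m) (h0n : 0 < n)
    (hodd : Odd n) (h : m ≡ n [ZMOD 4]) :
    jacobiSym e m.toNat = jacobiSym e n.toNat := by
  rcases he with rfl | rfl
  · rw [jacobiSym.one_left, jacobiSym.one_left]
  · exact jacZ_neg_one_congr h0m h0n hodd h

/-- Formula expressing `J(t|s)` in terms of `J(V|W)` given `V*t - s*W = e` (`e = ±1`)
with `s, V, W` odd positive. -/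
lemma chain_formula {s t V W e : ℤ}
    (hs : 0 < s) (hV : 0 < V) (hW : 0 < W)
    (he : e = 1 ∨ e = -1)
    (hrel : V * t - s * W = e)
    (hsodd : Odd s) (hVodd : Odd V) (hWodd : Odd W) :
    jacobiSym t s.toNat =
      jacobiSym e s.toNat *
      ((if s % 4 = 3 ∧ V % 4 = 3 then -1 else 1) *
        (jacobiSym (-e) V.toNat *
          ((if V % 4 = 3 ∧ W % 4 = 3 then -1 else 1) * jacobiSym V W.toNat))) := by
  have c1 : IsCoprime V s := isCoprime_of_rel he (by linarith : t * V + (-W) * s = e)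
  have c2 : IsCoprime W V := isCoprime_of_rel he (by linarith : (-s) * W + t * V = e)
  have m1 : V * t ≡ e [ZMOD s] := by
    have : s ∣ e - V * t := ⟨-W, by linarith⟩
    exact Int.modEq_iff_dvd.mpr this
  have m2 : W * s ≡ -e [ZMOD V] := by
    have : V ∣ -e - W * s := ⟨-t, by linarith⟩
    exact Int.modEq_iff_dvd.mpr this
  rw [jacZ_inv hs.le c1 m1, jacZ_recip hsodd hVodd hs hV,
      jacZ_inv hV.le c2 m2, jacZ_recip hVodd hWodd hV hW]

/-- Transport `J(t|s)` invariance along the chain, given `J(V|W)` invariance. -/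
lemma common_chain {s t V W s' t' V' W' e : ℤ}
    (hs : 0 < s) (hV : 0 < V) (hW : 0 < W)
    (hs' : 0 < s') (hV' : 0 < V') (hW' : 0 < W')
    (he : e = 1 ∨ e = -1)
    (hrel : V * t - s * W = e) (hrel' : V' * t' - s' * W' = e)
    (hs4 : s' ≡ s [ZMOD 4]) (hV4 : V' ≡ V [ZMOD 4]) (hW4 : W' ≡ W [ZMOD 4])
    (hsodd : Odd s) (hVodd : Odd V) (hWodd : Odd W)
    (hJVW : jacobiSym V' W'.toNat = jacobiSym V W.toNat) :
    jacobiSym t' s'.toNat = jacobiSym t s.toNat := by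
  have hsodd' : Odd s' := by rw [Int.odd_iff] at *; have : s' % 4 = s % 4 := hs4; omega
  have hVodd' : Odd V' := by rw [Int.odd_iff] at *; have : V' % 4 = V % 4 := hV4; omega
  have hWodd' : Odd W' := by rw [Int.odd_iff] at *; have : W' % 4 = W % 4 := hW4; omega
  have he' : -e = 1 ∨ -e = -1 := by rcases he with rfl | rfl <;> omega
  rw [chain_formula hs hV hW he hrel hsodd hVodd hWodd,
      chain_formula hs' hV' hW' he hrel' hsodd' hVodd' hWodd']
  have e1 : s' % 4 = s % 4 := hs4
  have e2 : V' % 4 = V % 4 := hV4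
  have e3 : W' % 4 = W % 4 := hW4
  rw [jacZ_sign_congr he hs' hs hsodd hs4, jacZ_sign_congr he' hV' hV hVodd hV4,
      e1, e2, e3, hJVW]

/-- Formula for `J(s+p | t+q)` in terms of `J(p|q)`, when `t` even, `q` odd. -/
lemma inner_formula {s t p q e : ℤ}
    (hq : 0 < q) (hW : 0 < t + q)
    (he : e = 1 ∨ e = -1)
    (hdet : p * t - s * q = e)
    (hte : Even t) (hqodd : Odd q) :
    jacobiSym (s + p) (t + q).toNat =
      jacobiSym e (t + q).toNat *
      (jacobiSym (-1) (t + q).toNat *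
        ((if (t + q) % 4 = 3 ∧ q % 4 = 3 then -1 else 1) *
          (jacobiSym e q.toNat * jacobiSym p q.toNat))) := by
  have hWodd : Odd (t + q) := hte.add_odd hqodd
  have c1 : IsCoprime t (t + q) :=
    isCoprime_of_rel he (by linarith : (s + p) * t + (-s) * (t + q) = e)
  have c2 : IsCoprime p q := isCoprime_of_rel he (by linarith : t * p + (-s) * q = e)
  have m1 : t * (s + p) ≡ e [ZMOD (t + q)] := by
    refine Int.modEq_iff_dvd.mpr ⟨-s, by linarith⟩
  have m2 : t ≡ -1 * q [ZMOD (t + q)] := by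
    refine Int.modEq_iff_dvd.mpr ⟨-1, by linarith⟩
  have m3 : (t + q) ≡ t [ZMOD q] := by
    refine Int.modEq_iff_dvd.mpr ⟨-1, by linarith⟩
  have m4 : p * t ≡ e [ZMOD q] := by
    refine Int.modEq_iff_dvd.mpr ⟨-s, by linarith⟩
  rw [jacZ_inv hW.le c1 m1, jacZ_mod hW.le m2, jacobiSym.mul_left,
      jacZ_recip hWodd hqodd hW hq, jacZ_mod hq.le m3, jacZ_inv hq.le c2 m4]

/-- The invariance of `J(s+p | t+q)` given invariance of `J(p|q)`. -/
lemma inner_chain {s t p q s' t' p' q' e : ℤ}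
    (hq : 0 < q) (hW : 0 < t + q) (hq' : 0 < q') (hW' : 0 < t' + q')
    (he : e = 1 ∨ e = -1)
    (hdet : p * t - s * q = e) (hdet' : p' * t' - s' * q' = e)
    (hq4 : q' ≡ q [ZMOD 4]) (hW4 : t' + q' ≡ t + q [ZMOD 4])
    (hte : Even t) (hqodd : Odd q) (hte' : Even t') (hqodd' : Odd q')
    (hJpq : jacobiSym p' q'.toNat = jacobiSym p q.toNat) :
    jacobiSym (s' + p') (t' + q').toNat = jacobiSym (s + p) (t + q).toNat := by
  have hWodd : Odd (t + q) := hte.add_odd hqodd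
  have hm1 : -1 = (1:ℤ) ∨ -1 = (-1:ℤ) := Or.inr rfl
  rw [inner_formula hq hW he hdet hte hqodd, inner_formula hq' hW' he hdet' hte' hqodd']
  have e1 : (t' + q') % 4 = (t + q) % 4 := hW4
  have e2 : q' % 4 = q % 4 := hq4
  rw [jacZ_sign_congr he hW' hW hWodd hW4, jacZ_sign_congr hm1 hW' hW hWodd hW4,
      jacZ_sign_congr he hq' hq hqodd hq4, e1, e2, hJpq]

/-- The key step: transport of `J(t|s)` along the period, for `s` odd. -/
lemma key_step {s t p q s' t' p' q' e : ℤ}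
    (hs : 0 < s) (ht : 0 < t) (hp : 0 < p) (hq : 0 < q)
    (hs' : 0 < s') (ht' : 0 < t') (hp' : 0 < p') (hq' : 0 < q')
    (he : e = 1 ∨ e = -1)
    (hdet : p * t - s * q = e) (hdet' : p' * t' - s' * q' = e)
    (hs4 : s' ≡ s [ZMOD 4]) (ht4 : t' ≡ t [ZMOD 4])
    (hp4 : p' ≡ p [ZMOD 4]) (hq4 : q' ≡ q [ZMOD 4])
    (hsodd : Odd s)
    (hJt : Odd t → jacobiSym s' t'.toNat = jacobiSym s t.toNat)
    (hJq : Odd q → jacobiSym p' q'.toNat = jacobiSym p q.toNat) :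
    jacobiSym t' s'.toNat = jacobiSym t s.toNat := by
  have hsodd' : Odd s' := by
    rw [Int.odd_iff] at *; have h4 : s' % 4 = s % 4 := hs4; omega
  by_cases hto : Odd t
  · -- both `s` and `t` odd: direct reciprocity
    have htodd' : Odd t' := by
      rw [Int.odd_iff] at *; have h4 : t' % 4 = t % 4 := ht4; omega
    have e1 : s' % 4 = s % 4 := hs4
    have e2 : t' % 4 = t % 4 := ht4
    rw [jacZ_recip hsodd hto hs ht, jacZ_recip hsodd' htodd' hs' ht', e1, e2, hJt hto]
  · -- `t` even
    have hte : Even t := Int.not_odd_iff_even.mp hto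
    have hte' : Even t' := by
      rw [Int.even_iff] at *; have h4 : t' % 4 = t % 4 := ht4; omega
    have hqodd : Odd q := by
      by_contra hq'
      have h3 : Even (p * t - s * q) := (hte.mul_left p).sub
        ((Int.not_odd_iff_even.mp hq').mul_left s)
      rw [hdet] at h3
      rcases he with rfl | rfl <;> (obtain ⟨r, hr⟩ := h3; omega)
    have hqodd' : Odd q' := by
      rw [Int.odd_iff] at *; have h4 : q' % 4 = q % 4 := hq4; omega
    by_cases hpo : Odd p
    · -- `p` odd: take `V = p`, `W = q`
      have hpodd' : Odd p' := by
        rw [Int.odd_iff] at *; have h4 : p' % 4 = p % 4 := hp4; omega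
      exact common_chain hs hp hq hs' hp' hq' he hdet hdet' hs4 hp4 hq4
        hsodd hpo hqodd (hJq hqodd)
    · -- `p` even: take `V = s + p`, `W = t + q`
      have hpe : Even p := Int.not_odd_iff_even.mp hpo
      have hpe' : Even p' := by
        rw [Int.even_iff] at *; have h4 : p' % 4 = p % 4 := hp4; omega
      have hVodd : Odd (s + p) := hsodd.add_even hpe
      have hWodd : Odd (t + q) := hte.add_odd hqodd
      have hV4 : s' + p' ≡ s + p [ZMOD 4] := Int.ModEq.add hs4 hp4
      have hW4 : t' + q' ≡ t + q [ZMOD 4] := Int.ModEq.add ht4 hq4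
      have hrel : (s + p) * t - s * (t + q) = e := by linarith
      have hrel' : (s' + p') * t' - s' * (t' + q') = e := by linarith
      exact common_chain hs (by linarith) (by linarith) hs' (by linarith) (by linarith)
        he hrel hrel' hs4 hV4 hW4 hsodd hVodd hWodd
        (inner_chain hq (by linarith) hq' (by linarith) he hdet hdet' hq4 hW4
          hte hqodd hte' hqodd' (hJq hqodd))

end RJP

/-- The reciprocal Jacobi sequence `((t k / s k))` is purely periodic with period length
`L`: `s (k+L) ≡ s k (mod 2)`, and whenever `s k` is odd the Jacobi symbols
`(t (k+L) / s (k+L))` and `(t k / s k)` coincide. -/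
theorem reciprocal_jacobi_periodic
    (a s t : ℤ → ℤ) (l : ℕ) (hl : 1 ≤ l)
    (ha_pos : ∀ k : ℤ, 0 ≤ k → 0 < a k)
    (ha_per : ∀ k : ℤ, 0 ≤ k → a (k + l) = a k)
    (hs_neg : s (-1) = 1) (ht_neg : t (-1) = 0)
    (hs_zero : s 0 = a 0) (ht_zero : t 0 = 1)
    (hs_rec : ∀ k : ℤ, 1 ≤ k → s k = a k * s (k - 1) + s (k - 2))
    (ht_rec : ∀ k : ℤ, 1 ≤ k → t k = a k * t (k - 1) + t (k - 2))
    (L : ℕ) (hL_pos : 0 < L) (hL_even : Even L) (hL_mul : l ∣ L)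
    (hD : s ((L : ℤ) - 1) ≡ 1 [ZMOD 4] ∧ s ((L : ℤ) - 2) ≡ 0 [ZMOD 4] ∧
          t ((L : ℤ) - 1) ≡ 0 [ZMOD 4] ∧ t ((L : ℤ) - 2) ≡ 1 [ZMOD 4])
    (hJpar : ∀ k : ℤ, 0 ≤ k → t (k + L) ≡ t k [ZMOD 2])
    (hJper : ∀ k : ℤ, 0 ≤ k → Odd (t k) →
      jacobiSym (s (k + L)) (t (k + L)).toNat = jacobiSym (s k) (t k).toNat)
 :
    ∀ k : ℤ, 0 ≤ k →
      (s (k + L) ≡ s k [ZMOD 2]) ∧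
      (Odd (s k) →
        jacobiSym (t (k + L)) (s (k + L)).toNat = jacobiSym (t k) (s k).toNat) := by
  -- periodicity of `a` with period `L`
  have haL : ∀ n : ℕ, a ((n : ℤ) + L) = a n := by
    have aux : ∀ (m n : ℕ), a ((n : ℤ) + m * l) = a n := by
      intro m
      induction m with
      | zero => intro n; simp
      | succ m ih =>
          intro n
          have h1 : ((n : ℤ) + (↑m + 1) * ↑l) = ((n : ℤ) + ↑m * ↑l) + ↑l := by ring
          have h2 := ha_per ((n : ℤ) + ↑m * ↑l) (by positivity)
          calc a ((n : ℤ) + (↑(m+1) : ℤ) * ↑l) = a (((n : ℤ) + ↑m * ↑l) + ↑l) := by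
                push_cast
                rw [h1]
            _ = a ((n : ℤ) + ↑m * ↑l) := h2
            _ = a n := ih n
    intro n
    obtain ⟨m, hm⟩ := hL_mul
    have := aux m n
    rw [hm]
    push_cast
    rw [mul_comm (l : ℤ) (m : ℤ)]
    exact_mod_cast this
  -- positivity
  have hpos : ∀ n : ℕ, 1 ≤ s n ∧ 1 ≤ t n := by
    have main : ∀ n : ℕ, (1 ≤ s n ∧ 1 ≤ t n) ∧ (1 ≤ s ((n : ℤ) + 1) ∧ 1 ≤ t ((n : ℤ) + 1)) := by
      intro n
      induction n with
      | zero =>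
          have ha0 : 0 < a 0 := ha_pos 0 le_rfl
          have ha1 : 0 < a 1 := ha_pos 1 (by norm_num)
          have hs1 : s 1 = a 1 * s 0 + s (-1) := by
            have := hs_rec 1 le_rfl
            norm_num at this
            exact this
          have ht1 : t 1 = a 1 * t 0 + t (-1) := by
            have := ht_rec 1 le_rfl
            norm_num at this
            exact this
          constructor
          · constructor
            · simp only [Nat.cast_zero]; rw [hs_zero]; omega
            · simp only [Nat.cast_zero]; rw [ht_zero]
          · constructor
            · simp only [Nat.cast_zero, zero_add]
              rw [hs1, hs_zero, hs_neg]
              nlinarith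
            · simp only [Nat.cast_zero, zero_add]
              rw [ht1, ht_zero, ht_neg]
              omega
      | succ n ih =>
          refine ⟨by push_cast; exact ih.2, ?_⟩
          push_cast
          have hrec := hs_rec ((n : ℤ) + 2) (by omega)
          have hrect := ht_rec ((n : ℤ) + 2) (by omega)
          norm_num at hrec hrect
          rw [show ((n : ℤ) + 2 - 1) = (n : ℤ) + 1 from by ring] at hrec hrect
          have ha2 : 0 < a ((n : ℤ) + 2) := ha_pos _ (by positivity)
          have h1 := ih.1
          have h2 := ih.2
          constructor
          · rw [show ((n : ℤ) + 1 + 1) = (n : ℤ) + 2 by ring, hrec]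
            nlinarith
          · rw [show ((n : ℤ) + 1 + 1) = (n : ℤ) + 2 by ring, hrect]
            nlinarith
    exact fun n => (main n).1
  -- determinant identity
  have hdet : ∀ n : ℕ, s ((n : ℤ) + 1) * t n - s n * t ((n : ℤ) + 1) = (-1) ^ n := by
    intro n
    induction n with
    | zero =>
        have hs1 : s 1 = a 1 * s 0 + s (-1) := by
          have := hs_rec 1 le_rfl; norm_num at this; exact this
        have ht1 : t 1 = a 1 * t 0 + t (-1) := by
          have := ht_rec 1 le_rfl; norm_num at this; exact this
        simp only [Nat.cast_zero, zero_add, pow_zero]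
        rw [hs1, ht1, hs_zero, ht_zero, hs_neg, ht_neg]
        ring
    | succ n ih =>
        push_cast
        have hrec := hs_rec ((n : ℤ) + 2) (by omega)
        have hrect := ht_rec ((n : ℤ) + 2) (by omega)
        norm_num at hrec hrect
        rw [show ((n : ℤ) + 2 - 1) = (n : ℤ) + 1 from by ring] at hrec hrect
        rw [show ((n : ℤ) + 1 + 1) = (n : ℤ) + 2 from by ring, hrec, hrect, pow_succ]
        linear_combination (-1 : ℤ) * ih
  -- the shift identity: `(s,t)` at `n + L` is `D_L` applied to `(s,t)` at `n`
  have hshift : ∀ n : ℕ,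
      s ((n : ℤ) + L) = s ((L : ℤ) - 1) * s n + s ((L : ℤ) - 2) * t n ∧
      t ((n : ℤ) + L) = t ((L : ℤ) - 1) * s n + t ((L : ℤ) - 2) * t n := by
    have hL1 : (1 : ℤ) ≤ (L : ℤ) := by exact_mod_cast hL_pos
    have haL0 : a ((L : ℤ)) = a 0 := by have := haL 0; simpa using this
    have haL1 : a (1 + (L : ℤ)) = a 1 := by have := haL 1; push_cast at this; exact this
    have hsL : s ((L : ℤ)) = a 0 * s ((L : ℤ) - 1) + s ((L : ℤ) - 2) := by
      have h := hs_rec (L : ℤ) hL1; rw [haL0] at h; exact h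
    have htL : t ((L : ℤ)) = a 0 * t ((L : ℤ) - 1) + t ((L : ℤ) - 2) := by
      have h := ht_rec (L : ℤ) hL1; rw [haL0] at h; exact h
    have hsL1 : s (1 + (L : ℤ)) = a 1 * s ((L : ℤ)) + s ((L : ℤ) - 1) := by
      have h := hs_rec (1 + (L : ℤ)) (by omega)
      rw [haL1, show (1 + (L : ℤ) - 1) = (L : ℤ) from by ring,
          show (1 + (L : ℤ) - 2) = (L : ℤ) - 1 from by ring] at h
      exact h
    have htL1 : t (1 + (L : ℤ)) = a 1 * t ((L : ℤ)) + t ((L : ℤ) - 1) := by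
      have h := ht_rec (1 + (L : ℤ)) (by omega)
      rw [haL1, show (1 + (L : ℤ) - 1) = (L : ℤ) from by ring,
          show (1 + (L : ℤ) - 2) = (L : ℤ) - 1 from by ring] at h
      exact h
    have hs1 : s 1 = a 1 * s 0 + s (-1) := by
      have := hs_rec 1 le_rfl; norm_num at this; exact this
    have ht1 : t 1 = a 1 * t 0 + t (-1) := by
      have := ht_rec 1 le_rfl; norm_num at this; exact this
    have main : ∀ n : ℕ,
        (s ((n : ℤ) + L) = s ((L : ℤ) - 1) * s n + s ((L : ℤ) - 2) * t n ∧
         t ((n : ℤ) + L) = t ((L : ℤ) - 1) * s n + t ((L : ℤ) - 2) * t n) ∧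
        (s ((n : ℤ) + 1 + L) = s ((L : ℤ) - 1) * s ((n : ℤ) + 1) + s ((L : ℤ) - 2) * t ((n : ℤ) + 1) ∧
         t ((n : ℤ) + 1 + L) = t ((L : ℤ) - 1) * s ((n : ℤ) + 1) + t ((L : ℤ) - 2) * t ((n : ℤ) + 1)) := by
      intro n
      induction n with
      | zero =>
          refine ⟨⟨?_, ?_⟩, ⟨?_, ?_⟩⟩
          · simp only [Nat.cast_zero, zero_add]
            rw [hsL, hs_zero, ht_zero]; ring
          · simp only [Nat.cast_zero, zero_add]
            rw [htL, hs_zero, ht_zero]; ring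
          · simp only [Nat.cast_zero, zero_add]
            rw [hsL1, hsL, hs1, ht1, hs_zero, ht_zero, hs_neg, ht_neg]; ring
          · simp only [Nat.cast_zero, zero_add]
            rw [htL1, htL, hs1, ht1, hs_zero, ht_zero, hs_neg, ht_neg]; ring
      | succ n ih =>
          have hrec2 := hs_rec ((n : ℤ) + 2) (by omega)
          have hrect2 := ht_rec ((n : ℤ) + 2) (by omega)
          norm_num at hrec2 hrect2
          rw [show ((n : ℤ) + 2 - 1) = (n : ℤ) + 1 from by ring] at hrec2 hrect2
          have ha2 : a ((n : ℤ) + 2 + L) = a ((n : ℤ) + 2) := by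
            have := haL (n + 2); push_cast at this; exact this
          refine ⟨by push_cast; exact ih.2, ?_, ?_⟩
          · push_cast
            have hrec1 := hs_rec ((n : ℤ) + 2 + L) (by omega)
            rw [show ((n : ℤ) + 2 + (L : ℤ) - 1) = (n : ℤ) + 1 + L from by ring,
                show ((n : ℤ) + 2 + (L : ℤ) - 2) = (n : ℤ) + L from by ring] at hrec1
            rw [show ((n : ℤ) + 1 + 1 + (L : ℤ)) = (n : ℤ) + 2 + (L : ℤ) from by ring,
                show ((n : ℤ) + 1 + 1) = (n : ℤ) + 2 from by ring,
                hrec1, ha2, ih.2.1, ih.1.1, hrec2, hrect2]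
            ring
          · push_cast
            have hrect1 := ht_rec ((n : ℤ) + 2 + L) (by omega)
            rw [show ((n : ℤ) + 2 + (L : ℤ) - 1) = (n : ℤ) + 1 + L from by ring,
                show ((n : ℤ) + 2 + (L : ℤ) - 2) = (n : ℤ) + L from by ring] at hrect1
            rw [show ((n : ℤ) + 1 + 1 + (L : ℤ)) = (n : ℤ) + 2 + (L : ℤ) from by ring,
                show ((n : ℤ) + 1 + 1) = (n : ℤ) + 2 from by ring,
                hrect1, ha2, ih.2.2, ih.1.2, hrec2, hrect2]
            ring
    exact fun n => (main n).1
  -- mod 4 congruences along the period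
  have hmod4 : ∀ n : ℕ, s ((n : ℤ) + L) ≡ s n [ZMOD 4] ∧ t ((n : ℤ) + L) ≡ t n [ZMOD 4] := by
    intro n
    constructor
    · rw [(hshift n).1]
      have h1 := (hD.1).mul_right (s (n : ℤ))
      have h2 := (hD.2.1).mul_right (t (n : ℤ))
      have h3 := h1.add h2
      simpa using h3
    · rw [(hshift n).2]
      have h1 := (hD.2.2.1).mul_right (s (n : ℤ))
      have h2 := (hD.2.2.2).mul_right (t (n : ℤ))
      have h3 := h1.add h2
      simpa using h3
  -- final assembly
  intro k hk
  lift k to ℕ using hk with n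
  refine ⟨((hmod4 n).1).of_dvd (by norm_num), ?_⟩
  intro hsodd
  have hposn := hpos n
  have hposn1 := hpos (n + 1)
  have hposnL := hpos (n + L)
  have hposn1L := hpos (n + 1 + L)
  push_cast at hposn1 hposnL hposn1L
  have hdet0 := hdet n
  have hdetL := hdet (n + L)
  push_cast at hdetL
  rw [show ((n : ℤ) + (L : ℤ) + 1) = (n : ℤ) + 1 + (L : ℤ) from by ring] at hdetL
  rw [show ((-1 : ℤ)) ^ (n + L) = (-1 : ℤ) ^ n from by
        rw [pow_add, hL_even.neg_one_pow, mul_one]] at hdetL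
  have hm0 := hmod4 n
  have hm1 := hmod4 (n + 1)
  push_cast at hm1
  have he : ((-1 : ℤ)) ^ n = 1 ∨ ((-1 : ℤ)) ^ n = -1 := by
    rcases Nat.even_or_odd n with h | h
    · left; exact h.neg_one_pow
    · right; exact h.neg_one_pow
  exact RJP.key_step (by linarith [hposn.1]) (by linarith [hposn.2])
    (by linarith [hposn1.1]) (by linarith [hposn1.2])
    (by linarith [hposnL.1]) (by linarith [hposnL.2])
    (by linarith [hposn1L.1]) (by linarith [hposn1L.2])
    he hdet0 hdetL hm0.1 hm0.2 hm1.1 hm1.2 hsodd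
    (fun h => hJper (n : ℤ) (Int.natCast_nonneg n) h)
    (fun h => hJper ((n : ℤ) + 1) (by positivity) h)
end

section
/- Let k ≥ 0 be an index with s_k ≡ 3 (mod 4) and t_k = 2^{m+f} t' where t' is odd and f is an integer with 1−m ≤ f ≤ e−2. Then t_{k+L} = 2^{m+f} t'' for an odd integer t'' with t'' ≡ t' (mod 4), and the Kronecker symbols satisfy (s_{k+L}/t_{k+L}) = (s_k/t_k). -/
/-!
Let `A/B` be the convergent preceding `S/T`, `T = 2^g n` with `n` odd, so that `A T - S B = ±1`.
Multiplicativity of the Jacobi symbol and quadratic reciprocity give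
`(S / 2^g n) = χ₈(S B)^g · χ₄(n)^(j+1) · χ₄(B)^j · ε(n, B) · (A / B)`, where
`A T - S B = (-1)^j` and `ε` is the reciprocity sign, so the Kronecker symbol depends only on
`S B` mod 8, on `n` and `B` mod 4, and on the Jacobi symbol `(A / B)`. Shifting by the period
`L` multiplies `(s, t)` by `D_L ≡ I (mod 4)`, whose lower-left entry is divisible by `2^(g+2)`;
this preserves `n` and `B` mod 4 and `S B` mod 8, while `(A / B)` is preserved because `L` is a
period of the Jacobi sequence.
-/

/-- The Kronecker symbol `(s/t)` for a natural denominator `t`: writing `t = 2^j * t'`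
with `t'` odd, `(s/t) = (s/2)^j * (s/t')`, where `(s/t')` is the Jacobi symbol and
`(s/2) = 1` if `s ≡ ±1 (mod 8)`, `(s/2) = -1` if `s ≡ ±3 (mod 8)` (and `0` for even `s`). -/
def kron (s : ℤ) (t : ℕ) : ℤ :=
  (if s % 8 = 1 ∨ s % 8 = 7 then 1
   else if s % 8 = 3 ∨ s % 8 = 5 then -1 else 0) ^ padicValNat 2 t
    * jacobiSym s (t / 2 ^ padicValNat 2 t)

open ZMod

theorem kron_two_pow_mul (S : ℤ) (g : ℕ) {n : ℕ} (hn : Odd n) :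
    kron S (2 ^ g * n) = χ₈ S ^ g * jacobiSym S n := by
  have hval : padicValNat 2 (2 ^ g * n) = g := by
    rw [padicValNat.mul (by positivity) hn.pos.ne', padicValNat.prime_pow,
      padicValNat.eq_zero_of_not_dvd hn.not_two_dvd_nat, add_zero]
  have hχ : (if S % 8 = 1 ∨ S % 8 = 7 then 1 else if S % 8 = 3 ∨ S % 8 = 5 then -1 else 0)
      = χ₈ S := by
    rw [χ₈_int_eq_if_mod_eight]
    split_ifs <;> omega
  rw [kron, hval, hχ, Nat.mul_div_cancel_left _ (by positivity)]

theorem isCoprime_of_mul_sub_mul_eq_neg_one_pow {A T S B : ℤ} {j : ℕ}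
    (h : A * T - S * B = (-1) ^ j) : IsCoprime A B ∧ IsCoprime B T := by
  have hε : ((-1 : ℤ) ^ j) * (-1) ^ j = 1 := by rw [← mul_pow]; norm_num
  exact ⟨⟨(-1) ^ j * T, -(-1) ^ j * S, by linear_combination (-1 : ℤ) ^ j * h + hε⟩,
    ⟨-(-1) ^ j * S, (-1) ^ j * A, by linear_combination (-1 : ℤ) ^ j * h + hε⟩⟩

theorem odd_of_mul_sub_mul_eq_neg_one_pow {A T S B : ℤ} {j : ℕ} (hT : Even T)
    (h : A * T - S * B = (-1) ^ j) : Odd B := by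
  have hSB : Odd (S * B) := by
    rw [show S * B = A * T - (-1) ^ j by linear_combination -h]
    exact (hT.mul_left A).sub_odd (Odd.pow (by decide))
  exact (Int.odd_mul.mp hSB).2

theorem kron_two_pow_mul_eq_of_det {S A : ℤ} {b n g j : ℕ} (hb : Odd b) (hn : Odd n)
    (hdet : A * (2 ^ g * n) - S * b = (-1) ^ j) :
    kron S (2 ^ g * n) = χ₈ (S * b) ^ g * χ₄ n ^ (j + 1) * χ₄ b ^ j *
      (if n % 4 = 3 ∧ b % 4 = 3 then -1 else 1) * jacobiSym A b := by
  set r : ℤ := if n % 4 = 3 ∧ b % 4 = 3 then -1 else 1 with hr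
  obtain ⟨hAb, hbT⟩ := isCoprime_of_mul_sub_mul_eq_neg_one_pow hdet
  have hSn : jacobiSym S n * jacobiSym b n = χ₄ n ^ (j + 1) := by
    rw [← jacobiSym.mul_left, ← jacobiSym.at_neg_one hn, ← jacobiSym.pow_left]
    exact jacobiSym.mod_left' (Int.modEq_iff_dvd.2 ⟨-(A * 2 ^ g), by linear_combination hdet⟩)
  have hAT : jacobiSym A b * jacobiSym (2 ^ g * n) b = χ₄ b ^ j := by
    rw [← jacobiSym.mul_left, ← jacobiSym.at_neg_one hb, ← jacobiSym.pow_left]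
    exact jacobiSym.mod_left' (Int.modEq_iff_dvd.2 ⟨-S, by linear_combination -hdet⟩)
  have hTb : jacobiSym (2 ^ g * n) b = χ₈ b ^ g * jacobiSym n b := by
    rw [jacobiSym.mul_left, jacobiSym.pow_left, jacobiSym.at_two hb]
  have hrec : jacobiSym n b = r * jacobiSym b n := by
    rw [← jacobiSym.quadratic_reciprocity_if (Nat.odd_iff.mp hn) (Nat.odd_iff.mp hb), hr]
    split_ifs <;> ring
  have hr2 : r ^ 2 = 1 := by rw [hr]; split_ifs <;> norm_num
  have hχ : (χ₈ b ^ g) ^ 2 = 1 := by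
    have h2b : Int.gcd 2 b = 1 := by
      rw [← Nat.cast_ofNat, Int.gcd_natCast_natCast]; exact Nat.coprime_two_left.2 hb
    rw [← pow_mul, mul_comm, pow_mul, ← jacobiSym.at_two hb, jacobiSym.sq_one h2b, one_pow]
  have hA : jacobiSym A b ^ 2 = 1 := jacobiSym.sq_one (Int.isCoprime_iff_gcd_eq_one.mp hAb)
  have hbn : jacobiSym b n ^ 2 = 1 :=
    jacobiSym.sq_one (Int.isCoprime_iff_gcd_eq_one.mp hbT.of_mul_right_right)
  rw [kron_two_pow_mul S g hn, ← hSn, ← hAT, hTb, hrec, map_mul, mul_pow]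
  calc χ₈ S ^ g * jacobiSym S n
      = χ₈ S ^ g * jacobiSym S n *
          ((χ₈ b ^ g) ^ 2 * jacobiSym b n ^ 2 * r ^ 2 * jacobiSym A b ^ 2) := by
        rw [hχ, hbn, hr2, hA]; ring
    _ = _ := by ring

theorem kron_eq_kron_of_det {S A S' A' B B' n n' : ℤ} {g j : ℕ} (hB : 0 < B) (hB' : 0 < B')
    (hn : 0 < n) (hn' : 0 < n') (hB_odd : Odd B) (hn_odd : Odd n)
    (hdet : A * (2 ^ g * n) - S * B = (-1) ^ j) (hdet' : A' * (2 ^ g * n') - S' * B' = (-1) ^ j)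
    (hBB : B' ≡ B [ZMOD 4]) (hnn : n' ≡ n [ZMOD 4]) (hSB : S' * B' ≡ S * B [ZMOD 8])
    (hA : jacobiSym A' B'.toNat = jacobiSym A B.toNat) :
    kron S' (2 ^ g * n').toNat = kron S (2 ^ g * n).toNat := by
  lift B to ℕ using hB.le
  lift B' to ℕ using hB'.le
  lift n to ℕ using hn.le
  lift n' to ℕ using hn'.le
  rw [Int.toNat_natCast, Int.toNat_natCast] at hA
  rw [Int.odd_coe_nat] at hB_odd hn_odd
  replace hBB : B' % 4 = B % 4 := Int.natCast_modEq_iff.mp hBB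
  replace hnn : n' % 4 = n % 4 := Int.natCast_modEq_iff.mp hnn
  have hB'_odd : Odd B' := Nat.odd_iff.2 (by have := Nat.odd_iff.1 hB_odd; omega)
  have hn'_odd : Odd n' := Nat.odd_iff.2 (by have := Nat.odd_iff.1 hn_odd; omega)
  have hχ₈ : χ₈ (S' * B') = χ₈ (S * B) := by
    have := (ZMod.intCast_eq_intCast_iff _ _ 8).2 hSB
    push_cast at this
    rw [this]
  have hχ₄ : χ₄ n' = χ₄ n := by rw [(ZMod.natCast_eq_natCast_iff _ _ 4).2 hnn]
  have hχ₄' : χ₄ B' = χ₄ B := by rw [(ZMod.natCast_eq_natCast_iff _ _ 4).2 hBB]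
  have hcast : ∀ m : ℕ, ((2 : ℤ) ^ g * m).toNat = 2 ^ g * m := fun m => by norm_cast
  rw [hcast, hcast, kron_two_pow_mul_eq_of_det hB'_odd hn'_odd (by exact_mod_cast hdet'),
    kron_two_pow_mul_eq_of_det hB_odd hn_odd (by exact_mod_cast hdet), hA, hχ₈, hχ₄, hχ₄', hnn,
    hBB]

theorem eq_of_recurrence {a X Y : ℤ → ℤ}
    (hX : ∀ k, 1 ≤ k → X k = a k * X (k - 1) + X (k - 2))
    (hY : ∀ k, 1 ≤ k → Y k = a k * Y (k - 1) + Y (k - 2))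
    (h_neg_one : X (-1) = Y (-1)) (h_zero : X 0 = Y 0) {j : ℤ} (hj : -1 ≤ j) : X j = Y j := by
  suffices h : ∀ j, 0 ≤ j → X j = Y j ∧ X (j - 1) = Y (j - 1) by
    rcases hj.eq_or_lt with rfl | hj
    · exact h_neg_one
    · exact (h j (by omega)).1
  intro j hj
  induction j, hj using Int.leInduction with
  | base => exact ⟨h_zero, h_neg_one⟩
  | succ j hj ih =>
    refine ⟨?_, by simpa using ih.1⟩
    rw [hX _ (by omega), hY _ (by omega), add_sub_cancel_right,
      show j + 1 - 2 = j - 1 by ring, ih.1, ih.2]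

theorem periodic_on_nonneg_of_dvd {α : Type*} {a : ℤ → α} {l : ℕ}
    (h : ∀ k, 0 ≤ k → a (k + l) = a k) {L : ℕ} (hL : l ∣ L) (k : ℤ) (hk : 0 ≤ k) :
    a (k + L) = a k := by
  obtain ⟨c, rfl⟩ := hL
  induction c with
  | zero => simp
  | succ c ih => rw [Nat.mul_succ, Nat.cast_add, ← add_assoc, h _ (by positivity), ih]

theorem modEq_eight_of_det_eq_one {P Q R W S T A B : ℤ} (hdet : P * W - Q * R = 1)
    (hQ : 4 ∣ Q) (hT : 2 ∣ T) (hR : 8 ∣ R) :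
    (P * S + Q * T) * (R * A + W * B) ≡ S * B [ZMOD 8] := by
  obtain ⟨q, rfl⟩ := hQ
  obtain ⟨τ, rfl⟩ := hT
  obtain ⟨r, rfl⟩ := hR
  exact Int.modEq_iff_dvd.2
    ⟨-(4 * q * r * S * B + P * S * r * A + 8 * q * τ * r * A + q * τ * W * B),
      by linear_combination (-(S * B)) * hdet⟩

structure IsConvergents (a s t : ℤ → ℤ) : Prop where
  s_neg_one : s (-1) = 1
  t_neg_one : t (-1) = 0
  s_zero : s 0 = a 0
  t_zero : t 0 = 1
  s_rec : ∀ k, 1 ≤ k → s k = a k * s (k - 1) + s (k - 2)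
  t_rec : ∀ k, 1 ≤ k → t k = a k * t (k - 1) + t (k - 2)

namespace IsConvergents

variable {a s t : ℤ → ℤ}

theorem det (h : IsConvergents a s t) (n : ℕ) :
    s (n - 1) * t n - s n * t (n - 1) = (-1) ^ n := by
  induction n with
  | zero => simp [h.s_neg_one, h.t_neg_one, h.s_zero, h.t_zero]
  | succ n ih =>
    push_cast
    rw [add_sub_cancel_right, h.s_rec (n + 1) (by omega), h.t_rec (n + 1) (by omega),
      add_sub_cancel_right, show (n : ℤ) + 1 - 2 = n - 1 by ring, pow_succ]
    linear_combination -ih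

theorem t_pos (h : IsConvergents a s t) (ha : ∀ k, 1 ≤ k → 0 < a k) {j : ℤ} (hj : 0 ≤ j) :
    0 < t j := by
  suffices h : ∀ j, 0 ≤ j → 0 < t j ∧ 0 ≤ t (j - 1) from (h j hj).1
  intro j hj
  induction j, hj using Int.leInduction with
  | base => exact ⟨by rw [h.t_zero]; norm_num, by rw [zero_sub, h.t_neg_one]⟩
  | succ j hj ih =>
    refine ⟨?_, by simpa using ih.1.le⟩
    rw [h.t_rec _ (by omega), add_sub_cancel_right, show j + 1 - 2 = j - 1 by ring]
    nlinarith [ha (j + 1) (by omega), ih.1, ih.2]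

theorem add_period_eq (h : IsConvergents a s t) {L : ℕ} (hL : 1 ≤ L)
    (hper : ∀ k, 0 ≤ k → a (k + L) = a k) {X : ℤ → ℤ}
    (hX : ∀ k, 1 ≤ k → X k = a k * X (k - 1) + X (k - 2)) {j : ℤ} (hj : -1 ≤ j) :
    X (j + L) = X (L - 1) * s j + X (L - 2) * t j := by
  refine eq_of_recurrence (a := a) (X := fun j => X (j + L))
    (Y := fun j => X (L - 1) * s j + X (L - 2) * t j) (fun k hk => ?_) (fun k hk => ?_) ?_ ?_ hj
  · rw [hX _ (by omega), hper k (by omega)]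
    ring_nf
  · rw [h.s_rec k hk, h.t_rec k hk]
    ring
  · rw [h.s_neg_one, h.t_neg_one]
    ring_nf
  · rw [h.s_zero, h.t_zero, zero_add, hX _ (by exact_mod_cast hL), ← zero_add (L : ℤ),
      hper 0 le_rfl]
    ring_nf

theorem kron_add_period_eq (h : IsConvergents a s t) (ha : ∀ k, 1 ≤ k → 0 < a k) {L : ℕ}
    (hL_pos : 0 < L) (hL_even : Even L) (hper : ∀ k, 0 ≤ k → a (k + L) = a k)
    (hJ : ∀ k, 0 ≤ k → Odd (t k) →
      jacobiSym (s (k + L)) (t (k + L)).toNat = jacobiSym (s k) (t k).toNat)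
    (hQ : 4 ∣ s (L - 2)) (hR : 8 ∣ t (L - 1)) (hW : t (L - 2) ≡ 1 [ZMOD 4])
    {k : ℤ} (hk : 0 ≤ k) {g : ℕ} (hg : g ≠ 0) {n n' : ℤ} (hn : Odd n)
    (hnn : n' ≡ n [ZMOD 4])
    (hT : t k = 2 ^ g * n) (hT' : t (k + L) = 2 ^ g * n') :
    kron (s (k + L)) (t (k + L)).toNat = kron (s k) (t k).toNat := by
  lift k to ℕ using hk
  have hT_even : Even (t k) := hT ▸ (Int.even_pow.2 ⟨even_two, hg⟩).mul_right n
  have hk1 : 1 ≤ k := Nat.one_le_iff_ne_zero.2 (by rintro rfl; simp [h.t_zero] at hT_even)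
  have hdetL : s (L - 1) * t (L - 2) - s (L - 2) * t (L - 1) = 1 := by
    have h1 := h.det (L - 1)
    rw [Nat.cast_sub hL_pos, Nat.cast_one, sub_sub, one_add_one_eq_two,
      (Nat.Even.sub_odd hL_pos hL_even odd_one).neg_one_pow] at h1
    linear_combination -h1
  have hdet := h.det k
  have hS_shift := h.add_period_eq hL_pos hper h.s_rec (j := k) (by omega)
  have hT_shift := h.add_period_eq hL_pos hper h.t_rec (j := k) (by omega)
  have hA_shift := h.add_period_eq hL_pos hper h.s_rec (j := k - 1) (by omega)
  have hB_shift := h.add_period_eq hL_pos hper h.t_rec (j := k - 1) (by omega)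
  have hdet' : s (k - 1 + L) * t (k + L) - s (k + L) * t (k - 1 + L) = (-1) ^ k := by
    rw [hS_shift, hT_shift, hA_shift, hB_shift]
    linear_combination (s (k - 1) * t k - s k * t (k - 1)) * hdetL + hdet
  have hB_odd : Odd (t (k - 1)) := odd_of_mul_sub_mul_eq_neg_one_pow hT_even hdet
  have hn_pos : 0 < n := pos_of_mul_pos_right (hT ▸ h.t_pos ha (by omega)) (by positivity)
  have hn'_pos : 0 < n' := pos_of_mul_pos_right (hT' ▸ h.t_pos ha (by omega)) (by positivity)
  have hBB : t (k - 1 + L) ≡ t (k - 1) [ZMOD 4] := by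
    have hR4 : t (L - 1) ≡ 0 [ZMOD 4] := Int.modEq_zero_iff_dvd.2 (dvd_trans (by norm_num) hR)
    simpa [hB_shift] using (hR4.mul_right (s (k - 1))).add (hW.mul_right (t (k - 1)))
  have hSB : s (k + L) * t (k - 1 + L) ≡ s k * t (k - 1) [ZMOD 8] := by
    rw [hS_shift, hB_shift]
    exact modEq_eight_of_det_eq_one hdetL hQ (even_iff_two_dvd.1 hT_even) hR
  rw [hT] at hdet ⊢
  rw [hT'] at hdet' ⊢
  exact kron_eq_kron_of_det (h.t_pos ha (by omega)) (h.t_pos ha (by omega)) hn_pos hn'_pos hB_odd hn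
    hdet hdet' hBB hnn hSB (hJ _ (by omega) hB_odd)

end IsConvergents

theorem kronecker_step_small_f_general
    (a s t : ℤ → ℤ) (l : ℕ)
    (ha_pos : ∀ k : ℤ, 0 ≤ k → 0 < a k)
    (ha_per : ∀ k : ℤ, 0 ≤ k → a (k + l) = a k)
    (hs_neg : s (-1) = 1) (ht_neg : t (-1) = 0)
    (hs_zero : s 0 = a 0) (ht_zero : t 0 = 1)
    (hs_rec : ∀ k : ℤ, 1 ≤ k → s k = a k * s (k - 1) + s (k - 2))
    (ht_rec : ∀ k : ℤ, 1 ≤ k → t k = a k * t (k - 1) + t (k - 2))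
    (L : ℕ) (hL_pos : 0 < L) (hL_even : Even L) (hL_mul : l ∣ L)
    (hD : s ((L : ℤ) - 1) ≡ 1 [ZMOD 4] ∧ s ((L : ℤ) - 2) ≡ 0 [ZMOD 4] ∧
          t ((L : ℤ) - 1) ≡ 0 [ZMOD 4] ∧ t ((L : ℤ) - 2) ≡ 1 [ZMOD 4])
    (hJper : ∀ k : ℤ, 0 ≤ k → Odd (t k) →
      jacobiSym (s (k + L)) (t (k + L)).toNat = jacobiSym (s k) (t k).toNat)
    (m : ℕ) (x y u v : ℤ)
    (hDU : s ((L : ℤ) - 1) = 1 + 2 ^ m * x ∧ s ((L : ℤ) - 2) = 2 ^ m * y ∧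
           t ((L : ℤ) - 1) = 2 ^ m * u ∧ t ((L : ℤ) - 2) = 1 + 2 ^ m * v)
    (e : ℕ) (u' : ℤ) (hu : u = 2 ^ e * u')
    (k : ℤ) (hk : 0 ≤ k)
    (f : ℤ) (hf1 : 1 - (m : ℤ) ≤ f) (hf2 : f ≤ (e : ℤ) - 2)
    (g : ℕ) (hg : (g : ℤ) = (m : ℤ) + f)
    (t' : ℤ) (ht'_odd : Odd t') (htk : t k = 2 ^ g * t') :
    ∃ t'' : ℤ, Odd t'' ∧ t'' ≡ t' [ZMOD 4] ∧ t (k + L) = 2 ^ g * t'' ∧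
      kron (s (k + L)) (t (k + L)).toNat = kron (s k) (t k).toNat := by
  have hconv : IsConvergents a s t := ⟨hs_neg, ht_neg, hs_zero, ht_zero, hs_rec, ht_rec⟩
  have hper := periodic_on_nonneg_of_dvd ha_per hL_mul
  obtain ⟨c, hc, hR⟩ : ∃ c : ℕ, 2 ≤ c ∧ t (L - 1) = 2 ^ g * (2 ^ c * u') := by
    refine ⟨m + e - g, by omega, ?_⟩
    rw [hDU.2.2.1, hu, ← mul_assoc, ← mul_assoc, ← pow_add, ← pow_add]
    congr 2
    omega
  set t'' := 2 ^ c * u' * s k + t (L - 2) * t'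
  have ht'' : t (k + L) = 2 ^ g * t'' := by
    rw [hconv.add_period_eq hL_pos hper hconv.t_rec (by omega), hR, htk]
    ring
  have ht''_modEq : t'' ≡ t' [ZMOD 4] := by
    have h4 : 2 ^ c * u' * s k ≡ 0 [ZMOD 4] := Int.modEq_zero_iff_dvd.2
      (dvd_mul_of_dvd_left (dvd_mul_of_dvd_left (pow_dvd_pow 2 hc) _) _)
    simpa using h4.add (hD.2.2.2.mul_right t')
  have ht''_odd : Odd t'' := Int.odd_iff.2
    ((ht''_modEq.of_dvd (by norm_num : (2 : ℤ) ∣ 4)).eq.trans (Int.odd_iff.1 ht'_odd))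
  have hR8 : 8 ∣ t (L - 1) := by
    rw [hR, show (8 : ℤ) = 2 * 2 ^ 2 by norm_num]
    exact mul_dvd_mul (dvd_pow_self 2 (by omega)) (dvd_mul_of_dvd_left (pow_dvd_pow 2 hc) _)
  refine ⟨t'', ht''_odd, ht''_modEq, ht'', ?_⟩
  exact hconv.kron_add_period_eq (fun k hk => ha_pos k (by omega)) hL_pos hL_even hper hJper
    (Int.modEq_zero_iff_dvd.1 hD.2.1) hR8 hD.2.2.2 hk (by omega) ht'_odd ht''_modEq htk ht''

/-- Lemma 1, first case: if `s k ≡ 3 (mod 4)` and `t k = 2^(m+f) t'` with `t'` odd and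
`1 - m ≤ f ≤ e - 2`, then `t (k+L) = 2^(m+f) t''` with `t''` odd, `t'' ≡ t' (mod 4)`,
and the Kronecker symbols at `k + L` and `k` coincide. -/
theorem kronecker_step_small_f
    (a s t : ℤ → ℤ) (l : ℕ) (hl : 1 ≤ l)
    (ha_pos : ∀ k : ℤ, 0 ≤ k → 0 < a k)
    (ha_per : ∀ k : ℤ, 0 ≤ k → a (k + l) = a k)
    (hs_neg : s (-1) = 1) (ht_neg : t (-1) = 0)
    (hs_zero : s 0 = a 0) (ht_zero : t 0 = 1)
    (hs_rec : ∀ k : ℤ, 1 ≤ k → s k = a k * s (k - 1) + s (k - 2))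
    (ht_rec : ∀ k : ℤ, 1 ≤ k → t k = a k * t (k - 1) + t (k - 2))
    (L : ℕ) (hL_pos : 0 < L) (hL_even : Even L) (hL_mul : l ∣ L)
    (hD : s ((L : ℤ) - 1) ≡ 1 [ZMOD 4] ∧ s ((L : ℤ) - 2) ≡ 0 [ZMOD 4] ∧
          t ((L : ℤ) - 1) ≡ 0 [ZMOD 4] ∧ t ((L : ℤ) - 2) ≡ 1 [ZMOD 4])
    (hJpar : ∀ k : ℤ, 0 ≤ k → t (k + L) ≡ t k [ZMOD 2])
    (hJper : ∀ k : ℤ, 0 ≤ k → Odd (t k) →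
      jacobiSym (s (k + L)) (t (k + L)).toNat = jacobiSym (s k) (t k).toNat)
    (m : ℕ) (hm : 2 ≤ m) (x y u v : ℤ)
    (hDU : s ((L : ℤ) - 1) = 1 + 2 ^ m * x ∧ s ((L : ℤ) - 2) = 2 ^ m * y ∧
           t ((L : ℤ) - 1) = 2 ^ m * u ∧ t ((L : ℤ) - 2) = 1 + 2 ^ m * v)
    (hUodd : Odd x ∨ Odd y ∨ Odd u ∨ Odd v)
    (e : ℕ) (u' : ℤ) (hu_ne : u ≠ 0) (hu : u = 2 ^ e * u') (hu'_odd : Odd u')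
    (k : ℤ) (hk : 0 ≤ k) (hsk : s k ≡ 3 [ZMOD 4])
    (f : ℤ) (hf1 : 1 - (m : ℤ) ≤ f) (hf2 : f ≤ (e : ℤ) - 2)
    (g : ℕ) (hg : (g : ℤ) = (m : ℤ) + f)
    (t' : ℤ) (ht'_odd : Odd t') (htk : t k = 2 ^ g * t') :
    ∃ t'' : ℤ, Odd t'' ∧ t'' ≡ t' [ZMOD 4] ∧ t (k + L) = 2 ^ g * t'' ∧
      kron (s (k + L)) (t (k + L)).toNat = kron (s k) (t k).toNat :=
  kronecker_step_small_f_general a s t l ha_pos ha_per hs_neg ht_neg hs_zero ht_zero hs_rec ht_rec L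
    hL_pos hL_even hL_mul hD hJper m x y u v hDU e u' hu k hk f hf1 hf2 g hg t' ht'_odd htk
end

section
/- Let k ≥ 0 be an index with s_k ≡ 3 (mod 4) and t_k = 2^{m+e−1} t' where t' is odd (and m+e−1 ≥ 1). Then t_{k+L} = 2^{m+e−1} t'' for an odd integer t'' with t'' ≡ t' + 2 (mod 4), and the Kronecker symbols satisfy (s_{k+L}/t_{k+L}) = −(s_k/t_k). -/
/-!
Write `p = s_k`, `q = t'`, `P = s_{k+1}`, `Q = t_{k+1}`, `j = m + e - 1`. Shifting by `L`
multiplies `(s, t)` by `D_L = I + 2^m U`, so `t_{k+L} = 2^j (t' + 2 u' s_k + 2^m v t')`, which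
gives `t''`, while `D_L ≡ I (mod 4)` keeps the residues of `s_{k+1}` and `t_{k+1}` mod 4.

The Jacobi periodicity is only available at odd denominators, so the symbol is compared through
the index `k + 1`, where `Q` is odd: the determinant identity `p Q - P 2^j q = ε = ±1` together
with quadratic reciprocity gives
`kron p (2^j q) * J(P | Q) = χ₈(p Q)^j * J(ε | q) * J(-ε | Q) * qrSign q Q`.
Every factor on the right depends only on residues mod 8 of `p Q = ε + 2^j P q` and mod 4 of
`q` and `Q`. Passing from `k` to `k + L` changes `q` by `2` mod 4 and `P q` into its negative
mod 4, and these changes produce exactly one sign.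
-/

open ZMod

def SolvesRecurrence (a f : ℤ → ℤ) : Prop :=
  ∀ k : ℤ, 1 ≤ k → f k = a k * f (k - 1) + f (k - 2)

namespace SolvesRecurrence

variable {a f g : ℤ → ℤ}

theorem linear_comb (hf : SolvesRecurrence a f) (hg : SolvesRecurrence a g) (c d : ℤ) :
    SolvesRecurrence a (fun n => c * f n + d * g n) := fun k hk => by
  simp only [hf k hk, hg k hk]; ring

theorem comp_add_right (hf : SolvesRecurrence a f) {L : ℤ} (hL : 0 ≤ L)
    (ha : ∀ k, 0 ≤ k → a (k + L) = a k) : SolvesRecurrence a (fun n => f (n + L)) :=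
  fun k hk => by
    show f (k + L) = a k * f (k - 1 + L) + f (k - 2 + L)
    rw [hf (k + L) (by omega), ha k (by omega), sub_add_eq_add_sub, sub_add_eq_add_sub]

theorem eq_of_eq_init (hf : SolvesRecurrence a f) (hg : SolvesRecurrence a g)
    (h₁ : f (-1) = g (-1)) (h₀ : f 0 = g 0) (n : ℤ) (hn : 0 ≤ n) : f n = g n := by
  suffices ∀ n : ℤ, 0 ≤ n → f n = g n ∧ f (n - 1) = g (n - 1) from (this n hn).1
  intro n hn
  induction n, hn using Int.leInduction with
  | base => exact ⟨h₀, h₁⟩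
  | succ n hn ih =>
    refine ⟨?_, by simpa using ih.1⟩
    rw [hf _ (by omega), hg _ (by omega), add_sub_cancel_right,
      show n + 1 - 2 = n - 1 by ring, ih.1, ih.2]

theorem casoratian (hf : SolvesRecurrence a f) (hg : SolvesRecurrence a g) (n : ℕ) :
    f n * g (n + 1) - f (n + 1) * g n = (-1) ^ n * (f 0 * g (-1) - f (-1) * g 0) := by
  induction n with
  | zero =>
    rw [Nat.cast_zero, zero_add, pow_zero, one_mul, hf 1 le_rfl, hg 1 le_rfl, sub_self,
      show (1 : ℤ) - 2 = -1 by norm_num]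
    ring
  | succ n ih =>
    push_cast
    rw [hf (n + 1 + 1) (by omega), hg (n + 1 + 1) (by omega), add_sub_cancel_right,
      show (n : ℤ) + 1 + 1 - 2 = n by ring, pow_succ]
    linear_combination -ih

theorem pos (hf : SolvesRecurrence a f) (ha : ∀ k, 1 ≤ k → 0 < a k) (h₁ : 0 ≤ f (-1))
    (h₀ : 0 < f 0) (n : ℤ) (hn : 0 ≤ n) : 0 < f n := by
  suffices ∀ n : ℤ, 0 ≤ n → 0 < f n ∧ 0 ≤ f (n - 1) from (this n hn).1
  intro n hn
  induction n, hn using Int.leInduction with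
  | base => exact ⟨h₀, h₁⟩
  | succ n hn ih =>
    rw [hf _ (by omega), add_sub_cancel_right, show n + 1 - 2 = n - 1 by ring]
    have := ha (n + 1) (by omega)
    exact ⟨by nlinarith, ih.1.le⟩

end SolvesRecurrence

theorem add_period_of_dvd {a : ℤ → ℤ} {l L : ℕ} (ha : ∀ k, 0 ≤ k → a (k + l) = a k)
    (hL : l ∣ L) (k : ℤ) (hk : 0 ≤ k) : a (k + L) = a k := by
  obtain ⟨c, rfl⟩ := hL
  induction c with
  | zero => simp
  | succ c ih => rw [Nat.mul_succ, Nat.cast_add, ← add_assoc, ha _ (by positivity), ih]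

structure Convergents (a s t : ℤ → ℤ) : Prop where
  rec_num : SolvesRecurrence a s
  rec_den : SolvesRecurrence a t
  num_neg_one : s (-1) = 1
  den_neg_one : t (-1) = 0
  num_zero : s 0 = a 0
  den_zero : t 0 = 1

namespace Convergents

variable {a s t f : ℤ → ℤ}

theorem add_period (hc : Convergents a s t) (hf : SolvesRecurrence a f) {L : ℤ} (hL : 1 ≤ L)
    (ha : ∀ k, 0 ≤ k → a (k + L) = a k) (n : ℤ) (hn : 0 ≤ n) :
    f (n + L) = f (L - 1) * s n + f (L - 2) * t n :=
  (hf.comp_add_right (by omega) ha).eq_of_eq_init (hc.rec_num.linear_comb hc.rec_den _ _)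
    (by rw [hc.num_neg_one, hc.den_neg_one, neg_add_eq_sub]; ring)
    (by rw [hc.num_zero, hc.den_zero, zero_add, hf L hL, ← ha 0 le_rfl, zero_add]; ring) n hn

theorem add_period_modEq (hc : Convergents a s t) {L : ℤ} (hL : 1 ≤ L)
    (ha : ∀ k, 0 ≤ k → a (k + L) = a k) {N : ℤ}
    (hD : s (L - 1) ≡ 1 [ZMOD N] ∧ s (L - 2) ≡ 0 [ZMOD N] ∧
      t (L - 1) ≡ 0 [ZMOD N] ∧ t (L - 2) ≡ 1 [ZMOD N]) (n : ℤ) (hn : 0 ≤ n) :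
    s (n + L) ≡ s n [ZMOD N] ∧ t (n + L) ≡ t n [ZMOD N] := by
  obtain ⟨h₁, h₂, h₃, h₄⟩ := hD
  rw [hc.add_period hc.rec_num hL ha n hn, hc.add_period hc.rec_den hL ha n hn]
  exact ⟨by simpa using (h₁.mul_right (s n)).add (h₂.mul_right (t n)),
    by simpa using (h₃.mul_right (s n)).add (h₄.mul_right (t n))⟩

theorem det (hc : Convergents a s t) (n : ℕ) :
    s n * t (n + 1) - s (n + 1) * t n = -(-1) ^ n := by
  rw [hc.rec_num.casoratian hc.rec_den, hc.num_zero, hc.den_neg_one, hc.num_neg_one,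
    hc.den_zero]
  ring

theorem den_pos (hc : Convergents a s t) (ha : ∀ k, 1 ≤ k → 0 < a k) (n : ℤ) (hn : 0 ≤ n) :
    0 < t n :=
  hc.rec_den.pos ha hc.den_neg_one.ge (hc.den_zero ▸ one_pos) n hn

end Convergents

theorem add_two_pow_mul_modEq {m : ℕ} (hm : 2 ≤ m) (a c : ℤ) : a + 2 ^ m * c ≡ a [ZMOD 4] := by
  obtain ⟨i, rfl⟩ := Nat.exists_eq_add_of_le' hm
  exact Int.modEq_iff_dvd.mpr ⟨-(2 ^ i * c), by ring⟩

theorem exists_odd_part_of_shift {m e : ℕ} (hm : 2 ≤ m) {p t₀ t₁ u u' v t' : ℤ} (hp : Odd p)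
    (hu : u = 2 ^ e * u') (hu' : Odd u') (ht₀ : t₀ = 2 ^ (m + e - 1) * t')
    (ht₁ : t₁ = 2 ^ m * u * p + (1 + 2 ^ m * v) * t₀) :
    ∃ t'', t'' ≡ t' + 2 [ZMOD 4] ∧ t₁ = 2 ^ (m + e - 1) * t'' := by
  obtain ⟨c, hc⟩ := hu'.mul hp
  have h2 : (2 : ℤ) ^ m * 2 ^ e = 2 ^ (m + e - 1) * 2 := by
    rw [← pow_add, ← pow_succ]; congr 1; omega
  refine ⟨t' + 2 + 4 * c + 2 ^ m * (v * t'), ?_, ?_⟩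
  · exact (add_two_pow_mul_modEq hm _ _).trans (Int.modEq_iff_dvd.mpr ⟨-c, by ring⟩)
  · rw [ht₁, ht₀, hu]; linear_combination (u' * p) * h2 + 2 ^ (m + e - 1) * 2 * hc

theorem odd_of_det {j : ℕ} (hj : 1 ≤ j) {ε : ℤ} (hε : IsUnit ε) {p P q Q : ℤ}
    (hdet : p * Q - P * (2 ^ j * q) = ε) : Odd Q := by
  obtain ⟨i, rfl⟩ := Nat.exists_eq_add_of_le' hj
  have hpQ : Odd (p * Q) := by
    rw [show p * Q = ε + 2 * (P * 2 ^ i * q) by linear_combination hdet]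
    rcases Int.isUnit_iff.mp hε with rfl | rfl <;> simp [parity_simps]
  exact (Int.odd_mul.mp hpQ).2

theorem kron_eq_χ₈_pow_mul_jacobiSym (s : ℤ) (t : ℕ) :
    kron s t = χ₈ s ^ padicValNat 2 t * jacobiSym s (t / 2 ^ padicValNat 2 t) := by
  have hχ₈ : (if s % 8 = 1 ∨ s % 8 = 7 then 1 else if s % 8 = 3 ∨ s % 8 = 5 then -1 else 0)
      = χ₈ s := by
    rw [χ₈_int_eq_if_mod_eight]; split_ifs <;> omega
  rw [kron, hχ₈]

theorem kron_two_pow_mul_s4 (s : ℤ) (j : ℕ) {q : ℕ} (hq : Odd q) :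
    kron s (2 ^ j * q) = χ₈ s ^ j * jacobiSym s q := by
  have hv : padicValNat 2 (2 ^ j * q) = j := by
    rw [padicValNat.mul (by positivity) hq.pos.ne', padicValNat.prime_pow,
      padicValNat.eq_zero_of_not_dvd (by rw [Nat.two_dvd_ne_zero]; exact Nat.odd_iff.mp hq),
      add_zero]
  rw [kron_eq_χ₈_pow_mul_jacobiSym, hv, Nat.mul_div_cancel_left _ (by positivity)]

theorem χ₈_pow_eq_one {ε : ℤ} (hε : IsUnit ε) {j : ℕ} (hj : 2 ≤ j) (c : ℤ) :
    χ₈ (ε + 2 ^ j * c : ℤ) ^ j = 1 := by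
  have hε' := Int.isUnit_iff.mp hε
  obtain rfl | hj3 := hj.eq_or_lt
  · rw [χ₈_int_eq_if_mod_eight]; split_ifs <;> omega
  · obtain ⟨i, rfl⟩ := Nat.exists_eq_add_of_le' hj3
    have hone : χ₈ (ε + 8 * (2 ^ i * c) : ℤ) = 1 := by
      rw [χ₈_int_eq_if_mod_eight]; split_ifs <;> omega
    rw [show ε + 2 ^ (i + 3) * c = ε + 8 * (2 ^ i * c) by ring, hone, one_pow]

theorem χ₄_add_two_pow_mul {ε : ℤ} (hε : IsUnit ε) {j : ℕ} (hj : 2 ≤ j) (c : ℤ) :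
    χ₄ (ε + 2 ^ j * c : ℤ) = ε := by
  obtain ⟨i, rfl⟩ := Nat.exists_eq_add_of_le' hj
  rw [show ε + 2 ^ (i + 2) * c = ε + 4 * (2 ^ i * c) by ring, χ₄_int_eq_if_mod_four]
  rcases Int.isUnit_iff.mp hε with rfl | rfl <;> split_ifs <;> omega

theorem χ₈_pow_mul_χ₄_of_modEq {ε : ℤ} (hε : IsUnit ε) {j : ℕ} (hj : 1 ≤ j) {w w₂ : ℤ}
    (hw : w₂ ≡ -w [ZMOD 4]) :
    χ₈ (ε + 2 ^ j * w₂ : ℤ) ^ j * ε * χ₄ (ε + 2 ^ j * w : ℤ) = χ₈ (ε + 2 ^ j * w : ℤ) ^ j := by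
  obtain rfl | hj2 := hj.eq_or_lt
  · rw [Int.ModEq] at hw
    simp only [pow_one, χ₈_int_eq_if_mod_eight, χ₄_int_eq_if_mod_four]
    rcases Int.isUnit_iff.mp hε with rfl | rfl <;> split_ifs <;> omega
  · rw [χ₈_pow_eq_one hε hj2, χ₈_pow_eq_one hε hj2, χ₄_add_two_pow_mul hε hj2, one_mul,
      Int.isUnit_mul_self hε]

theorem χ₄_nat_eq_neg_of_modEq {q q' : ℕ} (hq : Odd q) (hq' : (q' : ℤ) ≡ q + 2 [ZMOD 4]) :
    χ₄ q' = -χ₄ q := by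
  rw [Nat.odd_iff] at hq; rw [Int.ModEq] at hq'
  rw [χ₄_nat_eq_if_mod_four, χ₄_nat_eq_if_mod_four]; split_ifs <;> omega

theorem jacobiSym_eq_of_isUnit_of_modEq {a : ℤ} (ha : IsUnit a) {b b' : ℕ} (hb : Odd b)
    (hb' : (b' : ℤ) ≡ b [ZMOD 4]) : jacobiSym a b' = jacobiSym a b := by
  rw [Nat.odd_iff] at hb; rw [Int.ModEq] at hb'
  have h4 : 4 * a.natAbs = 4 := by rw [Int.isUnit_iff_natAbs_eq.mp ha]
  rw [jacobiSym.mod_right a (Nat.odd_iff.mpr hb), jacobiSym.mod_right a (Nat.odd_iff.mpr (by omega)),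
    h4]
  congr 1
  omega

theorem jacobiSym_eq_mul_of_modEq {ε : ℤ} (hε : IsUnit ε) {q q' : ℕ} (hq : Odd q)
    (hq' : (q' : ℤ) ≡ q + 2 [ZMOD 4]) : jacobiSym ε q' = ε * jacobiSym ε q := by
  rcases Int.isUnit_iff.mp hε with rfl | rfl
  · simp [jacobiSym.one_left]
  · have hq'odd : Odd q' := by rw [Nat.odd_iff] at hq ⊢; rw [Int.ModEq] at hq'; omega
    rw [jacobiSym.at_neg_one hq'odd, jacobiSym.at_neg_one hq, χ₄_nat_eq_neg_of_modEq hq hq']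
    ring

theorem qrSign_eq_mul_of_modEq {q q' Q Q' : ℕ} (hq : Odd q) (hQ : Odd Q)
    (hq' : (q' : ℤ) ≡ q + 2 [ZMOD 4]) (hQ' : (Q' : ℤ) ≡ Q [ZMOD 4]) :
    qrSign q' Q' = χ₄ Q * qrSign q Q := by
  have hQ'odd : Odd Q' := by rw [Nat.odd_iff] at hQ ⊢; rw [Int.ModEq] at hQ'; omega
  have hχ₄q : IsUnit (χ₄ q : ℤ) := by
    rw [Nat.odd_iff] at hq
    rw [χ₄_nat_eq_if_mod_four, if_neg (by omega)]; split_ifs <;> simp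
  rw [qrSign, qrSign, χ₄_nat_eq_neg_of_modEq hq hq', jacobiSym.neg _ hQ'odd,
    jacobiSym_eq_of_isUnit_of_modEq hχ₄q hQ hQ', ← jacobiSym.at_neg_one hQ'odd,
    jacobiSym_eq_of_isUnit_of_modEq isUnit_one.neg hQ hQ', jacobiSym.at_neg_one hQ]

theorem mul_modEq_neg_of_modEq {P P' q q' : ℤ} (hq : Odd q) (hP' : P' ≡ P [ZMOD 4])
    (hq' : q' ≡ q + 2 [ZMOD 4]) : P' * q' ≡ -(P * q) [ZMOD 4] := by
  obtain ⟨a, ha⟩ := hP'.symm.dvd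
  obtain ⟨b, hb⟩ := hq'.symm.dvd
  obtain ⟨c, hc⟩ := hq
  exact Int.modEq_iff_dvd.mpr ⟨-(P * (c + 1) + P * b + a * q'), by
    linear_combination (-q') * ha - P * hb - 2 * P * hc⟩

theorem jacobiSym_mul_jacobiSym_of_det {j : ℕ} {ε : ℤ} (hε : IsUnit ε) {p P : ℤ} {q Q : ℕ}
    (hq : Odd q) (hQ : Odd Q) (hdet : p * Q - P * (2 ^ j * q) = ε) :
    jacobiSym p q * jacobiSym P Q
      = jacobiSym ε q * jacobiSym (-ε) Q * jacobiSym 2 Q ^ j * qrSign q Q := by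
  have hcop : IsCoprime (q : ℤ) Q :=
    ⟨-(ε * P * 2 ^ j), ε * p, by linear_combination ε * hdet + Int.isUnit_mul_self hε⟩
  have hmod_q : jacobiSym p q * jacobiSym Q q = jacobiSym ε q := by
    rw [← jacobiSym.mul_left]
    exact jacobiSym.mod_left'
      (Int.modEq_iff_dvd.mpr ⟨-(P * 2 ^ j), by linear_combination -hdet⟩ : p * Q ≡ ε [ZMOD q])
  have hmod_Q : jacobiSym P Q * jacobiSym 2 Q ^ j * jacobiSym q Q = jacobiSym (-ε) Q := by
    rw [← jacobiSym.pow_left, ← jacobiSym.mul_left, ← jacobiSym.mul_left]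
    exact jacobiSym.mod_left'
      (Int.modEq_iff_dvd.mpr ⟨-p, by linear_combination hdet⟩ : P * 2 ^ j * q ≡ -ε [ZMOD Q])
  have hsq : jacobiSym q Q ^ 2 = 1 := jacobiSym.sq_one (Int.isCoprime_iff_gcd_eq_one.mp hcop)
  have hsq₂ : jacobiSym 2 Q ^ 2 = 1 :=
    jacobiSym.sq_one (Int.gcd_natCast_natCast 2 Q ▸ Nat.coprime_two_left.mpr hQ)
  calc jacobiSym p q * jacobiSym P Q
      = jacobiSym p q * jacobiSym P Q * (jacobiSym 2 Q ^ j) ^ 2 * qrSign q Q ^ 2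
        * jacobiSym q Q ^ 2 := by
        rw [← pow_mul, mul_comm j, pow_mul, hsq₂, qrSign.sq_eq_one hq hQ, hsq]; ring
    _ = jacobiSym ε q * jacobiSym (-ε) Q * jacobiSym 2 Q ^ j * qrSign q Q := by
        rw [← hmod_q, ← hmod_Q, jacobiSym.quadratic_reciprocity' hQ hq]; ring

theorem kron_mul_jacobiSym_of_det {j : ℕ} {ε : ℤ} (hε : IsUnit ε) {p P : ℤ} {q Q : ℕ}
    (hq : Odd q) (hQ : Odd Q) (hdet : p * Q - P * (2 ^ j * q) = ε) :
    kron p (2 ^ j * q) * jacobiSym P Q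
      = χ₈ (p * Q : ℤ) ^ j * (jacobiSym ε q * jacobiSym (-ε) Q * qrSign q Q) := by
  rw [kron_two_pow_mul_s4 p j hq, mul_assoc, jacobiSym_mul_jacobiSym_of_det hε hq hQ hdet,
    jacobiSym.at_two hQ, Int.cast_mul, map_mul, Int.cast_natCast]
  ring

theorem kron_eq_neg_of_det {j : ℕ} (hj : 1 ≤ j) {ε : ℤ} (hε : IsUnit ε)
    {p P p₂ P₂ : ℤ} {q Q q₂ Q₂ : ℕ} (hq : Odd q) (hp : p ≡ 3 [ZMOD 4])
    (hdet : p * Q - P * (2 ^ j * q) = ε) (hdet₂ : p₂ * Q₂ - P₂ * (2 ^ j * q₂) = ε)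
    (hP : P₂ ≡ P [ZMOD 4]) (hQ₂ : (Q₂ : ℤ) ≡ Q [ZMOD 4]) (hq₂ : (q₂ : ℤ) ≡ q + 2 [ZMOD 4])
    (hJ : jacobiSym P₂ Q₂ = jacobiSym P Q) :
    kron p₂ (2 ^ j * q₂) = -kron p (2 ^ j * q) := by
  have hQ : Odd Q := (Int.odd_coe_nat Q).mp (odd_of_det hj hε hdet)
  have hQ₂odd : Odd Q₂ := (Int.odd_coe_nat Q₂).mp (odd_of_det hj hε hdet₂)
  have hq₂odd : Odd q₂ := by rw [Nat.odd_iff] at hq ⊢; rw [Int.ModEq] at hq₂; omega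
  have hpQ : p * Q = ε + 2 ^ j * (P * q) := by linear_combination hdet
  have hχ₄ : χ₄ Q = -χ₄ (p * Q : ℤ) := by
    rw [Int.cast_mul, map_mul, χ₄_int_three_mod_four hp, Int.cast_natCast]; ring
  have hJ0 : jacobiSym P Q ≠ 0 := jacobiSym.ne_zero (Int.isCoprime_iff_gcd_eq_one.mp
    ⟨-(ε * 2 ^ j * q), ε * p, by linear_combination ε * hdet + Int.isUnit_mul_self hε⟩)
  refine mul_right_cancel₀ hJ0 ?_
  calc kron p₂ (2 ^ j * q₂) * jacobiSym P Q
      = χ₈ (ε + 2 ^ j * (P₂ * q₂) : ℤ) ^ j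
          * (ε * jacobiSym ε q * jacobiSym (-ε) Q * (χ₄ Q * qrSign q Q)) := by
        rw [← hJ, kron_mul_jacobiSym_of_det hε hq₂odd hQ₂odd hdet₂,
          jacobiSym_eq_mul_of_modEq hε hq hq₂, qrSign_eq_mul_of_modEq hq hQ hq₂ hQ₂,
          jacobiSym_eq_of_isUnit_of_modEq hε.neg hQ hQ₂,
          show p₂ * Q₂ = ε + 2 ^ j * (P₂ * q₂) by linear_combination hdet₂]
    _ = -kron p (2 ^ j * q) * jacobiSym P Q := by
        rw [neg_mul, kron_mul_jacobiSym_of_det hε hq hQ hdet, hχ₄, hpQ,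
          ← χ₈_pow_mul_χ₄_of_modEq hε hj (mul_modEq_neg_of_modEq (Int.odd_coe_nat q |>.mpr hq)
            hP hq₂)]
        ring

theorem kron_toNat_eq_neg_of_det {j : ℕ} (hj : 1 ≤ j) {ε : ℤ} (hε : IsUnit ε)
    {p P p₂ P₂ q Q q₂ Q₂ : ℤ} (hq : Odd q) (hq₀ : 0 ≤ q) (hQ₀ : 0 ≤ Q) (hq₂₀ : 0 ≤ q₂)
    (hQ₂₀ : 0 ≤ Q₂) (hp : p ≡ 3 [ZMOD 4])
    (hdet : p * Q - P * (2 ^ j * q) = ε) (hdet₂ : p₂ * Q₂ - P₂ * (2 ^ j * q₂) = ε)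
    (hP : P₂ ≡ P [ZMOD 4]) (hQ₂ : Q₂ ≡ Q [ZMOD 4]) (hq₂ : q₂ ≡ q + 2 [ZMOD 4])
    (hJ : jacobiSym P₂ Q₂.toNat = jacobiSym P Q.toNat) :
    kron p₂ (2 ^ j * q₂).toNat = -kron p (2 ^ j * q).toNat := by
  lift q to ℕ using hq₀
  lift Q to ℕ using hQ₀
  lift q₂ to ℕ using hq₂₀
  lift Q₂ to ℕ using hQ₂₀
  simp only [Int.toNat_natCast] at hJ
  exact_mod_cast kron_eq_neg_of_det hj hε ((Int.odd_coe_nat q).mp hq) hp hdet hdet₂ hP hQ₂ hq₂ hJ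

theorem kronecker_step_f_eq_e_sub_one_general
    (a s t : ℤ → ℤ) (l : ℕ)
    (ha_pos : ∀ k : ℤ, 0 ≤ k → 0 < a k)
    (ha_per : ∀ k : ℤ, 0 ≤ k → a (k + l) = a k)
    (hs_neg : s (-1) = 1) (ht_neg : t (-1) = 0)
    (hs_zero : s 0 = a 0) (ht_zero : t 0 = 1)
    (hs_rec : ∀ k : ℤ, 1 ≤ k → s k = a k * s (k - 1) + s (k - 2))
    (ht_rec : ∀ k : ℤ, 1 ≤ k → t k = a k * t (k - 1) + t (k - 2))
    (L : ℕ) (hL_pos : 0 < L) (hL_even : Even L) (hL_mul : l ∣ L)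
    (hD : s ((L : ℤ) - 1) ≡ 1 [ZMOD 4] ∧ s ((L : ℤ) - 2) ≡ 0 [ZMOD 4] ∧
          t ((L : ℤ) - 1) ≡ 0 [ZMOD 4] ∧ t ((L : ℤ) - 2) ≡ 1 [ZMOD 4])
    (hJper : ∀ k : ℤ, 0 ≤ k → Odd (t k) →
      jacobiSym (s (k + L)) (t (k + L)).toNat = jacobiSym (s k) (t k).toNat)
    (m : ℕ) (hm : 2 ≤ m) (x y u v : ℤ)
    (hDU : s ((L : ℤ) - 1) = 1 + 2 ^ m * x ∧ s ((L : ℤ) - 2) = 2 ^ m * y ∧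
           t ((L : ℤ) - 1) = 2 ^ m * u ∧ t ((L : ℤ) - 2) = 1 + 2 ^ m * v)
    (e : ℕ) (u' : ℤ) (hu : u = 2 ^ e * u') (hu'_odd : Odd u')
    (k : ℤ) (hk : 0 ≤ k) (hsk : s k ≡ 3 [ZMOD 4])
    (t' : ℤ) (ht'_odd : Odd t') (htk : t k = 2 ^ (m + e - 1) * t') :
    ∃ t'' : ℤ, Odd t'' ∧ t'' ≡ t' + 2 [ZMOD 4] ∧ t (k + L) = 2 ^ (m + e - 1) * t'' ∧
      kron (s (k + L)) (t (k + L)).toNat = -kron (s k) (t k).toNat := by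
  have hc : Convergents a s t := ⟨hs_rec, ht_rec, hs_neg, ht_neg, hs_zero, ht_zero⟩
  have hL : (1 : ℤ) ≤ L := by omega
  have haL := add_period_of_dvd ha_per hL_mul
  have hmod n hn := hc.add_period_modEq hL haL hD n hn
  have ht_pos n hn := hc.den_pos (fun i hi => ha_pos i (by omega)) n hn
  lift k to ℕ using hk
  have hsk_odd : Odd (s k) := Int.odd_iff.mpr (by rw [Int.ModEq] at hsk; omega)
  obtain ⟨t'', ht''4, htkL⟩ := exists_odd_part_of_shift (t₁ := t (k + L)) (v := v) hm hsk_odd hu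
    hu'_odd htk (by rw [hc.add_period hc.rec_den hL haL k (by omega), hDU.2.2.1, hDU.2.2.2])
  have ht''_odd : Odd t'' := by
    rw [Int.odd_iff] at ht'_odd ⊢; rw [Int.ModEq] at ht''4; omega
  refine ⟨t'', ht''_odd, ht''4, htkL, ?_⟩
  have hdet := hc.det k
  have hdet₂ := hc.det (k + L)
  rw [htk] at hdet
  rw [Nat.cast_add, add_right_comm (k : ℤ), htkL, pow_add, hL_even.neg_one_pow, mul_one] at hdet₂
  have hJ := hJper (k + 1) (by positivity) (odd_of_det (by omega) (isUnit_neg_one.pow k).neg hdet)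
  rw [htk, htkL]
  exact kron_toNat_eq_neg_of_det (by omega) (isUnit_neg_one.pow k).neg ht'_odd
    (pos_of_mul_pos_right (htk ▸ ht_pos k (by omega)) (by positivity)).le
    (ht_pos _ (by positivity)).le
    (pos_of_mul_pos_right (htkL ▸ ht_pos _ (by omega)) (by positivity)).le
    (ht_pos _ (by positivity)).le hsk hdet hdet₂ (hmod _ (by positivity)).1
    (hmod _ (by positivity)).2 ht''4 hJ

/-- Lemma 1, second case: if `s k ≡ 3 (mod 4)` and `t k = 2^(m+e-1) t'` with `t'` odd,
then `t (k+L) = 2^(m+e-1) t''` with `t''` odd, `t'' ≡ t' + 2 (mod 4)`, and the Kronecker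
symbol changes sign from `k` to `k + L`. -/
theorem kronecker_step_f_eq_e_sub_one
    (a s t : ℤ → ℤ) (l : ℕ) (hl : 1 ≤ l)
    (ha_pos : ∀ k : ℤ, 0 ≤ k → 0 < a k)
    (ha_per : ∀ k : ℤ, 0 ≤ k → a (k + l) = a k)
    (hs_neg : s (-1) = 1) (ht_neg : t (-1) = 0)
    (hs_zero : s 0 = a 0) (ht_zero : t 0 = 1)
    (hs_rec : ∀ k : ℤ, 1 ≤ k → s k = a k * s (k - 1) + s (k - 2))
    (ht_rec : ∀ k : ℤ, 1 ≤ k → t k = a k * t (k - 1) + t (k - 2))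
    (L : ℕ) (hL_pos : 0 < L) (hL_even : Even L) (hL_mul : l ∣ L)
    (hD : s ((L : ℤ) - 1) ≡ 1 [ZMOD 4] ∧ s ((L : ℤ) - 2) ≡ 0 [ZMOD 4] ∧
          t ((L : ℤ) - 1) ≡ 0 [ZMOD 4] ∧ t ((L : ℤ) - 2) ≡ 1 [ZMOD 4])
    (hJpar : ∀ k : ℤ, 0 ≤ k → t (k + L) ≡ t k [ZMOD 2])
    (hJper : ∀ k : ℤ, 0 ≤ k → Odd (t k) →
      jacobiSym (s (k + L)) (t (k + L)).toNat = jacobiSym (s k) (t k).toNat)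
    (m : ℕ) (hm : 2 ≤ m) (x y u v : ℤ)
    (hDU : s ((L : ℤ) - 1) = 1 + 2 ^ m * x ∧ s ((L : ℤ) - 2) = 2 ^ m * y ∧
           t ((L : ℤ) - 1) = 2 ^ m * u ∧ t ((L : ℤ) - 2) = 1 + 2 ^ m * v)
    (hUodd : Odd x ∨ Odd y ∨ Odd u ∨ Odd v)
    (e : ℕ) (u' : ℤ) (hu_ne : u ≠ 0) (hu : u = 2 ^ e * u') (hu'_odd : Odd u')
    (k : ℤ) (hk : 0 ≤ k) (hsk : s k ≡ 3 [ZMOD 4])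
    (t' : ℤ) (ht'_odd : Odd t') (htk : t k = 2 ^ (m + e - 1) * t') :
    ∃ t'' : ℤ, Odd t'' ∧ t'' ≡ t' + 2 [ZMOD 4] ∧ t (k + L) = 2 ^ (m + e - 1) * t'' ∧
      kron (s (k + L)) (t (k + L)).toNat = -kron (s k) (t k).toNat :=
  kronecker_step_f_eq_e_sub_one_general a s t l ha_pos ha_per hs_neg ht_neg hs_zero ht_zero hs_rec
    ht_rec L hL_pos hL_even hL_mul hD hJper m hm x y u v hDU e u' hu hu'_odd k hk hsk t' ht'_odd htk
end

section
/- Let k ≤ L−1 be an index with s_k ≡ 3 (mod 4) and t_k = 2^{m+e} t' where t' is odd. Then t_{k+L} is divisible by 2^{m+e+1}; consequently, the convergent s_{k+L}/t_{k+L} is critical with respect to 2L (i.e., k+L ≤ 2L−1, s_{k+L} ≡ 3 (mod 4), and 2^{(m+1)+e} divides t_{k+L}). -/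
lemma per_mul_aux (a : ℤ → ℤ) (l : ℕ)
    (ha_per : ∀ k : ℤ, 0 ≤ k → a (k + l) = a k) :
    ∀ (c : ℕ) (k : ℤ), 0 ≤ k → a (k + (l : ℤ) * c) = a k := by
  intro c
  induction c with
  | zero => intro k hk; simp
  | succ c ih =>
    intro k hk
    have h1 : k + (l : ℤ) * (c + 1) = (k + (l : ℤ) * c) + l := by push_cast; ring
    have h2 : (0 : ℤ) ≤ k + (l : ℤ) * c := by positivity
    rw [show ((c + 1 : ℕ) : ℤ) = (c : ℤ) + 1 from by push_cast; ring] at *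
    rw [h1, ha_per _ h2, ih k hk]

lemma shift_id (a s t : ℤ → ℤ) (L : ℕ) (hL1 : 1 ≤ (L : ℤ))
    (haL : ∀ k : ℤ, 0 ≤ k → a (k + L) = a k)
    (hs_neg : s (-1) = 1) (ht_neg : t (-1) = 0)
    (hs_zero : s 0 = a 0) (ht_zero : t 0 = 1)
    (hs_rec : ∀ k : ℤ, 1 ≤ k → s k = a k * s (k - 1) + s (k - 2))
    (ht_rec : ∀ k : ℤ, 1 ≤ k → t k = a k * t (k - 1) + t (k - 2)) :
    ∀ n : ℕ,
      (s ((n : ℤ) - 1 + L) = s ((L : ℤ) - 1) * s ((n : ℤ) - 1) + s ((L : ℤ) - 2) * t ((n : ℤ) - 1) ∧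
       t ((n : ℤ) - 1 + L) = t ((L : ℤ) - 1) * s ((n : ℤ) - 1) + t ((L : ℤ) - 2) * t ((n : ℤ) - 1)) ∧
      (s ((n : ℤ) + L) = s ((L : ℤ) - 1) * s n + s ((L : ℤ) - 2) * t n ∧
       t ((n : ℤ) + L) = t ((L : ℤ) - 1) * s n + t ((L : ℤ) - 2) * t n) := by
  intro n
  induction n with
  | zero =>
    constructor
    · rw [show ((0 : ℕ) : ℤ) - 1 + L = (L : ℤ) - 1 from by push_cast; ring,
        show ((0 : ℕ) : ℤ) - 1 = (-1 : ℤ) from by norm_num, hs_neg, ht_neg]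
      constructor <;> ring
    · have ha0 : a ((L : ℤ)) = a 0 := by
        have := haL 0 le_rfl
        rwa [zero_add] at this
      have hsr := hs_rec (L : ℤ) hL1
      have htr := ht_rec (L : ℤ) hL1
      rw [ha0, ← hs_zero] at hsr
      rw [ha0, ← hs_zero] at htr
      rw [show ((0 : ℕ) : ℤ) + L = (L : ℤ) from by push_cast; ring,
        show ((0 : ℕ) : ℤ) = (0 : ℤ) from by norm_num, hsr, htr, ht_zero]
      constructor <;> ring
  | succ n ih =>
    have hc : ((n + 1 : ℕ) : ℤ) = (n : ℤ) + 1 := by push_cast; ring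
    constructor
    · rw [hc, show (n : ℤ) + 1 - 1 = (n : ℤ) from by ring]
      exact ih.2
    · have hnn : (0 : ℤ) ≤ (n : ℤ) + 1 := by positivity
      have hk1 : (1 : ℤ) ≤ (n : ℤ) + 1 := by omega
      have hrecS := hs_rec ((n : ℤ) + 1 + L) (by omega)
      have hrecT := ht_rec ((n : ℤ) + 1 + L) (by omega)
      have e1 : (n : ℤ) + 1 + L - 1 = (n : ℤ) + L := by ring
      have e2 : (n : ℤ) + 1 + L - 2 = (n : ℤ) - 1 + L := by ring
      have ha := haL ((n : ℤ) + 1) hnn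
      rw [e1, e2, ha] at hrecS hrecT
      have hsr := hs_rec ((n : ℤ) + 1) hk1
      have htr := ht_rec ((n : ℤ) + 1) hk1
      rw [show (n : ℤ) + 1 - 1 = (n : ℤ) from by ring,
        show (n : ℤ) + 1 - 2 = (n : ℤ) - 1 from by ring] at hsr htr
      rw [hc, hrecS, hrecT, hsr, htr, ih.2.1, ih.2.2, ih.1.1, ih.1.2]
      constructor <;> ring

/-- If `k ≤ L - 1`, `s k ≡ 3 (mod 4)` and `t k = 2^(m+e) t'` with `t'` odd, then
`2^(m+e+1)` divides `t (k+L)`; consequently `s (k+L) / t (k+L)` is critical with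
respect to `2L`. -/
theorem critical_step_to_two_L
    (a s t : ℤ → ℤ) (l : ℕ) (hl : 1 ≤ l)
    (ha_pos : ∀ k : ℤ, 0 ≤ k → 0 < a k)
    (ha_per : ∀ k : ℤ, 0 ≤ k → a (k + l) = a k)
    (hs_neg : s (-1) = 1) (ht_neg : t (-1) = 0)
    (hs_zero : s 0 = a 0) (ht_zero : t 0 = 1)
    (hs_rec : ∀ k : ℤ, 1 ≤ k → s k = a k * s (k - 1) + s (k - 2))
    (ht_rec : ∀ k : ℤ, 1 ≤ k → t k = a k * t (k - 1) + t (k - 2))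
    (L : ℕ) (hL_pos : 0 < L) (hL_even : Even L) (hL_mul : l ∣ L)
    (hD : s ((L : ℤ) - 1) ≡ 1 [ZMOD 4] ∧ s ((L : ℤ) - 2) ≡ 0 [ZMOD 4] ∧
          t ((L : ℤ) - 1) ≡ 0 [ZMOD 4] ∧ t ((L : ℤ) - 2) ≡ 1 [ZMOD 4])
    (hJpar : ∀ k : ℤ, 0 ≤ k → t (k + L) ≡ t k [ZMOD 2])
    (hJper : ∀ k : ℤ, 0 ≤ k → Odd (t k) →
      jacobiSym (s (k + L)) (t (k + L)).toNat = jacobiSym (s k) (t k).toNat)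
    (m : ℕ) (hm : 2 ≤ m) (x y u v : ℤ)
    (hDU : s ((L : ℤ) - 1) = 1 + 2 ^ m * x ∧ s ((L : ℤ) - 2) = 2 ^ m * y ∧
           t ((L : ℤ) - 1) = 2 ^ m * u ∧ t ((L : ℤ) - 2) = 1 + 2 ^ m * v)
    (hUodd : Odd x ∨ Odd y ∨ Odd u ∨ Odd v)
    (e : ℕ) (u' : ℤ) (hu_ne : u ≠ 0) (hu : u = 2 ^ e * u') (hu'_odd : Odd u')
    (k : ℤ) (hk0 : 0 ≤ k) (hkL : k ≤ (L : ℤ) - 1) (hsk : s k ≡ 3 [ZMOD 4])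
    (t' : ℤ) (ht'_odd : Odd t') (htk : t k = 2 ^ (m + e) * t') :
    (2 ^ (m + e + 1) : ℤ) ∣ t (k + L) ∧
    k + L ≤ 2 * (L : ℤ) - 1 ∧ s (k + L) ≡ 3 [ZMOD 4] ∧
    (2 ^ ((m + 1) + e) : ℤ) ∣ t (k + L) := by
  -- periodicity of a with period L
  have haL : ∀ j : ℤ, 0 ≤ j → a (j + L) = a j := by
    obtain ⟨c, hc⟩ := hL_mul
    intro j hj
    have : ((L : ℕ) : ℤ) = (l : ℤ) * c := by rw [hc]; push_cast; ring
    rw [this]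
    exact per_mul_aux a l ha_per c j hj
  have hL1 : (1 : ℤ) ≤ (L : ℤ) := by exact_mod_cast hL_pos
  -- the shift identity at k
  have hkk : ((k.toNat : ℕ) : ℤ) = k := Int.toNat_of_nonneg hk0
  have hid := (shift_id a s t L hL1 haL hs_neg ht_neg hs_zero ht_zero hs_rec ht_rec k.toNat).2
  rw [hkk] at hid
  obtain ⟨hidS, hidT⟩ := hid
  obtain ⟨hs1, hs2, ht1, ht2⟩ := hDU
  -- key expression for t (k + L)
  have hts : t (k + L) = 2 ^ (m + e) * (u' * s k + t' + 2 ^ m * (v * t')) := by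
    rw [hidT, ht1, ht2, hu, htk]; ring
  -- parity facts
  have h2 : (2 : ℤ) ∣ u' * s k + t' + 2 ^ m * (v * t') := by
    obtain ⟨c, hc⟩ := hu'_odd
    obtain ⟨w, hw⟩ : (2 : ℤ) ∣ 2 ^ m * (v * t') :=
      Dvd.dvd.mul_right (dvd_pow_self 2 (by omega : m ≠ 0)) _
    obtain ⟨z, hz⟩ : (2 : ℤ) ∣ s k + t' := by
      obtain ⟨q, hq⟩ := hsk.dvd
      obtain ⟨d, hd⟩ := ht'_odd
      omega
    exact ⟨c * s k + z + w, by linear_combination s k * hc + hz + hw⟩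
  obtain ⟨W, hW⟩ := h2
  have hdvd : (2 ^ (m + e + 1) : ℤ) ∣ t (k + L) :=
    ⟨W, by rw [hts, hW]; ring⟩
  refine ⟨hdvd, by omega, ?_, by rw [show (m + 1) + e = m + e + 1 from by ring]; exact hdvd⟩
  -- s (k + L) ≡ s k ≡ 3 [ZMOD 4]
  have h4 : (4 : ℤ) ∣ 2 ^ m * (x * s k + y * t k) := by
    refine dvd_mul_of_dvd_left ?_ _
    have := pow_dvd_pow (2 : ℤ) hm
    simpa [show ((2:ℤ)^2 = 4) from by norm_num] using this
  have hdiff : s k - s (k + L) = -(2 ^ m * (x * s k + y * t k)) := by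
    rw [hidS, hs1, hs2]; ring
  have hcong : s (k + L) ≡ s k [ZMOD 4] :=
    Int.modEq_iff_dvd.2 (by rw [hdiff]; exact dvd_neg.2 h4)
  exact hcong.trans hsk
end

section
/- Let k ≤ L−1 be an index with s_k ≡ 3 (mod 4) and t_k = 2^{m+e} t' where t' is odd. Then for every integer d ≥ 1 the Kronecker symbols satisfy (s_{k+2dL}/t_{k+2dL}) = (−1)^d (s_k/t_k). -/
private lemma kron_formula (S S₀ c τ δ : ℤ) (M : ℕ)
    (hδ : δ = 1 ∨ δ = -1) (hτ : 0 < τ) (hτo : Odd τ) (hc : 0 < c) (hco : Odd c)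
    (hdet : S * c - S₀ * (2 ^ M * τ) = δ) :
    jacobiSym S τ.toNat
      = jacobiSym δ τ.toNat * (-1) ^ (c.toNat / 2 * (τ.toNat / 2))
        * jacobiSym 2 c.toNat ^ M * jacobiSym (-δ) c.toNat * jacobiSym S₀ c.toNat := by
  have hτ' : (τ.toNat : ℤ) = τ := Int.toNat_of_nonneg hτ.le
  have hc' : (c.toNat : ℤ) = c := Int.toNat_of_nonneg hc.le
  have hδδ : δ * δ = 1 := by rcases hδ with h | h <;> rw [h] <;> ring
  have hτno : Odd τ.toNat := by rcases hτo with ⟨r, hr⟩; exact ⟨r.toNat, by omega⟩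
  have hcno : Odd c.toNat := by rcases hco with ⟨r, hr⟩; exact ⟨r.toNat, by omega⟩
  have hgcτ : Int.gcd c τ.toNat = 1 := by
    rw [← Int.isCoprime_iff_gcd_eq_one, hτ']
    exact ⟨δ * S, -(δ * S₀ * 2 ^ M), by linear_combination δ * hdet + hδδ⟩
  have hgS₀c : Int.gcd S₀ c.toNat = 1 := by
    rw [← Int.isCoprime_iff_gcd_eq_one, hc']
    exact ⟨-(δ * (2 ^ M * τ)), δ * S, by linear_combination δ * hdet + hδδ⟩
  have h2c : Int.gcd 2 c.toNat = 1 := by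
    have h := Nat.coprime_two_left.mpr hcno
    rw [show (2 : ℤ) = ((2 : ℕ) : ℤ) from rfl, Int.gcd_natCast_natCast]
    exact h
  have e1 : jacobiSym S τ.toNat * jacobiSym c τ.toNat = jacobiSym δ τ.toNat := by
    rw [← jacobiSym.mul_left]
    apply jacobiSym.mod_left'
    have : S * c ≡ δ [ZMOD (τ.toNat : ℤ)] := by
      rw [hτ']
      exact (Int.modEq_iff_dvd.mpr ⟨S₀ * 2 ^ M, by linear_combination hdet⟩).symm
    exact this
  have hsqc : jacobiSym c τ.toNat * jacobiSym c τ.toNat = 1 := by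
    have := jacobiSym.sq_one hgcτ; rwa [sq] at this
  have e2 : jacobiSym S τ.toNat = jacobiSym δ τ.toNat * jacobiSym c τ.toNat := by
    linear_combination jacobiSym c τ.toNat * e1 - jacobiSym S τ.toNat * hsqc
  have e3 : jacobiSym c τ.toNat
      = (-1) ^ (c.toNat / 2 * (τ.toNat / 2)) * jacobiSym τ c.toNat := by
    have h := jacobiSym.quadratic_reciprocity hcno hτno
    rwa [hc', hτ'] at h
  have e4 : jacobiSym S₀ c.toNat * (jacobiSym 2 c.toNat ^ M * jacobiSym τ c.toNat)
      = jacobiSym (-δ) c.toNat := by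
    rw [← jacobiSym.pow_left, ← jacobiSym.mul_left, ← jacobiSym.mul_left]
    apply jacobiSym.mod_left'
    have : S₀ * (2 ^ M * τ) ≡ -δ [ZMOD (c.toNat : ℤ)] := by
      rw [hc']
      exact (Int.modEq_iff_dvd.mpr ⟨S, by linear_combination -hdet⟩).symm
    exact this
  have hsqS₀ : jacobiSym S₀ c.toNat * jacobiSym S₀ c.toNat = 1 := by
    have := jacobiSym.sq_one hgS₀c; rwa [sq] at this
  have hsq2 : jacobiSym 2 c.toNat * jacobiSym 2 c.toNat = 1 := by
    have := jacobiSym.sq_one h2c; rwa [sq] at this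
  have hsq2M : jacobiSym 2 c.toNat ^ M * jacobiSym 2 c.toNat ^ M = 1 := by
    rw [← mul_pow, hsq2, one_pow]
  have e5 : jacobiSym τ c.toNat
      = jacobiSym 2 c.toNat ^ M * jacobiSym (-δ) c.toNat * jacobiSym S₀ c.toNat := by
    linear_combination (jacobiSym 2 c.toNat ^ M * jacobiSym S₀ c.toNat) * e4
      - (jacobiSym τ c.toNat * (jacobiSym 2 c.toNat ^ M * jacobiSym 2 c.toNat ^ M)) * hsqS₀
      - jacobiSym τ c.toNat * hsq2M
  rw [e2, e3, e5]; ring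

private lemma kron_flip (δ c₁ c₂ τ₁ τ₂ : ℤ) (M : ℕ)
    (hδ : δ = 1 ∨ δ = -1)
    (hc₁ : 0 < c₁) (hc₂ : 0 < c₂) (hoc₁ : Odd c₁)
    (hτ₁ : 0 < τ₁) (hτ₂ : 0 < τ₂) (hoτ₁ : Odd τ₁)
    (hcc : c₂ % 8 = c₁ % 8) (hττ : τ₂ % 4 = (τ₁ + 2) % 4) (hcδ : c₁ % 4 = (-δ) % 4) :
    jacobiSym δ τ₂.toNat * (-1) ^ (c₂.toNat / 2 * (τ₂.toNat / 2))
        * jacobiSym 2 c₂.toNat ^ M * jacobiSym (-δ) c₂.toNat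
      = -(jacobiSym δ τ₁.toNat * (-1) ^ (c₁.toNat / 2 * (τ₁.toNat / 2))
        * jacobiSym 2 c₁.toNat ^ M * jacobiSym (-δ) c₁.toNat) := by
  have hoc₁' : c₁ % 2 = 1 := Int.odd_iff.mp hoc₁
  have hoτ₁' : τ₁ % 2 = 1 := Int.odd_iff.mp hoτ₁
  have hc₁n : Odd c₁.toNat := by rw [Nat.odd_iff]; omega
  have hc₂n : Odd c₂.toNat := by rw [Nat.odd_iff]; omega
  have hτ₁n : Odd τ₁.toNat := by rw [Nat.odd_iff]; omega
  have hτ₂n : Odd τ₂.toNat := by rw [Nat.odd_iff]; omega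
  have hz : jacobiSym 2 c₂.toNat = jacobiSym 2 c₁.toNat := by
    rw [jacobiSym.at_two hc₂n, jacobiSym.at_two hc₁n, ZMod.χ₈_nat_mod_eight,
      ZMod.χ₈_nat_mod_eight c₁.toNat, show c₂.toNat % 8 = c₁.toNat % 8 by omega]
  rw [hz]
  rcases hδ with rfl | rfl
  · -- δ = 1
    have h3 : c₁.toNat % 4 = 3 := by omega
    have h3' : c₂.toNat % 4 = 3 := by omega
    have hJ1 : jacobiSym (-1) c₁.toNat = -1 := by
      rw [jacobiSym.at_neg_one hc₁n, ZMod.χ₄_nat_three_mod_four h3]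
    have hJ2 : jacobiSym (-1) c₂.toNat = -1 := by
      rw [jacobiSym.at_neg_one hc₂n, ZMod.χ₄_nat_three_mod_four h3']
    have e1 : Odd (c₁.toNat / 2) := by rw [Nat.odd_iff]; omega
    have e2 : Odd (c₂.toNat / 2) := by rw [Nat.odd_iff]; omega
    rw [jacobiSym.one_left, jacobiSym.one_left, hJ1, hJ2]
    rcases (by omega : τ₁.toNat % 4 = 1 ∨ τ₁.toNat % 4 = 3) with h | h
    · have p1 : Even (c₁.toNat / 2 * (τ₁.toNat / 2)) :=
        Nat.even_mul.mpr (Or.inr (by rw [Nat.even_iff]; omega))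
      have p2 : Odd (c₂.toNat / 2 * (τ₂.toNat / 2)) :=
        Nat.odd_mul.mpr ⟨e2, by rw [Nat.odd_iff]; omega⟩
      rw [Even.neg_one_pow p1, Odd.neg_one_pow p2]; ring
    · have p1 : Odd (c₁.toNat / 2 * (τ₁.toNat / 2)) :=
        Nat.odd_mul.mpr ⟨e1, by rw [Nat.odd_iff]; omega⟩
      have p2 : Even (c₂.toNat / 2 * (τ₂.toNat / 2)) :=
        Nat.even_mul.mpr (Or.inr (by rw [Nat.even_iff]; omega))
      rw [Odd.neg_one_pow p1, Even.neg_one_pow p2]; ring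
  · -- δ = -1
    have h1 : c₁.toNat % 4 = 1 := by omega
    have h1' : c₂.toNat % 4 = 1 := by omega
    have e1 : Even (c₁.toNat / 2) := by rw [Nat.even_iff]; omega
    have e2 : Even (c₂.toNat / 2) := by rw [Nat.even_iff]; omega
    have p1 : Even (c₁.toNat / 2 * (τ₁.toNat / 2)) := Nat.even_mul.mpr (Or.inl e1)
    have p2 : Even (c₂.toNat / 2 * (τ₂.toNat / 2)) := Nat.even_mul.mpr (Or.inl e2)
    rw [Even.neg_one_pow p1, Even.neg_one_pow p2, neg_neg, jacobiSym.one_left, jacobiSym.one_left]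
    rcases (by omega : τ₁.toNat % 4 = 1 ∨ τ₁.toNat % 4 = 3) with h | h
    · have hJ1 : jacobiSym (-1) τ₁.toNat = 1 := by
        rw [jacobiSym.at_neg_one hτ₁n, ZMod.χ₄_nat_one_mod_four h]
      have hJ2 : jacobiSym (-1) τ₂.toNat = -1 := by
        rw [jacobiSym.at_neg_one hτ₂n, ZMod.χ₄_nat_three_mod_four (by omega)]
      rw [hJ1, hJ2]; ring
    · have hJ1 : jacobiSym (-1) τ₁.toNat = -1 := by
        rw [jacobiSym.at_neg_one hτ₁n, ZMod.χ₄_nat_three_mod_four h]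
      have hJ2 : jacobiSym (-1) τ₂.toNat = 1 := by
        rw [jacobiSym.at_neg_one hτ₂n, ZMod.χ₄_nat_one_mod_four (by omega)]
      rw [hJ1, hJ2]; ring

set_option maxHeartbeats 2000000 in
/-- If `k ≤ L - 1`, `s k ≡ 3 (mod 4)` and `t k = 2^(m+e) t'` with `t'` odd, then for
every `d ≥ 1` the Kronecker symbols satisfy `(s (k+2dL) / t (k+2dL)) = (-1)^d (s k / t k)`. -/
theorem kronecker_sign_flip_along_two_L
    (a s t : ℤ → ℤ) (l : ℕ) (hl : 1 ≤ l)
    (ha_pos : ∀ k : ℤ, 0 ≤ k → 0 < a k)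
    (ha_per : ∀ k : ℤ, 0 ≤ k → a (k + l) = a k)
    (hs_neg : s (-1) = 1) (ht_neg : t (-1) = 0)
    (hs_zero : s 0 = a 0) (ht_zero : t 0 = 1)
    (hs_rec : ∀ k : ℤ, 1 ≤ k → s k = a k * s (k - 1) + s (k - 2))
    (ht_rec : ∀ k : ℤ, 1 ≤ k → t k = a k * t (k - 1) + t (k - 2))
    (L : ℕ) (hL_pos : 0 < L) (hL_even : Even L) (hL_mul : l ∣ L)
    (hD : s ((L : ℤ) - 1) ≡ 1 [ZMOD 4] ∧ s ((L : ℤ) - 2) ≡ 0 [ZMOD 4] ∧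
          t ((L : ℤ) - 1) ≡ 0 [ZMOD 4] ∧ t ((L : ℤ) - 2) ≡ 1 [ZMOD 4])
    (hJpar : ∀ k : ℤ, 0 ≤ k → t (k + L) ≡ t k [ZMOD 2])
    (hJper : ∀ k : ℤ, 0 ≤ k → Odd (t k) →
      jacobiSym (s (k + L)) (t (k + L)).toNat = jacobiSym (s k) (t k).toNat)
    (m : ℕ) (hm : 2 ≤ m) (x y u v : ℤ)
    (hDU : s ((L : ℤ) - 1) = 1 + 2 ^ m * x ∧ s ((L : ℤ) - 2) = 2 ^ m * y ∧
           t ((L : ℤ) - 1) = 2 ^ m * u ∧ t ((L : ℤ) - 2) = 1 + 2 ^ m * v)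
    (hUodd : Odd x ∨ Odd y ∨ Odd u ∨ Odd v)
    (e : ℕ) (u' : ℤ) (hu_ne : u ≠ 0) (hu : u = 2 ^ e * u') (hu'_odd : Odd u')
    (k : ℤ) (hk0 : 0 ≤ k) (hkL : k ≤ (L : ℤ) - 1) (hsk : s k ≡ 3 [ZMOD 4])
    (t' : ℤ) (ht'_odd : Odd t') (htk : t k = 2 ^ (m + e) * t') :
    ∀ d : ℕ, 1 ≤ d →
      kron (s (k + 2 * d * (L : ℤ))) (t (k + 2 * d * (L : ℤ))).toNat
        = (-1) ^ d * kron (s k) (t k).toNat := by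
  obtain ⟨hD1, hD2, hD3, hD4⟩ := hDU
  lift k to ℕ using hk0 with K hKk
  obtain ⟨p, rfl⟩ : ∃ p, m = p + 2 := ⟨m - 2, by omega⟩
  -- primed recurrences
  have hs_rec' : ∀ j : ℤ, 0 ≤ j → s (j + 1) = a (j + 1) * s j + s (j - 1) := by
    intro j hj
    have h := hs_rec (j + 1) (by omega)
    rw [show j + 1 - 1 = j by ring, show j + 1 - 2 = j - 1 by ring] at h
    exact h
  have ht_rec' : ∀ j : ℤ, 0 ≤ j → t (j + 1) = a (j + 1) * t j + t (j - 1) := by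
    intro j hj
    have h := ht_rec (j + 1) (by omega)
    rw [show j + 1 - 1 = j by ring, show j + 1 - 2 = j - 1 by ring] at h
    exact h
  -- positivity
  have pos : ∀ n : ℕ, 1 ≤ s n ∧ 1 ≤ t n ∧ 0 ≤ s ((n : ℤ) - 1) ∧ 0 ≤ t ((n : ℤ) - 1) := by
    intro n
    induction n with
    | zero =>
      refine ⟨?_, ?_, ?_, ?_⟩
      · rw [Nat.cast_zero, hs_zero]; exact ha_pos 0 le_rfl
      · rw [Nat.cast_zero, ht_zero]
      · rw [Nat.cast_zero, show (0 : ℤ) - 1 = -1 by ring, hs_neg]; norm_num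
      · rw [Nat.cast_zero, show (0 : ℤ) - 1 = -1 by ring, ht_neg]
    | succ n ih =>
      obtain ⟨ih1, ih2, ih3, ih4⟩ := ih
      have hc : ((n + 1 : ℕ) : ℤ) = (n : ℤ) + 1 := by push_cast; ring
      have ha := ha_pos ((n : ℤ) + 1) (by omega)
      have hs := hs_rec' n (by omega)
      have ht := ht_rec' n (by omega)
      refine ⟨?_, ?_, ?_, ?_⟩
      · rw [hc, hs]; nlinarith [mul_le_mul ha.le ih1 (by norm_num) (by linarith : (0:ℤ) ≤ a ((n:ℤ)+1))]
      · rw [hc, ht]; nlinarith [mul_le_mul ha.le ih2 (by norm_num) (by linarith : (0:ℤ) ≤ a ((n:ℤ)+1))]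
      · rw [hc, show (n : ℤ) + 1 - 1 = (n : ℤ) by ring]; omega
      · rw [hc, show (n : ℤ) + 1 - 1 = (n : ℤ) by ring]; omega
  have posZ : ∀ j : ℤ, 0 ≤ j → 1 ≤ s j ∧ 1 ≤ t j := by
    intro j hj
    lift j to ℕ using hj
    exact ⟨(pos j).1, (pos j).2.1⟩
  -- periodicity of a with period L
  have aper : ∀ j : ℤ, 0 ≤ j → a (j + L) = a j := by
    obtain ⟨c, hc⟩ := hL_mul
    have main : ∀ c : ℕ, ∀ j : ℤ, 0 ≤ j → a (j + (l * c : ℕ)) = a j := by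
      intro c
      induction c with
      | zero => intro j hj; norm_num
      | succ n ih =>
        intro j hj
        have h1 : ((l * (n + 1) : ℕ) : ℤ) = ((l * n : ℕ) : ℤ) + l := by push_cast; ring
        rw [h1, ← add_assoc, ha_per (j + (l * n : ℕ)) (by positivity), ih j hj]
    intro j hj
    rw [hc]
    exact main c j hj
  -- transfer over L
  have hL1 : (1 : ℤ) ≤ (L : ℤ) := by exact_mod_cast hL_pos
  have trans1 : ∀ n : ℕ,
      s ((n : ℤ) - 1 + L) = s ((L : ℤ) - 1) * s ((n : ℤ) - 1) + s ((L : ℤ) - 2) * t ((n : ℤ) - 1)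
      ∧ t ((n : ℤ) - 1 + L) =
          t ((L : ℤ) - 1) * s ((n : ℤ) - 1) + t ((L : ℤ) - 2) * t ((n : ℤ) - 1) := by
    intro n
    induction n using Nat.strong_induction_on with
    | _ n ih =>
      match n with
      | 0 =>
        rw [Nat.cast_zero, show (0 : ℤ) - 1 = -1 by ring, hs_neg, ht_neg,
          show (-1 : ℤ) + (L : ℤ) = (L : ℤ) - 1 by ring]
        constructor <;> ring
      | 1 =>
        rw [Nat.cast_one, show (1 : ℤ) - 1 = 0 by ring, zero_add, hs_zero, ht_zero]
        have hsL := hs_rec (L : ℤ) hL1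
        have htL := ht_rec (L : ℤ) hL1
        have haL : a (L : ℤ) = a 0 := by
          have := aper 0 le_rfl; rwa [zero_add] at this
        rw [hsL, htL, haL]
        constructor <;> ring
      | (n + 2) =>
        have IH1 := ih (n + 1) (by omega)
        have IH0 := ih n (by omega)
        rw [show (((n + 1 : ℕ)) : ℤ) - 1 = (n : ℤ) by push_cast; ring] at IH1
        rw [show (((n + 2 : ℕ)) : ℤ) - 1 = (n : ℤ) + 1 by push_cast; ring]
        have hrecS := hs_rec' ((n : ℤ) + (L : ℤ)) (by omega)
        have hrecT := ht_rec' ((n : ℤ) + (L : ℤ)) (by omega)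
        constructor
        · rw [show (n : ℤ) + 1 + (L : ℤ) = (n : ℤ) + (L : ℤ) + 1 by ring, hrecS,
            show (n : ℤ) + (L : ℤ) + 1 = ((n : ℤ) + 1) + (L : ℤ) by ring,
            aper ((n : ℤ) + 1) (by omega),
            show (n : ℤ) + (L : ℤ) - 1 = ((n : ℤ) - 1) + (L : ℤ) by ring,
            IH1.1, IH0.1, hs_rec' (n : ℤ) (by omega), ht_rec' (n : ℤ) (by omega)]
          ring
        · rw [show (n : ℤ) + 1 + (L : ℤ) = (n : ℤ) + (L : ℤ) + 1 by ring, hrecT,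
            show (n : ℤ) + (L : ℤ) + 1 = ((n : ℤ) + 1) + (L : ℤ) by ring,
            aper ((n : ℤ) + 1) (by omega),
            show (n : ℤ) + (L : ℤ) - 1 = ((n : ℤ) - 1) + (L : ℤ) by ring,
            IH1.2, IH0.2, hs_rec' (n : ℤ) (by omega), ht_rec' (n : ℤ) (by omega)]
          ring
  have transZ : ∀ j : ℤ, -1 ≤ j →
      (s (j + L) = s ((L : ℤ) - 1) * s j + s ((L : ℤ) - 2) * t j
      ∧ t (j + L) = t ((L : ℤ) - 1) * s j + t ((L : ℤ) - 2) * t j) := by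
    intro j hj
    have h := trans1 (j + 1).toNat
    rw [show (((j + 1).toNat : ℕ) : ℤ) - 1 = j by omega] at h
    exact h
  have trans2 : ∀ j : ℤ, -1 ≤ j →
      s (j + 2 * L) =
          (s ((L : ℤ) - 1) * s ((L : ℤ) - 1) + s ((L : ℤ) - 2) * t ((L : ℤ) - 1)) * s j
          + (s ((L : ℤ) - 1) * s ((L : ℤ) - 2) + s ((L : ℤ) - 2) * t ((L : ℤ) - 2)) * t j
      ∧ t (j + 2 * L) =
          (t ((L : ℤ) - 1) * s ((L : ℤ) - 1) + t ((L : ℤ) - 2) * t ((L : ℤ) - 1)) * s j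
          + (t ((L : ℤ) - 1) * s ((L : ℤ) - 2) + t ((L : ℤ) - 2) * t ((L : ℤ) - 2)) * t j := by
    intro j hj
    have h1 := transZ j hj
    have h2 := transZ (j + L) (by omega)
    constructor
    · rw [show j + 2 * (L : ℤ) = j + L + L by ring, h2.1, h1.1, h1.2]; ring
    · rw [show j + 2 * (L : ℤ) = j + L + L by ring, h2.2, h1.1, h1.2]; ring
  -- determinant
  have hdet : ∀ n : ℕ, s n * t ((n : ℤ) - 1) - s ((n : ℤ) - 1) * t n = -(-1) ^ n := by
    intro n
    induction n with
    | zero =>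
      rw [Nat.cast_zero, show (0 : ℤ) - 1 = -1 by ring, hs_zero, ht_zero, hs_neg, ht_neg]
      ring
    | succ n ih =>
      rw [show ((n + 1 : ℕ) : ℤ) = (n : ℤ) + 1 by push_cast; ring,
        show (n : ℤ) + 1 - 1 = (n : ℤ) by ring, hs_rec' (n : ℤ) (by omega),
        ht_rec' (n : ℤ) (by omega), pow_succ]
      linear_combination -ih
  -- numeric coefficient identities for the 2L-step
  have hA1 : s ((L : ℤ) - 1) * s ((L : ℤ) - 1) + s ((L : ℤ) - 2) * t ((L : ℤ) - 1)
      = 1 + 8 * (2 ^ p * x + 2 * (2 ^ p * 2 ^ p) * (x * x) + 2 * (2 ^ p * 2 ^ p) * (y * u)) := by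
    rw [hD1, hD2, hD3]; ring
  have hA2 : s ((L : ℤ) - 1) * s ((L : ℤ) - 2) + s ((L : ℤ) - 2) * t ((L : ℤ) - 2)
      = 8 * (2 ^ p * y * (1 + 2 * 2 ^ p * (x + v))) := by
    rw [hD1, hD2, hD4]; ring
  have hB1 : t ((L : ℤ) - 1) * s ((L : ℤ) - 1) + t ((L : ℤ) - 2) * t ((L : ℤ) - 1)
      = 2 ^ (p + 3 + e) * (u' * (1 + 2 * 2 ^ p * (x + v))) := by
    rw [hD1, hD3, hD4, hu]; ring
  have hB2 : t ((L : ℤ) - 1) * s ((L : ℤ) - 2) + t ((L : ℤ) - 2) * t ((L : ℤ) - 2)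
      = 1 + 8 * (2 ^ p * v + 2 * (2 ^ p * 2 ^ p) * (u * y) + 2 * (2 ^ p * 2 ^ p) * (v * v)) := by
    rw [hD2, hD3, hD4]; ring
  -- delta
  obtain ⟨δ, hδdef, hδ⟩ : ∃ δ : ℤ, δ = -(-1) ^ K ∧ (δ = 1 ∨ δ = -1) := by
    refine ⟨-(-1) ^ K, rfl, ?_⟩
    rcases Nat.even_or_odd K with h | h
    · right; rw [Even.neg_one_pow h]
    · left; rw [Odd.neg_one_pow h]; ring
  -- K ≥ 1
  have hK1 : 1 ≤ K := by
    by_contra h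
    have hK0 : (K : ℤ) = 0 := by omega
    rw [hK0, ht_zero] at htk
    have h2 : (2 : ℤ) ∣ 1 := ⟨2 ^ (p + 1 + e) * t', by linear_combination htk⟩
    norm_num at h2
  -- t' > 0
  have ht'pos : 0 < t' := by
    have h1 := (posZ (K : ℤ) (by omega)).2
    rw [htk] at h1
    by_contra hle
    push_neg at hle
    have h0 : (0:ℤ) < 2 ^ (p + 2 + e) := pow_pos (by norm_num) _
    have h2 := mul_nonpos_of_nonneg_of_nonpos h0.le hle
    linarith
  -- det at K
  have hdetK : s (K : ℤ) * t ((K : ℤ) - 1) - s ((K : ℤ) - 1) * t (K : ℤ) = δ := by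
    rw [hδdef]; exact hdet K
  have hcKpos : 0 < t ((K : ℤ) - 1) := by
    have h := (posZ ((K : ℤ) - 1) (by omega)).2; omega
  have hcKodd : Odd (t ((K : ℤ) - 1)) := by
    rcases Int.even_or_odd (t ((K : ℤ) - 1)) with he | ho
    · exfalso
      obtain ⟨r, hr⟩ := he
      have h2 : (2 : ℤ) ∣ δ := ⟨s (K : ℤ) * r - s ((K : ℤ) - 1) * (2 ^ (p + 1 + e) * t'),
        by linear_combination -hdetK + t ((K : ℤ) - 1) * (0 : ℤ) + s (K : ℤ) * hr
          - s ((K : ℤ) - 1) * htk⟩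
      obtain ⟨w, hw⟩ := h2
      rcases hδ with h | h <;> omega
    · exact ho
  -- t(K-1) mod 4
  have hcδ4 : t ((K : ℤ) - 1) % 4 = (-δ) % 4 := by
    have hdvd : ((4 : ℤ)) ∣ s (K : ℤ) * t ((K : ℤ) - 1) - δ :=
      ⟨s ((K : ℤ) - 1) * (2 ^ (p + e) * t'), by linear_combination hdetK + s ((K : ℤ) - 1) * htk⟩
    have h1 : s (K : ℤ) * t ((K : ℤ) - 1) ≡ δ [ZMOD 4] :=
      (Int.modEq_iff_dvd.mpr hdvd).symm
    have h2 : s (K : ℤ) * t ((K : ℤ) - 1) ≡ 3 * t ((K : ℤ) - 1) [ZMOD 4] :=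
      Int.ModEq.mul_right _ hsk
    have h3 : (3 * t ((K : ℤ) - 1)) % 4 = δ % 4 := (h2.symm.trans h1)
    rcases hδ with h | h <;> omega
  -- main invariant
  have key : ∀ d : ℕ, ∃ τ : ℤ,
      t ((K : ℤ) + 2 * (d : ℤ) * (L : ℤ)) = 2 ^ (p + 2 + e) * τ ∧ Odd τ ∧ 0 < τ ∧
      τ % 4 = (t' + 2 * (d : ℤ)) % 4 ∧
      s ((K : ℤ) + 2 * (d : ℤ) * (L : ℤ)) % 8 = s (K : ℤ) % 8 ∧
      t ((K : ℤ) + 2 * (d : ℤ) * (L : ℤ) - 1) % 8 = t ((K : ℤ) - 1) % 8 ∧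
      jacobiSym (s ((K : ℤ) + 2 * (d : ℤ) * (L : ℤ) - 1))
          (t ((K : ℤ) + 2 * (d : ℤ) * (L : ℤ) - 1)).toNat
        = jacobiSym (s ((K : ℤ) - 1)) (t ((K : ℤ) - 1)).toNat ∧
      jacobiSym (s ((K : ℤ) + 2 * (d : ℤ) * (L : ℤ))) τ.toNat
        = (-1) ^ d * jacobiSym (s (K : ℤ)) t'.toNat := by
    intro d
    induction d with
    | zero =>
      rw [show (K : ℤ) + 2 * ((0 : ℕ) : ℤ) * (L : ℤ) = (K : ℤ) by push_cast; ring]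
      exact ⟨t', htk, ht'_odd, ht'pos, by push_cast; ring_nf, rfl, rfl, rfl,
        by rw [pow_zero, one_mul]⟩
    | succ d ih =>
      obtain ⟨τ, h1, h2, h3, h4, h5, h6, h7, h8⟩ := ih
      set j : ℤ := (K : ℤ) + 2 * (d : ℤ) * (L : ℤ) with hj
      have hj1 : 1 ≤ j := by
        have h0 : 0 ≤ 2 * (d : ℤ) * (L : ℤ) := by positivity
        omega
      rw [show (K : ℤ) + 2 * ((d + 1 : ℕ) : ℤ) * (L : ℤ) = j + 2 * (L : ℤ) by
        rw [hj]; push_cast; ring]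
      have T0 := trans2 j (by omega)
      have T1 := trans2 (j - 1) (by omega)
      rw [show j - 1 + 2 * (L : ℤ) = j + 2 * (L : ℤ) - 1 by ring] at T1
      -- determinant at j
      have hdetj : s j * t (j - 1) - s (j - 1) * t j = δ := by
        have h := hdet (K + 2 * d * L)
        rw [show ((K + 2 * d * L : ℕ) : ℤ) = j by rw [hj]; push_cast; ring,
          pow_add, Even.neg_one_pow (⟨d * L, by ring⟩ : Even (2 * d * L)), mul_one,
          ← hδdef] at h
        exact h
      -- determinant at j + 2L
      have hdetj2 : s (j + 2 * (L : ℤ)) * t (j + 2 * (L : ℤ) - 1)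
          - s (j + 2 * (L : ℤ) - 1) * t (j + 2 * (L : ℤ)) = δ := by
        have h := hdet (K + 2 * (d + 1) * L)
        rw [show ((K + 2 * (d + 1) * L : ℕ) : ℤ) = j + 2 * (L : ℤ) by rw [hj]; push_cast; ring,
          pow_add, Even.neg_one_pow (⟨(d + 1) * L, by ring⟩ : Even (2 * (d + 1) * L)), mul_one,
          ← hδdef] at h
        exact h
      -- s j is odd
      have hsodd : Odd (s j) := by
        rcases Int.even_or_odd (s j) with he | ho
        · exfalso
          obtain ⟨r, hr⟩ := he
          have hd := hdetj
          rw [hr, h1] at hd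
          have h2d : (2 : ℤ) ∣ δ :=
            ⟨r * t (j - 1) - s (j - 1) * (2 ^ (p + 1 + e) * τ), by linear_combination -hd⟩
          obtain ⟨w, hw⟩ := h2d
          rcases hδ with h | h <;> omega
        · exact ho
      -- new tuple
      set τ₂ : ℤ := 2 * (u' * (1 + 2 * 2 ^ p * (x + v))) * s j
        + (1 + 8 * (2 ^ p * v + 2 * (2 ^ p * 2 ^ p) * (u * y) + 2 * (2 ^ p * 2 ^ p) * (v * v))) * τ with hτ₂def
      have hval : t (j + 2 * (L : ℤ)) = 2 ^ (p + 2 + e) * τ₂ := by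
        rw [T0.2, hB1, hB2, h1, hτ₂def]; ring
      have hodd2 : Odd τ₂ := by
        obtain ⟨r, hr⟩ := h2
        exact ⟨u' * (1 + 2 * 2 ^ p * (x + v)) * s j + r + 8 * ((2 ^ p * v + 2 * (2 ^ p * 2 ^ p) * (u * y) + 2 * (2 ^ p * 2 ^ p) * (v * v)) * r) + 4 * (2 ^ p * v + 2 * (2 ^ p * 2 ^ p) * (u * y) + 2 * (2 ^ p * 2 ^ p) * (v * v)),
          by rw [hτ₂def, hr]; ring⟩
      have hpos2 : 0 < τ₂ := by
        have hTpos := (posZ (j + 2 * (L : ℤ)) (by omega)).2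
        rw [hval] at hTpos
        by_contra hle
        push_neg at hle
        have h0 : (0 : ℤ) < 2 ^ (p + 2 + e) := pow_pos (by norm_num) _
        have h2x := mul_nonpos_of_nonneg_of_nonpos h0.le hle
        linarith
      have hop : Odd (u' * (1 + 2 * 2 ^ p * (x + v)) * s j) :=
        (hu'_odd.mul ⟨2 ^ p * (x + v), by ring⟩).mul hsodd
      obtain ⟨w, hw⟩ := hop
      obtain ⟨q, hq⟩ : ∃ q : ℤ, τ₂ = τ + 2 + 4 * q :=
        ⟨w + 2 * ((2 ^ p * v + 2 * (2 ^ p * 2 ^ p) * (u * y) + 2 * (2 ^ p * 2 ^ p) * (v * v)) * τ), by rw [hτ₂def]; linear_combination 2 * hw⟩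
      have hττ : τ₂ % 4 = (τ + 2) % 4 := by omega
      have hmod4 : τ₂ % 4 = (t' + 2 * ((d + 1 : ℕ) : ℤ)) % 4 := by
        have hc : ((d + 1 : ℕ) : ℤ) = (d : ℤ) + 1 := by push_cast; ring
        rw [hc]; omega
      have hmod8s : s (j + 2 * (L : ℤ)) % 8 = s (K : ℤ) % 8 := by
        obtain ⟨q2, hq2⟩ : ∃ q2 : ℤ, s (j + 2 * (L : ℤ)) = s j + 8 * q2 :=
          ⟨(2 ^ p * x + 2 * (2 ^ p * 2 ^ p) * (x * x) + 2 * (2 ^ p * 2 ^ p) * (y * u)) * s j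
            + 2 ^ p * y * (1 + 2 * 2 ^ p * (x + v)) * t j, by rw [T0.1, hA1, hA2]; ring⟩
        omega
      have hmod8c : t (j + 2 * (L : ℤ) - 1) % 8 = t ((K : ℤ) - 1) % 8 := by
        obtain ⟨q3, hq3⟩ : ∃ q3 : ℤ, t (j + 2 * (L : ℤ) - 1) = t (j - 1) + 8 * q3 :=
          ⟨2 ^ (p + e) * (u' * (1 + 2 * 2 ^ p * (x + v))) * s (j - 1)
            + (2 ^ p * v + 2 * (2 ^ p * 2 ^ p) * (u * y) + 2 * (2 ^ p * 2 ^ p) * (v * v)) * t (j - 1), by rw [T1.2, hB1, hB2]; ring⟩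
        omega
      have hoddc : Odd (t (j - 1)) := by
        rcases hcKodd with ⟨r, hr⟩
        exact ⟨(t (j - 1) - 1) / 2, by omega⟩
      have hjper7 : jacobiSym (s (j + 2 * (L : ℤ) - 1)) (t (j + 2 * (L : ℤ) - 1)).toNat
          = jacobiSym (s ((K : ℤ) - 1)) (t ((K : ℤ) - 1)).toNat := by
        have hJ1 := hJper (j - 1) (by omega) hoddc
        have hpar : t (j - 1 + (L : ℤ)) % 2 = t (j - 1) % 2 := hJpar (j - 1) (by omega)
        have hoddc2 : Odd (t (j - 1 + (L : ℤ))) := by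
          rcases hoddc with ⟨r, hr⟩
          exact ⟨(t (j - 1 + (L : ℤ)) - 1) / 2, by omega⟩
        have hJ2 := hJper (j - 1 + (L : ℤ)) (by omega) hoddc2
        rw [show j - 1 + (L : ℤ) + (L : ℤ) = j + 2 * (L : ℤ) - 1 by ring] at hJ2
        exact hJ2.trans (hJ1.trans h7)
      -- the Jacobi symbol flip
      have hc1pos : 0 < t (j - 1) := by
        have h := (posZ (j - 1) (by omega)).2; omega
      have hc2pos : 0 < t (j + 2 * (L : ℤ) - 1) := by
        have h := (posZ (j + 2 * (L : ℤ) - 1) (by omega)).2; omega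
      have hc2odd : Odd (t (j + 2 * (L : ℤ) - 1)) := by
        rcases hcKodd with ⟨r, hr⟩
        exact ⟨(t (j + 2 * (L : ℤ) - 1) - 1) / 2, by omega⟩
      have hdetj' : s j * t (j - 1) - s (j - 1) * (2 ^ (p + 2 + e) * τ) = δ := by
        rw [← h1]; exact hdetj
      have hdetj2' : s (j + 2 * (L : ℤ)) * t (j + 2 * (L : ℤ) - 1)
          - s (j + 2 * (L : ℤ) - 1) * (2 ^ (p + 2 + e) * τ₂) = δ := by
        rw [← hval]; exact hdetj2
      have F1 := kron_formula (s j) (s (j - 1)) (t (j - 1)) τ δ (p + 2 + e)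
        hδ h3 h2 hc1pos hoddc hdetj'
      have F2 := kron_formula (s (j + 2 * (L : ℤ))) (s (j + 2 * (L : ℤ) - 1))
        (t (j + 2 * (L : ℤ) - 1)) τ₂ δ (p + 2 + e) hδ hpos2 hodd2 hc2pos hc2odd hdetj2'
      have hcc : t (j + 2 * (L : ℤ) - 1) % 8 = t (j - 1) % 8 := by omega
      have hcδ : t (j - 1) % 4 = (-δ) % 4 := by omega
      have hflip := kron_flip δ (t (j - 1)) (t (j + 2 * (L : ℤ) - 1)) τ τ₂ (p + 2 + e)
        hδ hc1pos hc2pos hoddc h3 hpos2 h2 hcc hττ hcδ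
      have hJJ : jacobiSym (s (j + 2 * (L : ℤ) - 1)) (t (j + 2 * (L : ℤ) - 1)).toNat
          = jacobiSym (s (j - 1)) (t (j - 1)).toNat := hjper7.trans h7.symm
      have hfinal : jacobiSym (s (j + 2 * (L : ℤ))) τ₂.toNat
          = (-1) ^ (d + 1) * jacobiSym (s (K : ℤ)) t'.toNat := by
        rw [F2, hJJ, hflip, neg_mul, ← F1, h8, pow_succ]; ring
      exact ⟨τ₂, hval, hodd2, hpos2, hmod4, hmod8s, hmod8c, hjper7, hfinal⟩
  -- conclusion
  haveI : Fact (Nat.Prime 2) := ⟨Nat.prime_two⟩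
  have hconv : ∀ T τ0 : ℤ, T = 2 ^ (p + 2 + e) * τ0 → 0 < τ0 → Odd τ0 →
      padicValNat 2 T.toNat = p + 2 + e ∧ T.toNat / 2 ^ (p + 2 + e) = τ0.toNat := by
    intro T τ0 hT h0 ho
    have hTn : T.toNat = 2 ^ (p + 2 + e) * τ0.toNat := by
      rw [hT, show (2 : ℤ) ^ (p + 2 + e) * τ0 = ((2 ^ (p + 2 + e) * τ0.toNat : ℕ) : ℤ) from by
        push_cast [Int.toNat_of_nonneg h0.le]; ring, Int.toNat_natCast]
    have hne : τ0.toNat ≠ 0 := by omega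
    have hnd : ¬ (2 ∣ τ0.toNat) := by
      rcases ho with ⟨r, hr⟩
      omega
    constructor
    · rw [hTn, padicValNat.mul (pow_ne_zero _ (by norm_num)) hne, padicValNat.prime_pow,
        padicValNat.eq_zero_of_not_dvd hnd, add_zero]
    · rw [hTn, Nat.mul_div_cancel_left _ (by positivity)]
  intro d hd
  obtain ⟨τ, h1, h2, h3, h4, h5, h6, h7, h8⟩ := key d
  obtain ⟨hv1, hdiv1⟩ := hconv _ τ h1 h3 h2
  obtain ⟨hv2, hdiv2⟩ := hconv _ t' htk ht'pos ht'_odd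
  simp only [kron]
  rw [hv1, hv2, hdiv1, hdiv2, h5, h8]
  ring
end

section
/- Let k ≤ L−1 be an index with s_k ≡ 3 (mod 4) and t_k = 2^{m+e} t' where t' is odd. Then t_{k+2L} = 2^{m+e} t'' for an odd integer t'' with t'' ≡ t' + 2 (mod 4). -/
/-- If `k ≤ L - 1`, `s k ≡ 3 (mod 4)` and `t k = 2^(m+e) t'` with `t'` odd, then
`t (k + 2L) = 2^(m+e) t''` for an odd `t''` with `t'' ≡ t' + 2 (mod 4)`. -/
theorem t_at_k_plus_two_L
    (a s t : ℤ → ℤ) (l : ℕ) (hl : 1 ≤ l)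
    (ha_pos : ∀ k : ℤ, 0 ≤ k → 0 < a k)
    (ha_per : ∀ k : ℤ, 0 ≤ k → a (k + l) = a k)
    (hs_neg : s (-1) = 1) (ht_neg : t (-1) = 0)
    (hs_zero : s 0 = a 0) (ht_zero : t 0 = 1)
    (hs_rec : ∀ k : ℤ, 1 ≤ k → s k = a k * s (k - 1) + s (k - 2))
    (ht_rec : ∀ k : ℤ, 1 ≤ k → t k = a k * t (k - 1) + t (k - 2))
    (L : ℕ) (hL_pos : 0 < L) (hL_even : Even L) (hL_mul : l ∣ L)
    (hD : s ((L : ℤ) - 1) ≡ 1 [ZMOD 4] ∧ s ((L : ℤ) - 2) ≡ 0 [ZMOD 4] ∧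
          t ((L : ℤ) - 1) ≡ 0 [ZMOD 4] ∧ t ((L : ℤ) - 2) ≡ 1 [ZMOD 4])
    (hJpar : ∀ k : ℤ, 0 ≤ k → t (k + L) ≡ t k [ZMOD 2])
    (hJper : ∀ k : ℤ, 0 ≤ k → Odd (t k) →
      jacobiSym (s (k + L)) (t (k + L)).toNat = jacobiSym (s k) (t k).toNat)
    (m : ℕ) (hm : 2 ≤ m) (x y u v : ℤ)
    (hDU : s ((L : ℤ) - 1) = 1 + 2 ^ m * x ∧ s ((L : ℤ) - 2) = 2 ^ m * y ∧
           t ((L : ℤ) - 1) = 2 ^ m * u ∧ t ((L : ℤ) - 2) = 1 + 2 ^ m * v)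
    (hUodd : Odd x ∨ Odd y ∨ Odd u ∨ Odd v)
    (e : ℕ) (u' : ℤ) (hu_ne : u ≠ 0) (hu : u = 2 ^ e * u') (hu'_odd : Odd u')
    (k : ℤ) (hk0 : 0 ≤ k) (hkL : k ≤ (L : ℤ) - 1) (hsk : s k ≡ 3 [ZMOD 4])
    (t' : ℤ) (ht'_odd : Odd t') (htk : t k = 2 ^ (m + e) * t') :
    ∃ t'' : ℤ, Odd t'' ∧ t'' ≡ t' + 2 [ZMOD 4] ∧ t (k + 2 * (L : ℤ)) = 2 ^ (m + e) * t'' := by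
  -- `a` has period `L`
  have haL : ∀ k : ℤ, 0 ≤ k → a (k + L) = a k := by
    obtain ⟨c, hc⟩ := hL_mul
    have key : ∀ j : ℕ, ∀ k : ℤ, 0 ≤ k → a (k + j * l) = a k := by
      intro j
      induction j with
      | zero => intro k hk; simp
      | succ n ih =>
          intro k hk
          have h1 : (k : ℤ) + (n + 1 : ℕ) * l = (k + l) + n * l := by push_cast; ring
          rw [h1, ih (k + l) (by positivity), ha_per k hk]
    intro k hk
    have := key c k hk
    have hcl : ((L : ℤ)) = (c : ℤ) * l := by rw [hc]; push_cast; ring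
    rw [hcl]; exact this
  -- main shift identity
  have main : ∀ k : ℤ, -1 ≤ k →
      s (k + L) = s ((L : ℤ) - 1) * s k + s ((L : ℤ) - 2) * t k ∧
      t (k + L) = t ((L : ℤ) - 1) * s k + t ((L : ℤ) - 2) * t k := by
    have hnat : ∀ n : ℕ,
        s (((n : ℤ) - 1) + L) = s ((L : ℤ) - 1) * s ((n : ℤ) - 1) + s ((L : ℤ) - 2) * t ((n : ℤ) - 1) ∧
        t (((n : ℤ) - 1) + L) = t ((L : ℤ) - 1) * s ((n : ℤ) - 1) + t ((L : ℤ) - 2) * t ((n : ℤ) - 1) := by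
      intro n
      induction n using Nat.strong_induction_on with
      | _ n ih =>
        match n with
        | 0 =>
            have h1 : ((0 : ℕ) : ℤ) - 1 + L = (L : ℤ) - 1 := by omega
            have h2 : ((0 : ℕ) : ℤ) - 1 = (-1 : ℤ) := by omega
            rw [h1, h2, hs_neg, ht_neg]
            constructor <;> ring
        | 1 =>
            have h1 : ((1 : ℕ) : ℤ) - 1 + L = (L : ℤ) := by omega
            have h2 : ((1 : ℕ) : ℤ) - 1 = (0 : ℤ) := by omega
            have hL1 : (1 : ℤ) ≤ L := by exact_mod_cast hL_pos
            have hsrec := hs_rec L hL1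
            have htrec := ht_rec L hL1
            have haL0 : a ((L : ℤ)) = a 0 := by
              have := haL 0 le_rfl; simpa using this
            rw [h1, h2, hs_zero, ht_zero, hsrec, htrec, haL0]
            constructor <;> ring
        | (n + 2) =>
            have ih1 := ih (n + 1) (by omega)
            have ih0 := ih n (by omega)
            set j : ℤ := ((n : ℤ) + 2) - 1 with hj
            have hjc : (((n + 2 : ℕ) : ℤ) - 1) = j := by push_cast [hj]; ring
            rw [hjc]
            have hj1 : (1 : ℤ) ≤ j := by simp [hj]; omega
            have hjL1 : (1 : ℤ) ≤ j + L := by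
              have : (0 : ℤ) ≤ L := by positivity
              omega
            have hsrec := hs_rec (j + L) hjL1
            have htrec := ht_rec (j + L) hjL1
            have hsreck := hs_rec j hj1
            have htreck := ht_rec j hj1
            have haj : a (j + L) = a j := haL j (by omega)
            have e1 : j + L - 1 = (((n + 1 : ℕ) : ℤ) - 1) + L := by push_cast [hj]; ring
            have e2 : j + L - 2 = (((n : ℕ) : ℤ) - 1) + L := by push_cast [hj]; ring
            have e3 : j - 1 = (((n + 1 : ℕ) : ℤ) - 1) := by push_cast [hj]; ring
            have e4 : j - 2 = (((n : ℕ) : ℤ) - 1) := by push_cast [hj]; ring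
            rw [e1, e2, haj] at hsrec htrec
            rw [e3, e4] at hsreck htreck
            constructor
            · rw [hsrec, ih1.1, ih0.1, hsreck, htreck]; ring
            · rw [htrec, ih1.2, ih0.2, hsreck, htreck]; ring
    intro k hk
    have hk' : k = (((k + 1).toNat : ℤ)) - 1 := by
      have : ((k + 1).toNat : ℤ) = k + 1 := Int.toNat_of_nonneg (by omega)
      omega
    rw [hk']
    exact hnat (k + 1).toNat
  obtain ⟨hs1, hs2, ht1, ht2⟩ := hDU
  have H1 := main k (by omega)
  have hkL0 : (-1 : ℤ) ≤ k + L := by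
    have : (0 : ℤ) ≤ L := by positivity
    omega
  have H2 := (main (k + L) hkL0).2
  have h2L : k + L + L = k + 2 * (L : ℤ) := by ring
  rw [h2L] at H2
  obtain ⟨m₀, rfl⟩ : ∃ m₀, m = m₀ + 2 := ⟨m - 2, by omega⟩
  -- explicit formula for t (k + 2L)
  have hform : t (k + 2 * (L : ℤ)) = 2 ^ ((m₀ + 2) + e) *
      (u' * s k * (2 + 2 ^ (m₀ + 2) * (x + v)) +
       t' * (2 ^ (2 * m₀ + 4) * u * y + 1 + 2 ^ (m₀ + 3) * v + 2 ^ (2 * m₀ + 4) * v ^ 2)) := by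
    rw [H2, H1.1, H1.2, hs1, hs2, ht1, ht2, htk, hu]
    ring
  have hsk_odd : Odd (s k) := by
    have h2 := hsk.of_dvd (by norm_num : (2 : ℤ) ∣ 4)
    exact Int.odd_iff.mpr (by simpa [Int.ModEq] using h2)
  obtain ⟨w, hw⟩ := hu'_odd.mul hsk_odd
  obtain ⟨r, hr⟩ := ht'_odd
  refine ⟨_, ?_, ?_, hform⟩
  · -- odd
    exact ⟨u' * s k * (1 + 2 ^ (m₀ + 1) * (x + v)) +
      t' * (2 ^ (2 * m₀ + 3) * u * y + 2 ^ (m₀ + 2) * v + 2 ^ (2 * m₀ + 3) * v ^ 2) + r,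
      by rw [hr]; ring⟩
  · -- mod 4
    apply Int.ModEq.symm
    rw [Int.modEq_iff_dvd]
    refine ⟨w + 2 ^ m₀ * (u' * s k * (x + v)) +
      t' * (2 ^ (2 * m₀ + 2) * u * y + 2 ^ (m₀ + 1) * v + 2 ^ (2 * m₀ + 2) * v ^ 2), ?_⟩
    linear_combination 2 * hw
end

section
/- Let L be a positive multiple of l with D_L ≡ I (mod 4) entrywise. Then for every j ≥ −1 one has s_{j+L} ≡ s_j (mod 4) and t_{j+L} ≡ t_j (mod 4). -/
/-- If `L` is a positive multiple of `l` with `D_L ≡ I (mod 4)` entrywise, then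
`s (j+L) ≡ s j (mod 4)` and `t (j+L) ≡ t j (mod 4)` for every `j ≥ -1`. -/
theorem convergents_mod_four_periodic
    (a s t : ℤ → ℤ) (l : ℕ) (hl : 1 ≤ l)
    (ha_pos : ∀ k : ℤ, 0 ≤ k → 0 < a k)
    (ha_per : ∀ k : ℤ, 0 ≤ k → a (k + l) = a k)
    (hs_neg : s (-1) = 1) (ht_neg : t (-1) = 0)
    (hs_zero : s 0 = a 0) (ht_zero : t 0 = 1)
    (hs_rec : ∀ k : ℤ, 1 ≤ k → s k = a k * s (k - 1) + s (k - 2))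
    (ht_rec : ∀ k : ℤ, 1 ≤ k → t k = a k * t (k - 1) + t (k - 2))
    (L : ℕ) (hL_pos : 0 < L) (hL_mul : l ∣ L)
    (hD : s ((L : ℤ) - 1) ≡ 1 [ZMOD 4] ∧ s ((L : ℤ) - 2) ≡ 0 [ZMOD 4] ∧
          t ((L : ℤ) - 1) ≡ 0 [ZMOD 4] ∧ t ((L : ℤ) - 2) ≡ 1 [ZMOD 4])
 :
    ∀ j : ℤ, -1 ≤ j → s (j + L) ≡ s j [ZMOD 4] ∧ t (j + L) ≡ t j [ZMOD 4] := by
  obtain ⟨hD1, hD2, hD3, hD4⟩ := hD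
  -- periodicity for multiples of l
  have key : ∀ m : ℕ, ∀ k : ℤ, 0 ≤ k → a (k + l * m) = a k := by
    intro m
    induction m with
    | zero => simp
    | succ n ih =>
      intro k hk
      have h2 : (0 : ℤ) ≤ k + l * n := by positivity
      have h1 : k + (l : ℤ) * ((n + 1 : ℕ)) = (k + l * n) + l := by push_cast; ring
      rw [h1, ha_per _ h2, ih k hk]
  have haL : ∀ k : ℤ, 0 ≤ k → a (k + L) = a k := by
    obtain ⟨m, rfl⟩ := hL_mul
    intro k hk
    have := key m k hk
    simpa using this
  have hL1 : (1 : ℤ) ≤ L := by exact_mod_cast hL_pos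
  have main : ∀ n : ℕ, s ((n : ℤ) - 1 + L) ≡ s ((n : ℤ) - 1) [ZMOD 4] ∧
      t ((n : ℤ) - 1 + L) ≡ t ((n : ℤ) - 1) [ZMOD 4] := by
    intro n
    induction n using Nat.strong_induction_on with
    | _ n ih =>
      match n with
      | 0 =>
        constructor
        · rw [show ((0 : ℕ) : ℤ) - 1 + L = (L : ℤ) - 1 by omega,
            show ((0 : ℕ) : ℤ) - 1 = (-1 : ℤ) by omega, hs_neg]
          exact hD1
        · rw [show ((0 : ℕ) : ℤ) - 1 + L = (L : ℤ) - 1 by omega,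
            show ((0 : ℕ) : ℤ) - 1 = (-1 : ℤ) by omega, ht_neg]
          exact hD3
      | 1 =>
        have hsL : s L = a L * s ((L : ℤ) - 1) + s ((L : ℤ) - 2) := hs_rec L hL1
        have htL : t L = a L * t ((L : ℤ) - 1) + t ((L : ℤ) - 2) := ht_rec L hL1
        have ha0 : a L = a 0 := by have := haL 0 le_rfl; simpa using this
        have e0 : ((1 : ℕ) : ℤ) - 1 + L = (L : ℤ) := by omega
        have e1 : ((1 : ℕ) : ℤ) - 1 = (0 : ℤ) := by omega
        rw [e0, e1]
        constructor
        · calc s (L : ℤ) = a 0 * s ((L : ℤ) - 1) + s ((L : ℤ) - 2) := by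
                rw [hsL, ha0]
            _ ≡ a 0 * 1 + 0 [ZMOD 4] := (hD1.mul_left _).add hD2
            _ = s 0 := by rw [hs_zero]; ring
        · calc t (L : ℤ) = a 0 * t ((L : ℤ) - 1) + t ((L : ℤ) - 2) := by
                rw [htL, ha0]
            _ ≡ a 0 * 0 + 1 [ZMOD 4] := (hD3.mul_left _).add hD4
            _ = t 0 := by rw [ht_zero]; ring
      | (n + 2) =>
        set j : ℤ := (n : ℤ) + 1 with hj
        have hjn : ((n + 2 : ℕ) : ℤ) - 1 = j := by omega
        have hj1 : (1 : ℤ) ≤ j := by omega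
        have hjL1 : (1 : ℤ) ≤ j + L := by linarith
        have haj : a (j + L) = a j := haL j (by linarith)
        have ih1 := ih (n + 1) (by omega)
        have ih0 := ih n (by omega)
        have e1 : ((n + 1 : ℕ) : ℤ) - 1 = j - 1 := by omega
        have e2 : ((n : ℕ) : ℤ) - 1 = j - 2 := by omega
        rw [e1] at ih1
        rw [e2] at ih0
        rw [hjn]
        have es1 : j - 1 + (L : ℤ) = j + L - 1 := by ring
        have es2 : j - 2 + (L : ℤ) = j + L - 2 := by ring
        rw [es1] at ih1
        rw [es2] at ih0
        constructor
        · calc s (j + L) = a j * s (j + L - 1) + s (j + L - 2) := by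
                rw [hs_rec (j + L) hjL1, haj]
            _ ≡ a j * s (j - 1) + s (j - 2) [ZMOD 4] := (ih1.1.mul_left _).add ih0.1
            _ = s j := (hs_rec j hj1).symm
        · calc t (j + L) = a j * t (j + L - 1) + t (j + L - 2) := by
                rw [ht_rec (j + L) hjL1, haj]
            _ ≡ a j * t (j - 1) + t (j - 2) [ZMOD 4] := (ih1.2.mul_left _).add ih0.2
            _ = t j := (ht_rec j hj1).symm
  intro j hj
  obtain ⟨n, hn⟩ : ∃ n : ℕ, j = (n : ℤ) - 1 := ⟨(j + 1).toNat, by omega⟩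
  subst hn
  exact main n
end

section
/- Let L be a positive multiple of l. Then for every k ≥ 0 the 2×2 matrix with first row (s_{k+L}, s_{k+L−1}) and second row (t_{k+L}, t_{k+L−1}) equals the matrix product D_L · M_k, where M_k is the 2×2 matrix with first row (s_k, s_{k−1}) and second row (t_k, t_{k−1}). -/
/-!
With `P a := !![a, 1; 1, 0]` the recurrence reads `M (k + 1) = M k * P (a (k + 1))` for the
matrix `M k` of consecutive convergents, and the initial values give `M 0 = P (a 0)`.
If `L` is a period of `a`, then `M (k + L)` and `D_L * M k` are multiplied on the right by the
same matrix `P (a (k + 1))` at each step, and they agree at `k = 0` because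
`M L = M (L - 1) * P (a L) = D_L * P (a 0)`.
-/

theorem apply_add_nat_mul_eq_of_periodic_on_nonneg {α : Type*} {f : ℤ → α} {p : ℤ} (hp : 0 ≤ p)
    (hf : ∀ k, 0 ≤ k → f (k + p) = f k) (n : ℕ) :
    ∀ k, 0 ≤ k → f (k + n * p) = f k := by
  induction n with
  | zero => simp
  | succ n ih =>
    intro k hk
    rw [Nat.cast_succ, add_one_mul, ← add_assoc, hf _ (by positivity), ih k hk]

namespace ContinuedFraction

variable {R : Type*} [CommSemiring R]

def partialQuotientMatrix (x : R) : Matrix (Fin 2) (Fin 2) R := !![x, 1; 1, 0]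

def convergentMatrix (s t : ℤ → R) (k : ℤ) : Matrix (Fin 2) (Fin 2) R :=
  !![s k, s (k - 1); t k, t (k - 1)]

variable {a s t : ℤ → R}

theorem convergentMatrix_zero (hs_neg : s (-1) = 1) (ht_neg : t (-1) = 0)
    (hs_zero : s 0 = a 0) (ht_zero : t 0 = 1) :
    convergentMatrix s t 0 = partialQuotientMatrix (a 0) := by
  simp [convergentMatrix, partialQuotientMatrix, hs_neg, ht_neg, hs_zero, ht_zero]

variable (hs_rec : ∀ k : ℤ, 1 ≤ k → s k = a k * s (k - 1) + s (k - 2))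
  (ht_rec : ∀ k : ℤ, 1 ≤ k → t k = a k * t (k - 1) + t (k - 2))
include hs_rec ht_rec

theorem convergentMatrix_add_one {k : ℤ} (hk : 0 ≤ k) :
    convergentMatrix s t (k + 1) = convergentMatrix s t k * partialQuotientMatrix (a (k + 1)) := by
  have hs := hs_rec (k + 1) (by omega)
  have ht := ht_rec (k + 1) (by omega)
  simp only [add_sub_cancel_right, show k + 1 - 2 = k - 1 by ring] at hs ht
  rw [convergentMatrix, convergentMatrix, partialQuotientMatrix, Matrix.mul_fin_two, hs, ht,
    add_sub_cancel_right]
  simp only [mul_one, one_mul, zero_mul, add_zero, mul_comm]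

theorem convergentMatrix_add_period (h_zero : convergentMatrix s t 0 = partialQuotientMatrix (a 0))
    {p : ℤ} (hp : 1 ≤ p) (ha_per : ∀ k : ℤ, 0 ≤ k → a (k + p) = a k) :
    ∀ k : ℤ, 0 ≤ k →
      convergentMatrix s t (k + p) = convergentMatrix s t (p - 1) * convergentMatrix s t k := by
  refine Int.leInduction ?_ (fun k hk ih => ?_)
  · calc convergentMatrix s t (0 + p)
        = convergentMatrix s t (p - 1 + 1) := by rw [zero_add, sub_add_cancel]
      _ = convergentMatrix s t (p - 1) * partialQuotientMatrix (a p) := by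
        rw [convergentMatrix_add_one hs_rec ht_rec (by omega), sub_add_cancel]
      _ = convergentMatrix s t (p - 1) * convergentMatrix s t 0 := by
        rw [h_zero, ← ha_per 0 le_rfl, zero_add]
  · calc convergentMatrix s t (k + 1 + p)
        = convergentMatrix s t (k + p + 1) := by rw [add_right_comm]
      _ = convergentMatrix s t (k + p) * partialQuotientMatrix (a (k + 1)) := by
        rw [convergentMatrix_add_one hs_rec ht_rec (by omega), add_right_comm,
          ha_per _ (by omega)]
      _ = convergentMatrix s t (p - 1) * convergentMatrix s t (k + 1) := by
        rw [ih, Matrix.mul_assoc, convergentMatrix_add_one hs_rec ht_rec hk]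

end ContinuedFraction

theorem convergent_matrix_identity_general
    (a s t : ℤ → ℤ) (l : ℕ)
    (ha_per : ∀ k : ℤ, 0 ≤ k → a (k + l) = a k)
    (hs_neg : s (-1) = 1) (ht_neg : t (-1) = 0)
    (hs_zero : s 0 = a 0) (ht_zero : t 0 = 1)
    (hs_rec : ∀ k : ℤ, 1 ≤ k → s k = a k * s (k - 1) + s (k - 2))
    (ht_rec : ∀ k : ℤ, 1 ≤ k → t k = a k * t (k - 1) + t (k - 2))
    (L : ℕ) (hL_pos : 0 < L) (hL_mul : l ∣ L) :
    ∀ k : ℤ, 0 ≤ k →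
      !![s (k + L), s (k + L - 1); t (k + L), t (k + L - 1)] =
        !![s ((L : ℤ) - 1), s ((L : ℤ) - 2); t ((L : ℤ) - 1), t ((L : ℤ) - 2)] *
          !![s k, s (k - 1); t k, t (k - 1)] := by
  obtain ⟨m, rfl⟩ := hL_mul
  have haL : ∀ k : ℤ, 0 ≤ k → a (k + (l * m : ℕ)) = a k := by
    simpa only [Nat.cast_mul, mul_comm] using
      apply_add_nat_mul_eq_of_periodic_on_nonneg (Int.natCast_nonneg l) ha_per m
  intro k hk
  have h := ContinuedFraction.convergentMatrix_add_period hs_rec ht_rec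
    (ContinuedFraction.convergentMatrix_zero hs_neg ht_neg hs_zero ht_zero) (by omega) haL k hk
  simpa only [ContinuedFraction.convergentMatrix, sub_sub, one_add_one_eq_two] using h

/-- For a positive multiple `L` of `l` and every `k ≥ 0`, the matrix with rows
`(s (k+L), s (k+L-1))` and `(t (k+L), t (k+L-1))` equals `D_L` times the matrix with
rows `(s k, s (k-1))` and `(t k, t (k-1))`. -/
theorem convergent_matrix_identity
    (a s t : ℤ → ℤ) (l : ℕ) (hl : 1 ≤ l)
    (ha_pos : ∀ k : ℤ, 0 ≤ k → 0 < a k)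
    (ha_per : ∀ k : ℤ, 0 ≤ k → a (k + l) = a k)
    (hs_neg : s (-1) = 1) (ht_neg : t (-1) = 0)
    (hs_zero : s 0 = a 0) (ht_zero : t 0 = 1)
    (hs_rec : ∀ k : ℤ, 1 ≤ k → s k = a k * s (k - 1) + s (k - 2))
    (ht_rec : ∀ k : ℤ, 1 ≤ k → t k = a k * t (k - 1) + t (k - 2))
    (L : ℕ) (hL_pos : 0 < L) (hL_mul : l ∣ L) :
    ∀ k : ℤ, 0 ≤ k →
      !![s (k + L), s (k + L - 1); t (k + L), t (k + L - 1)] =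
        !![s ((L : ℤ) - 1), s ((L : ℤ) - 2); t ((L : ℤ) - 1), t ((L : ℤ) - 2)] *
          !![s k, s (k - 1); t k, t (k - 1)] :=
  convergent_matrix_identity_general a s t l ha_per hs_neg ht_neg hs_zero ht_zero hs_rec ht_rec L
    hL_pos hL_mul
end

section
/- One has D_{2L} = D_L² = I + 2^{m+1} Ũ, where Ũ = U + 2^{m−1} U² is an integer matrix whose lower-left entry ũ satisfies ũ ≡ u (mod 2^{e+1}); in particular ũ = 2^e u'' for an odd integer u'', so the exact 2-adic valuation of the lower-left entry is again e. -/
/-- `D_{2L} = D_L² = I + 2^(m+1) Ũ` with `Ũ = U + 2^(m-1) U²`; the lower-left entry of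
`Ũ` is congruent to `u` modulo `2^(e+1)`, hence equals `2^e u''` with `u''` odd. -/
theorem doubling_matrix_identity
    (a s t : ℤ → ℤ) (l : ℕ) (hl : 1 ≤ l)
    (ha_pos : ∀ k : ℤ, 0 ≤ k → 0 < a k)
    (ha_per : ∀ k : ℤ, 0 ≤ k → a (k + l) = a k)
    (hs_neg : s (-1) = 1) (ht_neg : t (-1) = 0)
    (hs_zero : s 0 = a 0) (ht_zero : t 0 = 1)
    (hs_rec : ∀ k : ℤ, 1 ≤ k → s k = a k * s (k - 1) + s (k - 2))
    (ht_rec : ∀ k : ℤ, 1 ≤ k → t k = a k * t (k - 1) + t (k - 2))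
    (L : ℕ) (hL_pos : 0 < L) (hL_even : Even L) (hL_mul : l ∣ L)
    (m : ℕ) (hm : 2 ≤ m) (U : Matrix (Fin 2) (Fin 2) ℤ)
    (hDU : !![s ((L : ℤ) - 1), s ((L : ℤ) - 2); t ((L : ℤ) - 1), t ((L : ℤ) - 2)]
            = 1 + (2 ^ m : ℤ) • U)
    (hUodd : Odd (U 0 0) ∨ Odd (U 0 1) ∨ Odd (U 1 0) ∨ Odd (U 1 1))
    (e : ℕ) (u' : ℤ) (hu_ne : U 1 0 ≠ 0) (hu : U 1 0 = 2 ^ e * u') (hu'_odd : Odd u')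
 :
    !![s (2 * (L : ℤ) - 1), s (2 * (L : ℤ) - 2); t (2 * (L : ℤ) - 1), t (2 * (L : ℤ) - 2)]
        = (!![s ((L : ℤ) - 1), s ((L : ℤ) - 2); t ((L : ℤ) - 1), t ((L : ℤ) - 2)]) ^ 2 ∧
    !![s (2 * (L : ℤ) - 1), s (2 * (L : ℤ) - 2); t (2 * (L : ℤ) - 1), t (2 * (L : ℤ) - 2)]
        = 1 + (2 ^ (m + 1) : ℤ) • (U + (2 ^ (m - 1) : ℤ) • U ^ 2) ∧
    (U + (2 ^ (m - 1) : ℤ) • U ^ 2) 1 0 ≡ U 1 0 [ZMOD 2 ^ (e + 1)] ∧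
    ∃ u'' : ℤ, Odd u'' ∧ (U + (2 ^ (m - 1) : ℤ) • U ^ 2) 1 0 = 2 ^ e * u'' := by
  -- Step recurrence in matrix form
  have hrec : ∀ n : ℤ, 1 ≤ n →
      !![s n, s (n-1); t n, t (n-1)]
        = !![s (n-1), s (n-2); t (n-1), t (n-2)] * !![a n, 1; 1, 0] := by
    intro n hn
    rw [hs_rec n hn, ht_rec n hn]
    ext i j
    fin_cases i <;> fin_cases j <;>
      simp [Matrix.mul_apply, Fin.sum_univ_two] <;> ring
  -- Periodicity for multiples of l
  have hper : ∀ c : ℕ, ∀ k : ℤ, 0 ≤ k → a (k + l * c) = a k := by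
    intro c
    induction c with
    | zero => intro k hk; simp
    | succ c ih =>
        intro k hk
        have h1 : (k + l * c) + (l : ℤ) = k + l * (c + 1 : ℕ) := by push_cast; ring
        have h2 := ha_per (k + l * c) (by positivity)
        rw [h1] at h2
        rw [h2, ih k hk]
  have hperL : ∀ k : ℤ, 0 ≤ k → a (k + L) = a k := by
    obtain ⟨c, hc⟩ := hL_mul
    intro k hk
    have : (k + (L : ℤ)) = k + l * c := by rw [hc]; push_cast; ring
    rw [this]; exact hper c k hk
  have hL1 : (1:ℤ) ≤ (L:ℤ) := by exact_mod_cast hL_pos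
  -- Main multiplicativity
  have key : ∀ n : ℕ, 1 ≤ n →
      !![s ((L:ℤ) + n - 1), s ((L:ℤ) + n - 2); t ((L:ℤ) + n - 1), t ((L:ℤ) + n - 2)]
        = !![s ((L:ℤ) - 1), s ((L:ℤ) - 2); t ((L:ℤ) - 1), t ((L:ℤ) - 2)]
          * !![s ((n:ℤ) - 1), s ((n:ℤ) - 2); t ((n:ℤ) - 1), t ((n:ℤ) - 2)] := by
    intro n hn
    induction n, hn using Nat.le_induction with
    | base =>
        have haL : a ((L:ℤ)) = a 0 := by simpa using hperL 0 le_rfl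
        have h := hrec (L:ℤ) hL1
        push_cast
        rw [show (L:ℤ) + 1 - 1 = (L:ℤ) by ring, show (L:ℤ) + 1 - 2 = (L:ℤ) - 1 by ring,
            hs_zero, ht_zero, hs_neg, ht_neg, ← haL]
        exact h
    | succ n hn ih =>
        have hn0 : (0:ℤ) ≤ (n:ℤ) := Int.natCast_nonneg n
        have hn1 : (1:ℤ) ≤ (n:ℤ) := by exact_mod_cast hn
        have hLn1 : (1:ℤ) ≤ (L:ℤ) + n := by linarith
        have h1 := hrec ((L:ℤ) + n) hLn1
        have h2 := hrec (n:ℤ) hn1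
        have han : a ((L:ℤ) + n) = a n := by
          have := hperL n hn0; rw [add_comm] at this; exact this
        push_cast
        rw [show (L:ℤ) + (n + 1) - 1 = (L:ℤ) + n by ring,
            show (L:ℤ) + (n + 1) - 2 = (L:ℤ) + n - 1 by ring,
            show (n:ℤ) + 1 - 1 = (n:ℤ) by ring,
            show (n:ℤ) + 1 - 2 = (n:ℤ) - 1 by ring,
            h1, ih, han, Matrix.mul_assoc, h2]
  -- First conjunct
  have hfirst :
      !![s (2 * (L : ℤ) - 1), s (2 * (L : ℤ) - 2); t (2 * (L : ℤ) - 1), t (2 * (L : ℤ) - 2)]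
        = (!![s ((L : ℤ) - 1), s ((L : ℤ) - 2); t ((L : ℤ) - 1), t ((L : ℤ) - 2)]) ^ 2 := by
    have hk := key L hL_pos
    rw [show 2 * (L:ℤ) - 1 = (L:ℤ) + L - 1 by ring,
        show 2 * (L:ℤ) - 2 = (L:ℤ) + L - 2 by ring, pow_two]
    exact hk
  -- Squaring identity
  have key2 : ∀ (c : ℤ) (V : Matrix (Fin 2) (Fin 2) ℤ),
      ((1 : Matrix (Fin 2) (Fin 2) ℤ) + (2*c) • V)^2 = 1 + (4*c) • (V + c • V^2) := by
    intro c V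
    have hmul : ((2*c) • V) * ((2*c) • V) = (4*(c*c)) • (V*V) := by
      rw [Matrix.smul_mul, Matrix.mul_smul, smul_smul]
      congr 1; ring
    rw [pow_two, add_mul, mul_add, mul_add, hmul, pow_two,
        smul_add, smul_smul, show (4:ℤ)*c*c = 4*(c*c) by ring]
    simp only [one_mul, mul_one]
    rw [show (4:ℤ)*c = 2*c + 2*c by ring, add_smul]
    abel
  have e1 : (2:ℤ)^m = 2 * 2^(m-1) := by
    rw [← pow_succ']; congr 1; omega
  have e2 : (2:ℤ)^(m+1) = 4 * 2^(m-1) := by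
    have h4 : (4:ℤ) = 2^2 := by norm_num
    rw [h4, ← pow_add]; congr 1; omega
  have hsecond :
      !![s (2 * (L : ℤ) - 1), s (2 * (L : ℤ) - 2); t (2 * (L : ℤ) - 1), t (2 * (L : ℤ) - 2)]
        = 1 + (2 ^ (m + 1) : ℤ) • (U + (2 ^ (m - 1) : ℤ) • U ^ 2) := by
    rw [hfirst, hDU, e1, e2]
    exact key2 (2^(m-1)) U
  -- Entry computation
  have hent : (U + (2^(m-1) : ℤ) • U ^ 2) 1 0
      = U 1 0 + 2^(m-1) * (U 1 0 * U 0 0 + U 1 1 * U 1 0) := by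
    rw [Matrix.add_apply, Matrix.smul_apply, smul_eq_mul, pow_two, Matrix.mul_apply,
        Fin.sum_univ_two]
  have em1 : (2:ℤ)^(m-1) = 2 * 2^(m-2) := by
    rw [← pow_succ']; congr 1; omega
  have hdvd : (2:ℤ)^(e+1) ∣ 2^(m-1) * (U 1 0 * U 0 0 + U 1 1 * U 1 0) := by
    refine ⟨2^(m-2) * u' * (U 0 0 + U 1 1), ?_⟩
    rw [hu, em1]; ring
  have hthird : (U + (2 ^ (m - 1) : ℤ) • U ^ 2) 1 0 ≡ U 1 0 [ZMOD 2 ^ (e + 1)] := by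
    have hdiff : (U + (2^(m-1) : ℤ) • U ^ 2) 1 0 - U 1 0
        = 2^(m-1) * (U 1 0 * U 0 0 + U 1 1 * U 1 0) := by
      rw [hent]; ring
    have h3 : U 1 0 ≡ (U + (2^(m-1) : ℤ) • U ^ 2) 1 0 [ZMOD 2 ^ (e + 1)] :=
      (Int.modEq_iff_dvd).mpr (by rw [hdiff]; exact hdvd)
    exact h3.symm
  refine ⟨hfirst, hsecond, hthird, ⟨u' * (1 + 2^(m-1) * (U 0 0 + U 1 1)), ?_, ?_⟩⟩
  · have heven : Even ((2:ℤ)^(m-1) * (U 0 0 + U 1 1)) := by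
      refine Even.mul_right ⟨2^(m-2), ?_⟩ _
      rw [em1]; ring
    have hodd1 : Odd (1 + (2:ℤ)^(m-1) * (U 0 0 + U 1 1)) := by
      rw [add_comm]; exact heven.add_one
    exact hu'_odd.mul hodd1
  · rw [hent, hu]; ring
end

section
/- Suppose some convergent is critical with respect to L. Then there exist sequences (k_j)_{j≥1} and (r_j)_{j≥1} of nonnegative integers, strictly increasing in both arguments, such that for every j ≥ 1 the convergent s_{k_j}/t_{k_j} is critical with respect to 2^{r_j} L but not with respect to 2^{r_j+1} L; here, for r ≥ 0, 's_k/t_k is critical with respect to 2^r L' means k ≤ 2^r L − 1, s_k ≡ 3 (mod 4) and 2^{m+r+e} divides t_k. -/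
/-!
Write `N = 2 ^ r L`. Then `D_N ≡ I (mod 4)` and its lower-left entry `t (N - 1)` is
`2 ^ (m + r + e)` times an odd number: this holds for `r = 0` by hypothesis and survives the doubling
`D_{2N} = D_N ^ 2`. Since `D_{k+N+1} = D_N D_{k+1}`, moving a convergent critical with respect to
`N` forward by `N` keeps `s_k` modulo 4 and, if `2 ^ (m + r + e)` divides `t_k` exactly, adds to
`t_k` another odd multiple of `2 ^ (m + r + e)`, so the moved convergent is critical with respect
to `2N`. Starting from the given critical convergent and, level by level, either keeping it or
moving it on, we get a convergent critical at every level. As `t_k ≠ 0` is divisible by only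
finitely many powers of 2, the convergent cannot stay put from some level on; the levels `r_j`
at which it moves, with the convergents moved there, give the two sequences.
-/

open Filter

theorem Int.ModEq.odd_of_odd {n x c : ℤ} (h : x ≡ c [ZMOD n]) (hn : 2 ∣ n) (hc : Odd c) :
    Odd x :=
  Int.odd_iff.mpr (Eq.trans (h.of_dvd hn) (Int.odd_iff.mp hc))

theorem exists_odd_of_two_pow_dvd_of_not_dvd {x : ℤ} {j : ℕ} (h : 2 ^ j ∣ x)
    (h' : ¬ 2 ^ (j + 1) ∣ x) : ∃ c, Odd c ∧ x = 2 ^ j * c := by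
  obtain ⟨c, rfl⟩ := h
  exact ⟨c, Int.not_even_iff_odd.mp fun ⟨d, hd⟩ => h' ⟨d, by rw [hd]; ring⟩, rfl⟩

theorem apply_add_eq_of_dvd {α : Type*} {f : ℤ → α} {p N : ℕ}
    (hf : ∀ k, 0 ≤ k → f (k + p) = f k) (hpN : p ∣ N) : ∀ k, 0 ≤ k → f (k + N) = f k := by
  obtain ⟨c, rfl⟩ := hpN
  induction c with
  | zero => simp
  | succ c ih =>
    intro k hk
    calc f (k + (p * (c + 1) : ℕ)) = f (k + (p * c : ℕ) + p) := by push_cast; ring_nf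
      _ = f k := by rw [hf _ (by positivity), ih k hk]

def IsContinuantSeq (a f : ℤ → ℤ) : Prop :=
  ∀ k : ℤ, 1 ≤ k → f k = a k * f (k - 1) + f (k - 2)

namespace IsContinuantSeq

variable {a f g : ℤ → ℤ}

theorem eq_of_eq_neg_one_of_eq_zero (hf : IsContinuantSeq a f) (hg : IsContinuantSeq a g)
    (h₁ : f (-1) = g (-1)) (h₀ : f 0 = g 0) {k : ℤ} (hk : -1 ≤ k) : f k = g k := by
  suffices ∀ k, 0 ≤ k → f (k - 1) = g (k - 1) ∧ f k = g k by
    simpa using (this (k + 1) (by omega)).1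
  refine Int.leInduction ⟨h₁, h₀⟩ fun k hk ⟨ih₁, ih₀⟩ => ⟨by simpa using ih₀, ?_⟩
  rw [hf _ (by omega), hg _ (by omega)]
  simp only [add_sub_cancel_right, show k + 1 - 2 = k - 1 by ring, ih₀, ih₁]

theorem linear_comb (hf : IsContinuantSeq a f) (hg : IsContinuantSeq a g) (c d : ℤ) :
    IsContinuantSeq a fun k => c * f k + d * g k := fun k hk => by
  dsimp only
  rw [hf k hk, hg k hk]; ring

theorem comp_add (hf : IsContinuantSeq a f) {N : ℤ} (hN : 0 ≤ N)
    (ha : ∀ k, 0 ≤ k → a (k + N) = a k) : IsContinuantSeq a fun k => f (k + N) := fun k hk => by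
  dsimp only
  rw [hf _ (by omega), ha k (by omega), sub_add_eq_add_sub, sub_add_eq_add_sub]

end IsContinuantSeq

structure IsConvergentPair (a s t : ℤ → ℤ) : Prop where
  s_neg_one : s (-1) = 1
  t_neg_one : t (-1) = 0
  s_zero : s 0 = a 0
  t_zero : t 0 = 1
  s_rec : IsContinuantSeq a s
  t_rec : IsContinuantSeq a t

namespace IsConvergentPair

variable {a s t : ℤ → ℤ} (h : IsConvergentPair a s t)
include h

theorem one_le_t (ha : ∀ k, 0 ≤ k → 0 < a k) {k : ℤ} (hk : 0 ≤ k) : 1 ≤ t k := by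
  suffices ∀ k, 0 ≤ k → 0 ≤ t (k - 1) ∧ 1 ≤ t k from (this k hk).2
  refine Int.leInduction ⟨by simp [h.t_neg_one], h.t_zero.ge⟩ fun k hk ⟨ih₁, ih₀⟩ => ?_
  refine ⟨by simpa using ih₀.trans' zero_le_one, ?_⟩
  rw [h.t_rec _ (by omega), add_sub_cancel_right, show k + 1 - 2 = k - 1 by ring]
  nlinarith [ha (k + 1) (by omega)]

/-- The matrix identity `D_{k+N+1} = D_N D_{k+1}`, column by column. -/
theorem shift_eq {q : ℤ → ℤ} (hq : IsContinuantSeq a q) {N : ℤ} (hN : 1 ≤ N)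
    (ha : ∀ k, 0 ≤ k → a (k + N) = a k) {k : ℤ} (hk : -1 ≤ k) :
    q (k + N) = q (N - 1) * s k + q (N - 2) * t k := by
  refine (hq.comp_add (by omega) ha).eq_of_eq_neg_one_of_eq_zero
    (h.s_rec.linear_comb h.t_rec _ _) ?_ ?_ hk
  · simp [h.s_neg_one, h.t_neg_one, neg_add_eq_sub]
  · simp only [zero_add, h.s_zero, h.t_zero, hq N hN, ← ha 0 le_rfl]
    ring

end IsConvergentPair

/-- `D_N ≡ I (mod 4)`, with lower-left entry `t (N - 1)` of exact 2-adic valuation `j`. -/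
def IsLevel (s t : ℤ → ℤ) (N : ℤ) (j : ℕ) : Prop :=
  s (N - 1) ≡ 1 [ZMOD 4] ∧ s (N - 2) ≡ 0 [ZMOD 4] ∧ t (N - 2) ≡ 1 [ZMOD 4] ∧
    ∃ w, Odd w ∧ t (N - 1) = 2 ^ j * w

/-- With `N = 2 ^ r L` and `j = m + r + e`, this says that `s k / t k` is critical with respect
to `2 ^ r L`. -/
def IsCritical (s t : ℤ → ℤ) (N : ℤ) (j k : ℕ) : Prop :=
  (k : ℤ) ≤ N - 1 ∧ s k ≡ 3 [ZMOD 4] ∧ (2 : ℤ) ^ j ∣ t k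

namespace IsConvergentPair

variable {a s t : ℤ → ℤ} (h : IsConvergentPair a s t) {N : ℤ} (hN : 1 ≤ N)
  (ha : ∀ k, 0 ≤ k → a (k + N) = a k) {j : ℕ}
include h hN ha

/-- The doubling relation `D_{2N} = D_N ^ 2`, read modulo 4. -/
theorem isLevel_add_self (hlev : IsLevel s t N j) : IsLevel s t (N + N) (j + 1) := by
  obtain ⟨hs₁, hs₂, ht₂, w, hw, ht₁⟩ := hlev
  have e₁ : N + N - 1 = N - 1 + N := by ring
  have e₂ : N + N - 2 = N - 2 + N := by ring
  refine ⟨?_, ?_, ?_, ?_⟩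
  · rw [e₁, h.shift_eq h.s_rec hN ha (by omega)]
    calc s (N - 1) * s (N - 1) + s (N - 2) * t (N - 1)
        ≡ 1 * 1 + 0 * t (N - 1) [ZMOD 4] := by gcongr
      _ = 1 := by ring
  · rw [e₂, h.shift_eq h.s_rec hN ha (by omega)]
    calc s (N - 1) * s (N - 2) + s (N - 2) * t (N - 2)
        ≡ 1 * 0 + 0 * t (N - 2) [ZMOD 4] := by gcongr
      _ = 0 := by ring
  · rw [e₂, h.shift_eq h.t_rec hN ha (by omega)]
    calc t (N - 1) * s (N - 2) + t (N - 2) * t (N - 2)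
        ≡ t (N - 1) * 0 + 1 * 1 [ZMOD 4] := by gcongr
      _ = 1 := by ring
  · obtain ⟨c, hc⟩ := (hs₁.add ht₂).symm.dvd
    refine ⟨w * (2 * c + 1), hw.mul (odd_two_mul_add_one c), ?_⟩
    rw [e₁, h.shift_eq h.t_rec hN ha (by omega), ht₁]
    linear_combination 2 ^ j * w * hc

theorem s_add_modEq (hlev : IsLevel s t N j) {k : ℤ} (hk : -1 ≤ k) :
    s (k + N) ≡ s k [ZMOD 4] := by
  obtain ⟨hs₁, hs₂, -⟩ := hlev
  rw [h.shift_eq h.s_rec hN ha hk]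
  calc s (N - 1) * s k + s (N - 2) * t k ≡ 1 * s k + 0 * t k [ZMOD 4] := by gcongr
    _ = s k := by ring

theorem two_pow_succ_dvd_t_add (hlev : IsLevel s t N j) {k : ℤ} (hk : -1 ≤ k)
    (hs : Odd (s k)) (ht : 2 ^ j ∣ t k) (ht' : ¬ 2 ^ (j + 1) ∣ t k) :
    2 ^ (j + 1) ∣ t (k + N) := by
  obtain ⟨-, -, ht₂, w, hw, ht₁⟩ := hlev
  obtain ⟨c, hc, htk⟩ := exists_odd_of_two_pow_dvd_of_not_dvd ht ht'
  obtain ⟨d, hd⟩ := (hw.mul hs).add_odd ((ht₂.odd_of_odd (by norm_num) odd_one).mul hc)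
  rw [h.shift_eq h.t_rec hN ha hk, ht₁, htk]
  exact ⟨d, by linear_combination 2 ^ j * hd⟩

end IsConvergentPair

def critSeq (t : ℤ → ℤ) (L j₀ k₀ : ℕ) : ℕ → ℕ
  | 0 => k₀
  | r + 1 => if (2 : ℤ) ^ (j₀ + r + 1) ∣ t (critSeq t L j₀ k₀ r) then critSeq t L j₀ k₀ r
      else critSeq t L j₀ k₀ r + 2 ^ r * L

section critSeq

variable {t : ℤ → ℤ} {L j₀ k₀ : ℕ}

theorem critSeq_mono : Monotone (critSeq t L j₀ k₀) :=
  monotone_nat_of_le_succ fun r => by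
    rw [critSeq]
    split_ifs <;> omega

theorem critSeq_lt_succ (hL : 0 < L) {r : ℕ}
    (hr : ¬ (2 : ℤ) ^ (j₀ + r + 1) ∣ t (critSeq t L j₀ k₀ r)) :
    critSeq t L j₀ k₀ r < critSeq t L j₀ k₀ (r + 1) := by
  rw [critSeq, if_neg hr]
  have : 0 < 2 ^ r * L := by positivity
  omega

theorem isCritical_critSeq {s : ℤ → ℤ} (h₀ : IsCritical s t L j₀ k₀)
    (hstep : ∀ r k, IsCritical s t (2 ^ r * L) (j₀ + r) k → ¬ (2 : ℤ) ^ (j₀ + r + 1) ∣ t k →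
      s (k + 2 ^ r * L) ≡ 3 [ZMOD 4] ∧ (2 : ℤ) ^ (j₀ + r + 1) ∣ t (k + 2 ^ r * L)) (r : ℕ) :
    IsCritical s t (2 ^ r * L) (j₀ + r) (critSeq t L j₀ k₀ r) := by
  induction r with
  | zero => simpa [critSeq] using h₀
  | succ r ih =>
    obtain ⟨hle, hs, ht⟩ := ih
    have hle' : (critSeq t L j₀ k₀ r : ℤ) + 2 ^ r * L ≤ 2 ^ (r + 1) * L - 1 := by
      rw [pow_succ]; linarith
    rw [critSeq]
    split_ifs with hdvd
    · exact ⟨by linarith [Nat.cast_nonneg (α := ℤ) L, pow_pos (two_pos (α := ℤ)) r], hs, hdvd⟩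
    · exact ⟨hle', hstep r _ ⟨hle, hs, ht⟩ hdvd⟩

theorem frequently_not_dvd_critSeq (ht : ∀ k : ℕ, t k ≠ 0)
    (hdvd : ∀ r, (2 : ℤ) ^ (j₀ + r) ∣ t (critSeq t L j₀ k₀ r)) :
    ∃ᶠ r in atTop, ¬ (2 : ℤ) ^ (j₀ + r + 1) ∣ t (critSeq t L j₀ k₀ r) := by
  by_contra hfin
  obtain ⟨R, hR⟩ := eventually_atTop.mp (not_frequently.mp hfin)
  have hconst : ∀ r, R ≤ r → critSeq t L j₀ k₀ r = critSeq t L j₀ k₀ R :=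
    Nat.le_induction rfl fun r hr ih => by rw [critSeq, if_pos (not_not.mp (hR r hr)), ih]
  obtain ⟨n, hn⟩ := Int.finiteMultiplicity_iff (a := 2).mpr ⟨by decide, ht (critSeq t L j₀ k₀ R)⟩
  have := hdvd (R + n + 1)
  rw [hconst _ (by omega)] at this
  exact hn ((pow_dvd_pow 2 (by omega)).trans this)

end critSeq

theorem IsConvergentPair.exists_strictMono_isCritical {a s t : ℤ → ℤ}
    (h : IsConvergentPair a s t) (ha_pos : ∀ k, 0 ≤ k → 0 < a k) {L j₀ k₀ : ℕ} (hL : 0 < L)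
    (hper : ∀ r : ℕ, ∀ k, 0 ≤ k → a (k + 2 ^ r * L) = a k) (hlev : IsLevel s t L j₀)
    (hk₀ : IsCritical s t L j₀ k₀) :
    ∃ kseq rseq : ℕ → ℕ, StrictMono kseq ∧ StrictMono rseq ∧ ∀ i,
      IsCritical s t (2 ^ rseq i * L) (j₀ + rseq i) (kseq i) ∧
      ¬ IsCritical s t (2 ^ (rseq i + 1) * L) (j₀ + (rseq i + 1)) (kseq i) := by
  have hN (r : ℕ) : 1 ≤ (2 : ℤ) ^ r * L :=
    one_le_mul_of_one_le_of_one_le (one_le_pow₀ one_le_two) (by exact_mod_cast hL)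
  have hlevels (r : ℕ) : IsLevel s t (2 ^ r * L) (j₀ + r) := by
    induction r with
    | zero => simpa using hlev
    | succ r ih =>
      simpa [pow_succ, mul_two, add_mul, add_assoc] using h.isLevel_add_self (hN r) (hper r) ih
  have hcrit := isCritical_critSeq (t := t) (L := L) hk₀ fun r k ⟨_, hs, ht⟩ ht' =>
    ⟨(h.s_add_modEq (hN r) (hper r) (hlevels r) (by omega)).trans hs,
      h.two_pow_succ_dvd_t_add (hN r) (hper r) (hlevels r) (by omega)
        (hs.odd_of_odd (by norm_num) (by decide)) ht ht'⟩
  have ht_ne (k : ℕ) : t k ≠ 0 := (zero_lt_one.trans_le (h.one_le_t ha_pos k.cast_nonneg)).ne'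
  obtain ⟨φ, hφ, hjump⟩ := extraction_of_frequently_atTop <|
    frequently_not_dvd_critSeq ht_ne fun r => (hcrit r).2.2
  refine ⟨critSeq t L j₀ k₀ ∘ φ, φ, strictMono_nat_of_lt_succ fun i => ?_, hφ,
    fun i => ⟨hcrit (φ i), fun hc => hjump i ?_⟩⟩
  · exact (critSeq_lt_succ hL (hjump i)).trans_le (critSeq_mono (hφ (lt_add_one i)))
  · simpa [add_assoc] using hc.2.2

theorem exists_increasing_critical_sequence_general
    (a s t : ℤ → ℤ) (l : ℕ)
    (ha_pos : ∀ k : ℤ, 0 ≤ k → 0 < a k)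
    (ha_per : ∀ k : ℤ, 0 ≤ k → a (k + l) = a k)
    (hs_neg : s (-1) = 1) (ht_neg : t (-1) = 0)
    (hs_zero : s 0 = a 0) (ht_zero : t 0 = 1)
    (hs_rec : ∀ k : ℤ, 1 ≤ k → s k = a k * s (k - 1) + s (k - 2))
    (ht_rec : ∀ k : ℤ, 1 ≤ k → t k = a k * t (k - 1) + t (k - 2))
    (L : ℕ) (hL_pos : 0 < L) (hL_mul : l ∣ L)
    (hD : s ((L : ℤ) - 1) ≡ 1 [ZMOD 4] ∧ s ((L : ℤ) - 2) ≡ 0 [ZMOD 4] ∧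
          t ((L : ℤ) - 1) ≡ 0 [ZMOD 4] ∧ t ((L : ℤ) - 2) ≡ 1 [ZMOD 4])
    (m : ℕ) (x y u v : ℤ)
    (hDU : s ((L : ℤ) - 1) = 1 + 2 ^ m * x ∧ s ((L : ℤ) - 2) = 2 ^ m * y ∧
           t ((L : ℤ) - 1) = 2 ^ m * u ∧ t ((L : ℤ) - 2) = 1 + 2 ^ m * v)
    (e : ℕ) (u' : ℤ) (hu : u = 2 ^ e * u') (hu'_odd : Odd u')
    (hcrit : ∃ k : ℤ, 0 ≤ k ∧ k ≤ (L : ℤ) - 1 ∧ s k ≡ 3 [ZMOD 4] ∧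
      (2 ^ (m + e) : ℤ) ∣ t k) :
    ∃ kseq rseq : ℕ → ℕ, StrictMono kseq ∧ StrictMono rseq ∧
      ∀ j : ℕ,
        ((kseq j : ℤ) ≤ 2 ^ (rseq j) * (L : ℤ) - 1 ∧ s (kseq j) ≡ 3 [ZMOD 4] ∧
          (2 ^ (m + rseq j + e) : ℤ) ∣ t (kseq j)) ∧
        ¬ ((kseq j : ℤ) ≤ 2 ^ (rseq j + 1) * (L : ℤ) - 1 ∧ s (kseq j) ≡ 3 [ZMOD 4] ∧
            (2 ^ (m + (rseq j + 1) + e) : ℤ) ∣ t (kseq j)) := by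
  obtain ⟨k₀, hk₀, hk₀L, hk₀s, hk₀t⟩ := hcrit
  have hpair : IsConvergentPair a s t := ⟨hs_neg, ht_neg, hs_zero, ht_zero, hs_rec, ht_rec⟩
  have hper (r : ℕ) : ∀ k, 0 ≤ k → a (k + 2 ^ r * L) = a k := by
    exact_mod_cast apply_add_eq_of_dvd ha_per (dvd_mul_of_dvd_right hL_mul (2 ^ r))
  have hlev : IsLevel s t L (m + e) :=
    ⟨hD.1, hD.2.1, hD.2.2.2, u', hu'_odd, by rw [hDU.2.2.1, hu]; ring⟩
  have hcrit₀ : IsCritical s t L (m + e) k₀.toNat := by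
    simpa only [IsCritical, Int.toNat_of_nonneg hk₀] using ⟨hk₀L, hk₀s, hk₀t⟩
  obtain ⟨kseq, rseq, hk, hr, hcrit⟩ :=
    hpair.exists_strictMono_isCritical ha_pos hL_pos hper hlev hcrit₀
  refine ⟨kseq, rseq, hk, hr, fun i => ?_⟩
  simpa only [IsCritical, Nat.add_right_comm m e] using hcrit i

/-- If some convergent is critical with respect to `L`, there are strictly increasing
sequences `(kseq j)` and `(rseq j)` such that `s (kseq j) / t (kseq j)` is critical with
respect to `2^(rseq j) L` but not with respect to `2^(rseq j + 1) L`. -/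
theorem exists_increasing_critical_sequence
    (a s t : ℤ → ℤ) (l : ℕ) (hl : 1 ≤ l)
    (ha_pos : ∀ k : ℤ, 0 ≤ k → 0 < a k)
    (ha_per : ∀ k : ℤ, 0 ≤ k → a (k + l) = a k)
    (hs_neg : s (-1) = 1) (ht_neg : t (-1) = 0)
    (hs_zero : s 0 = a 0) (ht_zero : t 0 = 1)
    (hs_rec : ∀ k : ℤ, 1 ≤ k → s k = a k * s (k - 1) + s (k - 2))
    (ht_rec : ∀ k : ℤ, 1 ≤ k → t k = a k * t (k - 1) + t (k - 2))
    (L : ℕ) (hL_pos : 0 < L) (hL_even : Even L) (hL_mul : l ∣ L)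
    (hD : s ((L : ℤ) - 1) ≡ 1 [ZMOD 4] ∧ s ((L : ℤ) - 2) ≡ 0 [ZMOD 4] ∧
          t ((L : ℤ) - 1) ≡ 0 [ZMOD 4] ∧ t ((L : ℤ) - 2) ≡ 1 [ZMOD 4])
    (hJpar : ∀ k : ℤ, 0 ≤ k → t (k + L) ≡ t k [ZMOD 2])
    (hJper : ∀ k : ℤ, 0 ≤ k → Odd (t k) →
      jacobiSym (s (k + L)) (t (k + L)).toNat = jacobiSym (s k) (t k).toNat)
    (m : ℕ) (hm : 2 ≤ m) (x y u v : ℤ)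
    (hDU : s ((L : ℤ) - 1) = 1 + 2 ^ m * x ∧ s ((L : ℤ) - 2) = 2 ^ m * y ∧
           t ((L : ℤ) - 1) = 2 ^ m * u ∧ t ((L : ℤ) - 2) = 1 + 2 ^ m * v)
    (hUodd : Odd x ∨ Odd y ∨ Odd u ∨ Odd v)
    (e : ℕ) (u' : ℤ) (hu_ne : u ≠ 0) (hu : u = 2 ^ e * u') (hu'_odd : Odd u')
    (hcrit : ∃ k : ℤ, 0 ≤ k ∧ k ≤ (L : ℤ) - 1 ∧ s k ≡ 3 [ZMOD 4] ∧
      (2 ^ (m + e) : ℤ) ∣ t k) :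
    ∃ kseq rseq : ℕ → ℕ, StrictMono kseq ∧ StrictMono rseq ∧
      ∀ j : ℕ,
        ((kseq j : ℤ) ≤ 2 ^ (rseq j) * (L : ℤ) - 1 ∧ s (kseq j) ≡ 3 [ZMOD 4] ∧
          (2 ^ (m + rseq j + e) : ℤ) ∣ t (kseq j)) ∧
        ¬ ((kseq j : ℤ) ≤ 2 ^ (rseq j + 1) * (L : ℤ) - 1 ∧ s (kseq j) ≡ 3 [ZMOD 4] ∧
            (2 ^ (m + (rseq j + 1) + e) : ℤ) ∣ t (kseq j)) :=
  exists_increasing_critical_sequence_general a s t l ha_pos ha_per hs_neg ht_neg hs_zero ht_zero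
    hs_rec ht_rec L hL_pos hL_mul hD m x y u v hDU e u' hu hu'_odd hcrit
end

section
/- Write D_L = I + 2^m U with U = (x y; u v). Then for every k ≥ 0 one has t_{k+L} = 2^m u s_k + t_k + 2^m v t_k; consequently, if u = 2^e u' with u' odd and t_k = 2^{m+f} t' with t' odd and 1−m ≤ f, then t_{k+L} = 2^{m+f} (t' + 2^{e−f} u' s_k + 2^m v t') whenever f ≤ e. -/
/-!
Since `L` is a period of `a`, the shifted sequence `k ↦ w (k + L)` of any solution `w` of
`w k = a k * w (k - 1) + w (k - 2)` solves the same recurrence, and a solution is determined by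
its values at `-1` and `0`. Comparing these with the fundamental solutions `s` (values `1, a 0`)
and `t` (values `0, 1`) gives `w (k + L) = w (L - 1) * s k + w (L - 2) * t k`. For `w = t` this
is the second row of `D_L` applied to `(s k, t k)`, and `D_L = I + 2^m U` yields the formula.
-/

lemma apply_add_eq_of_period_dvd {a : ℤ → ℤ} {l L : ℕ}
    (ha_per : ∀ k : ℤ, 0 ≤ k → a (k + l) = a k) (hL : l ∣ L) :
    ∀ k : ℤ, 0 ≤ k → a (k + L) = a k := by
  obtain ⟨c, rfl⟩ := hL
  induction c with
  | zero => simp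
  | succ c ih =>
    intro k hk
    have hsplit : k + ((l * (c + 1) : ℕ) : ℤ) = k + ((l * c : ℕ) : ℤ) + l := by push_cast; ring
    rw [hsplit, ha_per _ (by positivity), ih k hk]

lemma eq_of_rec_of_eq_init {a f g : ℤ → ℤ}
    (hf : ∀ k : ℤ, 1 ≤ k → f k = a k * f (k - 1) + f (k - 2))
    (hg : ∀ k : ℤ, 1 ≤ k → g k = a k * g (k - 1) + g (k - 2))
    (h_neg : f (-1) = g (-1)) (h_zero : f 0 = g 0) :
    ∀ k : ℤ, 0 ≤ k → f k = g k ∧ f (k - 1) = g (k - 1) := by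
  intro k hk
  induction k, hk using Int.leInduction with
  | base => exact ⟨h_zero, h_neg⟩
  | succ k hk ih =>
    have hk1 : (1 : ℤ) ≤ k + 1 := by omega
    refine ⟨?_, by simpa using ih.1⟩
    rw [hf _ hk1, hg _ hk1, add_sub_cancel_right, show k + 1 - 2 = k - 1 by ring, ih.1, ih.2]

lemma rec_shift_eq {a s t w : ℤ → ℤ} {l L : ℕ}
    (ha_per : ∀ k : ℤ, 0 ≤ k → a (k + l) = a k) (hL_pos : 0 < L) (hL_mul : l ∣ L)
    (hs_neg : s (-1) = 1) (ht_neg : t (-1) = 0) (hs_zero : s 0 = a 0) (ht_zero : t 0 = 1)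
    (hs_rec : ∀ k : ℤ, 1 ≤ k → s k = a k * s (k - 1) + s (k - 2))
    (ht_rec : ∀ k : ℤ, 1 ≤ k → t k = a k * t (k - 1) + t (k - 2))
    (hw_rec : ∀ k : ℤ, 1 ≤ k → w k = a k * w (k - 1) + w (k - 2)) :
    ∀ k : ℤ, 0 ≤ k → w (k + L) = w (L - 1) * s k + w (L - 2) * t k := by
  have haL := apply_add_eq_of_period_dvd ha_per hL_mul
  have hshift_rec : ∀ k : ℤ, 1 ≤ k → w (k + L) = a k * w (k - 1 + L) + w (k - 2 + L) := by
    intro k hk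
    rw [hw_rec _ (by omega), haL k (by omega), show k + L - 1 = k - 1 + L by ring,
      show k + L - 2 = k - 2 + L by ring]
  have hcomb_rec : ∀ k : ℤ, 1 ≤ k → w (L - 1) * s k + w (L - 2) * t k =
      a k * (w (L - 1) * s (k - 1) + w (L - 2) * t (k - 1)) +
        (w (L - 1) * s (k - 2) + w (L - 2) * t (k - 2)) := by
    intro k hk
    rw [hs_rec k hk, ht_rec k hk]
    ring
  have h_neg : w (-1 + L) = w (L - 1) * s (-1) + w (L - 2) * t (-1) := by
    rw [hs_neg, ht_neg, neg_add_eq_sub]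
    ring
  have h_zero : w (0 + L) = w (L - 1) * s 0 + w (L - 2) * t 0 := by
    rw [zero_add, hw_rec _ (by omega), show a L = a 0 by simpa using haL 0 le_rfl, hs_zero, ht_zero]
    ring
  exact fun k hk => (eq_of_rec_of_eq_init hshift_rec hcomb_rec h_neg h_zero k hk).1

theorem t_shift_formula_general
    (a s t : ℤ → ℤ) (l : ℕ)
    (ha_per : ∀ k : ℤ, 0 ≤ k → a (k + l) = a k)
    (hs_neg : s (-1) = 1) (ht_neg : t (-1) = 0)
    (hs_zero : s 0 = a 0) (ht_zero : t 0 = 1)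
    (hs_rec : ∀ k : ℤ, 1 ≤ k → s k = a k * s (k - 1) + s (k - 2))
    (ht_rec : ∀ k : ℤ, 1 ≤ k → t k = a k * t (k - 1) + t (k - 2))
    (L : ℕ) (hL_pos : 0 < L) (hL_mul : l ∣ L)
    (m : ℕ) (x y u v : ℤ)
    (hDU : s ((L : ℤ) - 1) = 1 + 2 ^ m * x ∧ s ((L : ℤ) - 2) = 2 ^ m * y ∧
           t ((L : ℤ) - 1) = 2 ^ m * u ∧ t ((L : ℤ) - 2) = 1 + 2 ^ m * v) :
    (∀ k : ℤ, 0 ≤ k → t (k + L) = 2 ^ m * u * s k + t k + 2 ^ m * v * t k) ∧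
    (∀ k : ℤ, 0 ≤ k → ∀ (e g : ℕ) (u' t' : ℤ), u = 2 ^ e * u' → Odd u' → Odd t' →
      t k = 2 ^ g * t' → 1 ≤ g → g ≤ m + e →
      t (k + L) = 2 ^ g * (t' + 2 ^ (m + e - g) * u' * s k + 2 ^ m * v * t')) := by
  obtain ⟨-, -, ht_one, ht_two⟩ := hDU
  have shift : ∀ k : ℤ, 0 ≤ k → t (k + L) = 2 ^ m * u * s k + t k + 2 ^ m * v * t k := by
    intro k hk
    rw [rec_shift_eq ha_per hL_pos hL_mul hs_neg ht_neg hs_zero ht_zero hs_rec ht_rec ht_rec k hk,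
      ht_one, ht_two]
    ring
  refine ⟨shift, fun k hk e g u' t' hu _ _ htk _ hgme => ?_⟩
  have hpow : (2 : ℤ) ^ g * 2 ^ (m + e - g) = 2 ^ m * 2 ^ e := by
    rw [← pow_add, ← pow_add, Nat.add_sub_cancel' hgme]
  rw [shift k hk, hu, htk]
  linear_combination (-(s k * u')) * hpow

/-- With `D_L = I + 2^m U`, `U = (x y; u v)`: `t (k+L) = 2^m u s k + t k + 2^m v t k`
for every `k ≥ 0`; consequently, if `u = 2^e u'` with `u'` odd and `t k = 2^g t'` with
`t'` odd, `1 ≤ g ≤ m + e` (i.e. `g = m + f` with `1 - m ≤ f ≤ e`), then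
`t (k+L) = 2^g (t' + 2^(m+e-g) u' s k + 2^m v t')`. -/
theorem t_shift_formula
    (a s t : ℤ → ℤ) (l : ℕ) (hl : 1 ≤ l)
    (ha_pos : ∀ k : ℤ, 0 ≤ k → 0 < a k)
    (ha_per : ∀ k : ℤ, 0 ≤ k → a (k + l) = a k)
    (hs_neg : s (-1) = 1) (ht_neg : t (-1) = 0)
    (hs_zero : s 0 = a 0) (ht_zero : t 0 = 1)
    (hs_rec : ∀ k : ℤ, 1 ≤ k → s k = a k * s (k - 1) + s (k - 2))
    (ht_rec : ∀ k : ℤ, 1 ≤ k → t k = a k * t (k - 1) + t (k - 2))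
    (L : ℕ) (hL_pos : 0 < L) (hL_even : Even L) (hL_mul : l ∣ L)
    (m : ℕ) (hm : 2 ≤ m) (x y u v : ℤ)
    (hDU : s ((L : ℤ) - 1) = 1 + 2 ^ m * x ∧ s ((L : ℤ) - 2) = 2 ^ m * y ∧
           t ((L : ℤ) - 1) = 2 ^ m * u ∧ t ((L : ℤ) - 2) = 1 + 2 ^ m * v) :
    (∀ k : ℤ, 0 ≤ k → t (k + L) = 2 ^ m * u * s k + t k + 2 ^ m * v * t k) ∧
    (∀ k : ℤ, 0 ≤ k → ∀ (e g : ℕ) (u' t' : ℤ), u = 2 ^ e * u' → Odd u' → Odd t' →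
      t k = 2 ^ g * t' → 1 ≤ g → g ≤ m + e →
      t (k + L) = 2 ^ g * (t' + 2 ^ (m + e - g) * u' * s k + 2 ^ m * v * t')) :=
  t_shift_formula_general a s t l ha_per hs_neg ht_neg hs_zero ht_zero hs_rec ht_rec L hL_pos hL_mul
    m x y u v hDU
end

section
/- Let k ≥ 1 and suppose t_k is even and s_{k−1} is odd (then s_k and t_{k−1} are odd automatically). With δ = (−1)^{k−1}, the Jacobi symbols satisfy (t_k/s_k) = (−δ/s_k) · (δ/s_{k−1}) · ε(s_{k−1}, s_k) · ε(t_{k−1}, s_{k−1}) · (s_{k−1}/t_{k−1}). -/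
/-- For odd integers `a`, `b`: `ε(a,b) = -1` if `a ≡ b ≡ 3 (mod 4)`, else `1`. -/
def eps (a b : ℤ) : ℤ := if a % 4 = 3 ∧ b % 4 = 3 then -1 else 1

/-!
The convergents satisfy the determinant identity `s k t (k-1) - s (k-1) t k = δ`; as `t k` is
even, it forces `s k` and `t (k-1)` to be odd. Read modulo `s k` it gives
`t k · s (k-1) ≡ -δ`, and read modulo `s (k-1)` it gives `s k · t (k-1) ≡ δ`; since `s (k-1)` and
`t (k-1)` are units modulo `s k` and `s (k-1)` respectively, this turns `(t k / s k)` into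
`(-δ / s k) (s (k-1) / s k)` and `(s k / s (k-1))` into `(δ / s (k-1)) (t (k-1) / s (k-1))`.
Two applications of quadratic reciprocity, to the odd pairs `(s (k-1), s k)` and
`(t (k-1), s (k-1))`, link these and produce the two factors `ε`.
-/

lemma jacobiSym_toNat_eq_eps_mul {a b : ℤ} (ha : 0 < a) (hb : 0 < b) (ha_odd : Odd a)
    (hb_odd : Odd b) : jacobiSym a b.toNat = eps a b * jacobiSym b a.toNat := by
  have ha_mod := Int.odd_iff.mp ha_odd
  have hb_mod := Int.odd_iff.mp hb_odd
  have hrec := jacobiSym.quadratic_reciprocity_if (a := a.toNat) (b := b.toNat) (by omega)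
    (by omega)
  rw [Int.toNat_of_nonneg ha.le, Int.toNat_of_nonneg hb.le] at hrec
  have hmod : (a % 4 = 3 ∧ b % 4 = 3) ↔ (a.toNat % 4 = 3 ∧ b.toNat % 4 = 3) := by omega
  unfold eps
  split_ifs at hrec ⊢ <;> simp_all

lemma jacobiSym_toNat_eq_mul_of_mul_modEq {a b c n : ℤ} (hn : 0 ≤ n) (h : a * b ≡ c [ZMOD n])
    (hc : IsCoprime c n) : jacobiSym a n.toNat = jacobiSym c n.toNat * jacobiSym b n.toNat := by
  obtain ⟨q, hq⟩ := Int.modEq_iff_dvd.mp h.symm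
  have hc_eq : c = a * b + -q * n := by linear_combination -hq
  have hb : IsCoprime b n :=
    (IsCoprime.of_add_mul_right_left (hc_eq ▸ hc)).of_mul_left_right
  have hb_sq : jacobiSym b n.toNat ^ 2 = 1 := by
    apply jacobiSym.sq_one
    rw [Int.toNat_of_nonneg hn]
    exact Int.isCoprime_iff_gcd_eq_one.mp hb
  have hprod : jacobiSym a n.toNat * jacobiSym b n.toNat = jacobiSym c n.toNat := by
    rw [← jacobiSym.mul_left]
    exact jacobiSym.mod_left' (by rw [Int.toNat_of_nonneg hn]; exact h)
  calc jacobiSym a n.toNat = jacobiSym a n.toNat * jacobiSym b n.toNat ^ 2 := by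
        rw [hb_sq, mul_one]
    _ = jacobiSym c n.toNat * jacobiSym b n.toNat := by rw [← hprod]; ring

section Continuant

variable {a u v : ℤ → ℤ}

lemma continuant_pos (ha : ∀ k, 0 ≤ k → 0 < a k) (hu_neg : 0 ≤ u (-1)) (hu_zero : 0 < u 0)
    (hu_rec : ∀ k, 1 ≤ k → u k = a k * u (k - 1) + u (k - 2)) {n : ℤ} (hn : 0 ≤ n) :
    0 < u n := by
  suffices 0 < u n ∧ 0 ≤ u (n - 1) from this.1
  induction n, hn using Int.leInduction with
  | base => exact ⟨hu_zero, hu_neg⟩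
  | succ n hn ih =>
    have hrec := hu_rec (n + 1) (by omega)
    rw [add_sub_cancel_right, show n + 1 - 2 = n - 1 by ring] at hrec
    rw [add_sub_cancel_right, hrec]
    have han := ha (n + 1) (by omega)
    exact ⟨by nlinarith, ih.1.le⟩

lemma casoratian_continuant (hu_rec : ∀ k, 1 ≤ k → u k = a k * u (k - 1) + u (k - 2))
    (hv_rec : ∀ k, 1 ≤ k → v k = a k * v (k - 1) + v (k - 2)) {n : ℤ} (hn : 0 ≤ n) :
    u n * v (n - 1) - u (n - 1) * v n = (-1) ^ n.toNat * (u 0 * v (-1) - u (-1) * v 0) := by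
  induction n, hn using Int.leInduction with
  | base => simp
  | succ n hn ih =>
    have hu := hu_rec (n + 1) (by omega)
    have hv := hv_rec (n + 1) (by omega)
    rw [add_sub_cancel_right, show n + 1 - 2 = n - 1 by ring] at hu hv
    rw [add_sub_cancel_right, show (n + 1).toNat = n.toNat + 1 by omega, pow_succ, hu, hv]
    linear_combination -ih

end Continuant

/-- Case 1 of the proof of Proposition 1: if `k ≥ 1`, `t k` is even and `s (k-1)` is odd,
then with `δ = (-1)^(k-1)` one has
`(t k / s k) = (-δ / s k) (δ / s (k-1)) ε(s (k-1), s k) ε(t (k-1), s (k-1)) (s (k-1) / t (k-1))`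
as Jacobi symbols. -/
theorem reciprocal_jacobi_formula_case_one
    (a s t : ℤ → ℤ)
    (ha_pos : ∀ k : ℤ, 0 ≤ k → 0 < a k)
    (hs_neg : s (-1) = 1) (ht_neg : t (-1) = 0)
    (hs_zero : s 0 = a 0) (ht_zero : t 0 = 1)
    (hs_rec : ∀ k : ℤ, 1 ≤ k → s k = a k * s (k - 1) + s (k - 2))
    (ht_rec : ∀ k : ℤ, 1 ≤ k → t k = a k * t (k - 1) + t (k - 2))
    (k : ℤ) (hk : 1 ≤ k) (htk_even : Even (t k)) (hsk1_odd : Odd (s (k - 1))) :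
    jacobiSym (t k) (s k).toNat =
      jacobiSym (-(-1 : ℤ) ^ (k - 1).toNat) (s k).toNat *
        jacobiSym ((-1 : ℤ) ^ (k - 1).toNat) (s (k - 1)).toNat *
        eps (s (k - 1)) (s k) * eps (t (k - 1)) (s (k - 1)) *
        jacobiSym (s (k - 1)) (t (k - 1)).toNat := by
  have hs_pos {n : ℤ} (hn : 0 ≤ n) : 0 < s n :=
    continuant_pos ha_pos (by rw [hs_neg]; norm_num) (hs_zero ▸ ha_pos 0 le_rfl) hs_rec hn
  have hsk_pos : 0 < s k := hs_pos (by omega)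
  have hsk1_pos : 0 < s (k - 1) := hs_pos (by omega)
  have htk1_pos : 0 < t (k - 1) :=
    continuant_pos ha_pos ht_neg.ge (ht_zero ▸ one_pos) ht_rec (by omega)
  set δ : ℤ := (-1) ^ (k - 1).toNat
  have hdet : s k * t (k - 1) - s (k - 1) * t k = δ := by
    rw [casoratian_continuant hs_rec ht_rec (by omega), hs_neg, ht_neg, hs_zero, ht_zero,
      show k.toNat = (k - 1).toNat + 1 by omega, pow_succ]
    ring
  have hδ_coprime (n : ℤ) : IsCoprime δ n := isCoprime_one_left.neg_left.pow_left
  have hodd : Odd (s k * t (k - 1)) := by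
    rw [show s k * t (k - 1) = δ + s (k - 1) * t k by linarith]
    exact (odd_neg_one.pow).add_even (htk_even.mul_left _)
  obtain ⟨hsk_odd, htk1_odd⟩ := Int.odd_mul.mp hodd
  rw [jacobiSym_toNat_eq_mul_of_mul_modEq hsk_pos.le (b := s (k - 1)) (c := -δ)
      (Int.modEq_iff_dvd.mpr ⟨-t (k - 1), by linear_combination hdet⟩) (hδ_coprime _).neg_left,
    jacobiSym_toNat_eq_eps_mul hsk1_pos hsk_pos hsk1_odd hsk_odd,
    jacobiSym_toNat_eq_mul_of_mul_modEq hsk1_pos.le (b := t (k - 1)) (c := δ)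
      (Int.modEq_iff_dvd.mpr ⟨-t k, by linear_combination -hdet⟩) (hδ_coprime _),
    jacobiSym_toNat_eq_eps_mul htk1_pos hsk1_pos htk1_odd hsk1_odd]
  ring
end

section
/- For every odd integer j ≥ 3: the continued fraction [0; (2^j − 2)/3, 1, 2] equals 3/2^j and the continued fraction [0; (7·2^j − 2)/3, 1, 2] equals 3/(7·2^j); the first nontrivial partial quotients are congruent, (2^j − 2)/3 ≡ (7·2^j − 2)/3 (mod 2^{j+1}); yet the Kronecker symbols differ: (3/2^j) = −1 while (3/(7·2^j)) = 1. Hence the Kronecker symbol of a convergent is not determined by the residue classes of the partial quotients modulo any fixed power of 2. -/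
theorem kron_two (s : ℤ) :
    kron s 2 = if s % 8 = 1 ∨ s % 8 = 7 then 1 else if s % 8 = 3 ∨ s % 8 = 5 then -1 else 0 := by
  simp [kron]

theorem kron_mul_two_pow (s : ℤ) {m : ℕ} (hm : Odd m) (j : ℕ) :
    kron s (m * 2 ^ j) = kron s 2 ^ j * jacobiSym s m := by
  have hval : padicValNat 2 (m * 2 ^ j) = j := by
    rw [padicValNat.mul hm.pos.ne' (by positivity), padicValNat.prime_pow,
      padicValNat.eq_zero_of_not_dvd hm.not_two_dvd_nat, zero_add]
  rw [kron, hval, Nat.mul_div_cancel _ (by positivity), kron_two]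

theorem three_dvd_two_pow_sub_two {j : ℕ} (hj : Odd j) : (3 : ℤ) ∣ 2 ^ j - 2 := by
  have h : (2 : ℤ) ^ j ≡ (-1) ^ j [ZMOD 3] := Int.ModEq.pow j (by decide)
  rw [hj.neg_one_pow] at h
  exact (h.trans (by decide : (-1 : ℤ) ≡ 2 [ZMOD 3])).symm.dvd

theorem zero_add_one_div_add_one_div_one_add_half {K : Type*} [Field K] [CharZero K] (a : K) :
    0 + 1 / (a + 1 / (1 + 1 / 2)) = 3 / (3 * a + 2) := by
  have h : a + 1 / (1 + 1 / 2) = (3 * a + 2) / 3 := by field_simp; ring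
  rw [zero_add, h, one_div_div]

/-- For odd `j ≥ 3`: with `A = (2^j - 2)/3` and `B = (7·2^j - 2)/3` (positive integers),
`[0; A, 1, 2] = 3/2^j` and `[0; B, 1, 2] = 3/(7·2^j)`, `A ≡ B (mod 2^(j+1))`, yet the
Kronecker symbols differ: `(3/2^j) = -1` while `(3/(7·2^j)) = 1`. -/
theorem kronecker_not_determined_by_partial_quotients
    (j : ℕ) (hj : 3 ≤ j) (hj_odd : Odd j) :
    ∃ A B : ℤ, 0 < A ∧ 0 < B ∧ 3 * A = 2 ^ j - 2 ∧ 3 * B = 7 * 2 ^ j - 2 ∧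
      A ≡ B [ZMOD 2 ^ (j + 1)] ∧
      (0 : ℚ) + 1 / ((A : ℚ) + 1 / (1 + 1 / 2)) = 3 / 2 ^ j ∧
      (0 : ℚ) + 1 / ((B : ℚ) + 1 / (1 + 1 / 2)) = 3 / (7 * 2 ^ j) ∧
      kron 3 (2 ^ j) = -1 ∧ kron 3 (7 * 2 ^ j) = 1 ∧
      kron 3 (2 ^ j) ≠ kron 3 (7 * 2 ^ j) := by
  obtain ⟨A, hA⟩ := three_dvd_two_pow_sub_two hj_odd
  have h8 : (8 : ℤ) ≤ 2 ^ j := by simpa using pow_le_pow_right₀ (by norm_num : (1 : ℤ) ≤ 2) hj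
  have hApos : 0 < A := by linarith
  have hpow : (-1 : ℤ) ^ j = -1 := hj_odd.neg_one_pow
  have hkron2 : kron 3 2 = -1 := by rw [kron_two]; decide
  have hkron1 : kron 3 (2 ^ j) = -1 := by
    simpa [hkron2, hpow] using kron_mul_two_pow 3 odd_one j
  have hkron7 : kron 3 (7 * 2 ^ j) = 1 := by
    rw [kron_mul_two_pow 3 (by decide) j, hkron2, hpow]
    norm_num
  have hA' : 3 * (A : ℚ) + 2 = 2 ^ j := by exact_mod_cast (by linarith : 3 * A + 2 = 2 ^ j)
  have hB' : 3 * ((A + 2 ^ (j + 1) : ℤ) : ℚ) + 2 = 7 * 2 ^ j := by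
    exact_mod_cast (by rw [pow_succ]; linarith : 3 * (A + 2 ^ (j + 1)) + 2 = 7 * 2 ^ j)
  refine ⟨A, A + 2 ^ (j + 1), hApos, add_pos hApos (by positivity), hA.symm,
    by rw [pow_succ]; linarith, Int.modEq_iff_dvd.2 ⟨1, by ring⟩, ?_, ?_, hkron1, hkron7,
    by rw [hkron1, hkron7]; decide⟩
  · rw [zero_add_one_div_add_one_div_one_add_half, hA']
  · rw [zero_add_one_div_add_one_div_one_add_half, hB']
end
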